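/- arXiv:2410.04228 — 13 statements merged into one kernel-verified Lean document; each statement's English description precedes it below -/
import Mathlib

section
/- If H is a positive semi-definite operator on a finite-dimensional real inner product space and C is positive semi-definite, then H C H ≤ Tr(H C) · H in the Loewner order. -/
/-!
With `S = √H`, the matrix `B = S C S` is positive semidefinite, so each of its eigenvalues is at
most their sum `Tr B`, i.e. `B ≤ Tr B • 1`. Conjugating by `S` preserves the Loewner order and turns
this into `H C H ≤ Tr B • H`, while `Tr B = Tr (S S C) = Tr (H C)`.
-/

namespace Matrix

open scoped MatrixOrder ComplexOrder

variable {n 𝕜 : Type*} [Fintype n] [RCLike 𝕜]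

theorem PosSemidef.le_trace_smul_one [DecidableEq n] {A : Matrix n n 𝕜} (hA : A.PosSemidef) :
    A ≤ A.trace • 1 := by
  have htrace : A.trace • (1 : Matrix n n 𝕜) = algebraMap ℝ _ (∑ i, hA.1.eigenvalues i) := by
    rw [hA.1.trace_eq_sum_eigenvalues, Algebra.algebraMap_eq_smul_one, ← RCLike.ofReal_sum,
      RCLike.real_smul_eq_coe_smul (K := 𝕜)]
  rw [htrace]
  refine le_algebraMap_of_spectrum_le fun x hx => ?_
  rw [hA.1.spectrum_real_eq_range_eigenvalues] at hx
  obtain ⟨i, rfl⟩ := hx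
  exact Finset.single_le_sum (fun j _ => hA.eigenvalues_nonneg j) (Finset.mem_univ i)

theorem PosSemidef.mul_mul_le_trace_mul_smul {A C : Matrix n n 𝕜} (hA : A.PosSemidef)
    (hC : C.PosSemidef) : A * C * A ≤ (A * C).trace • A := by
  classical
  set S := CFC.sqrt A
  have hSS : S * S = A := CFC.sqrt_mul_sqrt_self A hA.nonneg
  have hS : Sᴴ = S := (CFC.sqrt_nonneg A).isSelfAdjoint
  have hSCS : (S * C * S).PosSemidef := by
    simpa only [hS] using hC.conjTranspose_mul_mul_same S
  have hconj := star_left_conjugate_le_conjugate (R := Matrix n n 𝕜) hSCS.le_trace_smul_one S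
  rw [star_eq_conjTranspose, hS, trace_mul_cycle, hSS, mul_smul_comm, mul_one, smul_mul_assoc,
    hSS] at hconj
  calc A * C * A = S * (S * C * S) * S := by rw [← hSS]; simp only [mul_assoc]
    _ ≤ (A * C).trace • A := hconj

end Matrix

theorem stmt_0_general {n : Type*} [Fintype n]
    (H C : Matrix n n ℝ) (hH : H.PosSemidef) (hC : C.PosSemidef) :
    ((H * C).trace • H - H * C * H).PosSemidef :=
  hH.mul_mul_le_trace_mul_smul hC

/-- If `H` is positive semi-definite and `C` is positive semi-definite, then
`H C H ≤ Tr(H C) • H` in the Loewner order. -/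
theorem stmt_0 {n : Type*} [Fintype n] [DecidableEq n]
    (H C : Matrix n n ℝ) (hH : H.PosSemidef) (hC : C.PosSemidef) :
    ((H * C).trace • H - H * C * H).PosSemidef :=
  stmt_0_general H C hH hC
end

section
/- For parameters τ₁ ≥ 0 and τ₂ ≤ τ₁, and H positive semi-definite, the map Σ(C) = τ₁ Tr(H C) H − τ₂ H C H sends positive semi-definite matrices to positive semi-definite matrices, and is monotone: C ≥ C' implies Σ(C) ≥ Σ(C'). -/
/-!
`Σ` is linear, so monotonicity is positivity applied to `C - C'`. Positivity follows from
`0 ≤ H C H ≤ Tr(H C) • H`: for `τ₂ ≥ 0` write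
`Σ(C) = (τ₁ - τ₂) • Tr(H C) • H + τ₂ • (Tr(H C) • H - H C H)`, and for `τ₂ ≤ 0` both terms of
`Σ(C)` are already nonnegative. Conjugating by `√H`, the bound `H C H ≤ Tr(H C) • H` becomes
`M ≤ Tr(M) • 1` for `M = √H C √H ≥ 0`, which holds because `M` is a sum of rank-one matrices
`v vᵀ ≤ |v|² • 1` (Cauchy–Schwarz).
-/

open Matrix
open scoped MatrixOrder

lemma smul_sub_smul_nonneg {M : Type*} [AddCommGroup M] [PartialOrder M] [IsOrderedAddMonoid M]
    [Module ℝ M] [PosSMulMono ℝ M] {X Y : M} (hY : 0 ≤ Y) (hYX : Y ≤ X) {a b : ℝ}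
    (ha : 0 ≤ a) (hba : b ≤ a) : 0 ≤ a • X - b • Y := by
  have hX : 0 ≤ X := hY.trans hYX
  rcases le_total b 0 with hb | hb
  · rw [sub_eq_add_neg, ← neg_smul]
    exact add_nonneg (smul_nonneg ha hX) (smul_nonneg (neg_nonneg.2 hb) hY)
  · have hsplit : a • X - b • Y = (a - b) • X + b • (X - Y) := by
      rw [sub_smul, smul_sub]
      abel
    rw [hsplit]
    exact add_nonneg (smul_nonneg (sub_nonneg.2 hba) hX) (smul_nonneg hb (sub_nonneg.2 hYX))

namespace Matrix

variable {n : Type*} [Fintype n] [DecidableEq n]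

lemma vecMulVec_self_le_dotProduct_self_smul_one (v : n → ℝ) :
    vecMulVec v v ≤ (v ⬝ᵥ v) • (1 : Matrix n n ℝ) := by
  rw [le_iff]
  refine .of_dotProduct_mulVec_nonneg ?_ fun x => ?_
  · refine (isHermitian_one.smul (IsSelfAdjoint.all _)).sub ?_
    simpa using (posSemidef_vecMulVec_self_star v).isHermitian
  · simp only [star_trivial, sub_mulVec, smul_mulVec, one_mulVec, vecMulVec_mulVec,
      dotProduct_sub, dotProduct_smul, smul_eq_mul, MulOpposite.smul_eq_mul_unop,
      MulOpposite.unop_op]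
    rw [dotProduct_comm x v, sub_nonneg, ← sq]
    simpa only [dotProduct, sq] using Finset.sum_mul_sq_le_sq_mul_sq Finset.univ v x

lemma PosSemidef.le_trace_smul_one_s2 {M : Matrix n n ℝ} (hM : M.PosSemidef) :
    M ≤ M.trace • 1 := by
  obtain ⟨m, v, rfl⟩ := posSemidef_iff_eq_sum_vecMulVec.mp hM
  simp only [star_trivial, trace_sum, trace_vecMulVec, Finset.sum_smul]
  exact Finset.sum_le_sum fun i _ => vecMulVec_self_le_dotProduct_self_smul_one (v i)

lemma PosSemidef.mul_mul_self_le_trace_mul_smul {H C : Matrix n n ℝ} (hH : H.PosSemidef)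
    (hC : C.PosSemidef) : H * C * H ≤ (H * C).trace • H := by
  set S := CFC.sqrt H
  have hS : 0 ≤ S := CFC.sqrt_nonneg H
  have hSS : S * S = H := CFC.sqrt_mul_sqrt_self H hH.nonneg
  have hSCS : (S * C * S).PosSemidef := (conjugate_nonneg_of_nonneg hC.nonneg hS).posSemidef
  have htr : (S * C * S).trace = (H * C).trace := by
    rw [trace_mul_comm, ← mul_assoc, hSS]
  calc H * C * H = S * (S * C * S) * S := by simp only [← hSS, mul_assoc]
    _ ≤ S * ((S * C * S).trace • 1) * S :=
      conjugate_le_conjugate_of_nonneg hSCS.le_trace_smul_one_s2 hS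
    _ = (H * C).trace • H := by rw [htr, mul_smul_comm, mul_one, smul_mul_assoc, hSS]

noncomputable def sigmaMap (τ₁ τ₂ : ℝ) (H : Matrix n n ℝ) : Matrix n n ℝ →ₗ[ℝ] Matrix n n ℝ where
  toFun C := τ₁ • (H * C).trace • H - τ₂ • (H * C * H)
  map_add' C C' := by
    simp only [mul_add, add_mul, trace_add, add_smul, smul_add]
    abel
  map_smul' c C := by
    simp only [mul_smul_comm, smul_mul_assoc, trace_smul, smul_eq_mul, RingHom.id_apply, smul_sub,
      mul_smul, smul_comm c]

variable {H : Matrix n n ℝ} {τ₁ τ₂ : ℝ}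

lemma sigmaMap_nonneg (hH : H.PosSemidef) (h1 : 0 ≤ τ₁) (h2 : τ₂ ≤ τ₁) {C : Matrix n n ℝ}
    (hC : 0 ≤ C) : 0 ≤ sigmaMap τ₁ τ₂ H C :=
  smul_sub_smul_nonneg (conjugate_nonneg_of_nonneg hC hH.nonneg)
    (hH.mul_mul_self_le_trace_mul_smul hC.posSemidef) h1 h2

lemma sigmaMap_monotone (hH : H.PosSemidef) (h1 : 0 ≤ τ₁) (h2 : τ₂ ≤ τ₁) :
    Monotone (sigmaMap τ₁ τ₂ H) := fun C C' hCC' => by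
  rw [← sub_nonneg, ← map_sub]
  exact sigmaMap_nonneg hH h1 h2 (sub_nonneg.2 hCC')

end Matrix

/-- For `τ₁ ≥ 0`, `τ₂ ≤ τ₁`, `H` PSD, the map `Σ(C) = τ₁ Tr(HC) H − τ₂ H C H`
sends PSD matrices to PSD matrices and is monotone in the Loewner order. -/
theorem stmt_2 {n : Type*} [Fintype n] [DecidableEq n]
    (H : Matrix n n ℝ) (hH : H.PosSemidef) (τ₁ τ₂ : ℝ) (h1 : 0 ≤ τ₁) (h2 : τ₂ ≤ τ₁) :
    (∀ C : Matrix n n ℝ, C.PosSemidef →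
      (τ₁ • (H * C).trace • H - τ₂ • (H * C * H)).PosSemidef) ∧
    (∀ C C' : Matrix n n ℝ, (C - C').PosSemidef →
      ((τ₁ • (H * C).trace • H - τ₂ • (H * C * H))
        - (τ₁ • (H * C').trace • H - τ₂ • (H * C' * H))).PosSemidef) :=
  ⟨fun _ hC => nonneg_iff_posSemidef.mp (sigmaMap_nonneg hH h1 h2 hC.nonneg),
    fun _ _ hCC' => le_iff.mp (sigmaMap_monotone hH h1 h2 (le_iff.mpr hCC'))⟩
end

section
/- For any probability distribution ρ on a finite-dimensional real inner product space with H = E[x ⊗ x], the map Σ_ρ(C) = E[⟨x, C x⟩ x ⊗ x] − H C H sends positive semi-definite C to positive semi-definite matrices. -/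
/-!
Write `C = ∑ₖ bₖ bₖᵀ`, so that `⟨x, C x⟩ = ∑ₖ ⟨bₖ, x⟩²`. For a test vector `v`,
`vᵀ E[⟨x, C x⟩ x xᵀ] v = ∑ₖ E[(⟨bₖ, x⟩⟨v, x⟩)²]` while, `H` being symmetric,
`vᵀ H C H v = ⟨H v, C H v⟩ = ∑ₖ (E[⟨bₖ, x⟩⟨v, x⟩])²`. Termwise the inequality is `(E g)² ≤ E[g²]`,
i.e. the nonnegativity of a variance.
-/

open MeasureTheory Matrix

lemma sq_integral_le_integral_sq {α : Type*} [MeasurableSpace α] {μ : Measure α}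
    [IsProbabilityMeasure μ] {g : α → ℝ} (hm : AEStronglyMeasurable g μ)
    (hg2 : Integrable (fun x => g x ^ 2) μ) :
    (∫ x, g x ∂μ) ^ 2 ≤ ∫ x, g x ^ 2 ∂μ := by
  have h := ProbabilityTheory.variance_nonneg g μ
  rw [ProbabilityTheory.variance_eq_sub ((memLp_two_iff_integrable_sq hm).2 hg2)] at h
  simpa using h

lemma dotProduct_sum_vecMulVec_mulVec {n ι : Type*} [Fintype n] [Fintype ι]
    (b : ι → n → ℝ) (y z : n → ℝ) :
    y ⬝ᵥ (∑ k, vecMulVec (b k) (b k)) *ᵥ z = ∑ k, (b k ⬝ᵥ y) * (b k ⬝ᵥ z) := by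
  simp only [sum_mulVec, vecMulVec_mulVec, dotProduct_sum, dotProduct_smul]
  refine Finset.sum_congr rfl fun k _ => ?_
  simp [dotProduct_comm y]

lemma Matrix.IsHermitian.dotProduct_mul_mul_mulVec {n : Type*} [Fintype n] {H : Matrix n n ℝ}
    (hH : H.IsHermitian) (C : Matrix n n ℝ) (v : n → ℝ) :
    v ⬝ᵥ (H * C * H) *ᵥ v = H *ᵥ v ⬝ᵥ C *ᵥ (H *ᵥ v) := by
  rw [← mulVec_mulVec, ← mulVec_mulVec, dotProduct_mulVec, ← mulVec_transpose,
    ← conjTranspose_eq_transpose_of_trivial, hH.eq]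

section WeightedSecondMoment

variable {n : Type*}

noncomputable def weightedSecondMoment (ρ : Measure (n → ℝ)) (c : (n → ℝ) → ℝ) :
    Matrix n n ℝ :=
  of fun i j => ∫ x, c x * (x i * x j) ∂ρ

variable {ρ : Measure (n → ℝ)} {c : (n → ℝ) → ℝ}

lemma weightedSecondMoment_one :
    weightedSecondMoment ρ 1 = of fun i j => ∫ x, x i * x j ∂ρ := by
  simp [weightedSecondMoment]

lemma isHermitian_weightedSecondMoment : (weightedSecondMoment ρ c).IsHermitian := by
  ext i j
  simp only [weightedSecondMoment, conjTranspose_apply, of_apply, star_trivial]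
  congr 1 with x
  ring

variable [Fintype n]

lemma mul_dotProduct_mul_dotProduct (a : ℝ) (u w x : n → ℝ) :
    a * ((u ⬝ᵥ x) * (w ⬝ᵥ x)) = ∑ i, ∑ j, u i * w j * (a * (x i * x j)) := by
  rw [dotProduct, dotProduct, Finset.sum_mul_sum, Finset.mul_sum]
  exact Finset.sum_congr rfl fun i _ => by
    rw [Finset.mul_sum]
    exact Finset.sum_congr rfl fun j _ => by ring

variable (hc : ∀ i j, Integrable (fun x => c x * (x i * x j)) ρ)
include hc

lemma integrable_mul_dotProduct_mul_dotProduct (u w : n → ℝ) :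
    Integrable (fun x => c x * ((u ⬝ᵥ x) * (w ⬝ᵥ x))) ρ := by
  simp only [mul_dotProduct_mul_dotProduct]
  exact integrable_finsetSum _ fun i _ => integrable_finsetSum _ fun j _ => (hc i j).const_mul _

lemma dotProduct_weightedSecondMoment_mulVec (u w : n → ℝ) :
    u ⬝ᵥ weightedSecondMoment ρ c *ᵥ w = ∫ x, c x * ((u ⬝ᵥ x) * (w ⬝ᵥ x)) ∂ρ := by
  simp only [mul_dotProduct_mul_dotProduct]
  rw [integral_finsetSum _ fun i _ => integrable_finsetSum _ fun j _ => (hc i j).const_mul _]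
  simp only [integral_finsetSum _ fun j _ => (hc _ j).const_mul _, integral_const_mul]
  simp only [weightedSecondMoment, dotProduct, mulVec, of_apply, Finset.mul_sum]
  exact Finset.sum_congr rfl fun i _ => Finset.sum_congr rfl fun j _ => by ring

end WeightedSecondMoment

lemma dotProduct_mul_mul_mulVec_le_weightedSecondMoment {n ι : Type*} [Fintype n] [Fintype ι]
    {ρ : Measure (n → ℝ)} [IsProbabilityMeasure ρ] {C : Matrix n n ℝ} (b : ι → n → ℝ)
    (hC : C = ∑ k, vecMulVec (b k) (b k))
    (h2 : ∀ i j, Integrable (fun x : n → ℝ => x i * x j) ρ)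
    (h4 : ∀ i j, Integrable (fun x : n → ℝ => x ⬝ᵥ C *ᵥ x * (x i * x j)) ρ) (v : n → ℝ) :
    v ⬝ᵥ (weightedSecondMoment ρ 1 * C * weightedSecondMoment ρ 1) *ᵥ v
      ≤ v ⬝ᵥ weightedSecondMoment ρ (fun x => x ⬝ᵥ C *ᵥ x) *ᵥ v := by
  have h1 : ∀ i j, Integrable (fun x => (1 : (n → ℝ) → ℝ) x * (x i * x j)) ρ := by
    simpa using h2
  have hq : ∀ x, x ⬝ᵥ C *ᵥ x * ((v ⬝ᵥ x) * (v ⬝ᵥ x)) = ∑ k, ((b k ⬝ᵥ x) * (v ⬝ᵥ x)) ^ 2 :=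
    fun x => by
      rw [hC, dotProduct_sum_vecMulVec_mulVec, Finset.sum_mul]
      exact Finset.sum_congr rfl fun k _ => by ring
  have hsq : ∀ k, Integrable (fun x => ((b k ⬝ᵥ x) * (v ⬝ᵥ x)) ^ 2) ρ := fun k =>
    (integrable_mul_dotProduct_mul_dotProduct h4 v v).mono'
      (by fun_prop : Continuous fun x => ((b k ⬝ᵥ x) * (v ⬝ᵥ x)) ^ 2).aestronglyMeasurable
      (ae_of_all _ fun x => by
        rw [Real.norm_of_nonneg (sq_nonneg _), hq]
        exact Finset.single_le_sum (f := fun k => ((b k ⬝ᵥ x) * (v ⬝ᵥ x)) ^ 2)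
          (fun k _ => sq_nonneg _) (Finset.mem_univ k))
  calc v ⬝ᵥ (weightedSecondMoment ρ 1 * C * weightedSecondMoment ρ 1) *ᵥ v
      = ∑ k, (b k ⬝ᵥ weightedSecondMoment ρ 1 *ᵥ v) ^ 2 := by
        rw [IsHermitian.dotProduct_mul_mul_mulVec isHermitian_weightedSecondMoment, hC,
          dotProduct_sum_vecMulVec_mulVec]
        simp only [sq]
    _ = ∑ k, (∫ x, (b k ⬝ᵥ x) * (v ⬝ᵥ x) ∂ρ) ^ 2 := by
        simp [dotProduct_weightedSecondMoment_mulVec h1]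
    _ ≤ ∑ k, ∫ x, ((b k ⬝ᵥ x) * (v ⬝ᵥ x)) ^ 2 ∂ρ := by
        gcongr with k
        exact sq_integral_le_integral_sq (by fun_prop : Continuous _).aestronglyMeasurable (hsq k)
    _ = ∫ x, x ⬝ᵥ C *ᵥ x * ((v ⬝ᵥ x) * (v ⬝ᵥ x)) ∂ρ := by
        simp only [hq]
        exact (integral_finsetSum _ fun k _ => hsq k).symm
    _ = v ⬝ᵥ weightedSecondMoment ρ (fun x => x ⬝ᵥ C *ᵥ x) *ᵥ v :=
        (dotProduct_weightedSecondMoment_mulVec h4 v v).symm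

theorem stmt_3_general {n : Type*} [Fintype n]
    (ρ : Measure (n → ℝ)) [IsProbabilityMeasure ρ]
    (C : Matrix n n ℝ) (hC : C.PosSemidef)
    (h2 : ∀ i j : n, Integrable (fun x : n → ℝ => x i * x j) ρ)
    (h4 : ∀ i j : n, Integrable (fun x : n → ℝ => (dotProduct x (C.mulVec x)) * (x i * x j)) ρ) :
    ((Matrix.of fun i j : n => ∫ x, (dotProduct x (C.mulVec x)) * (x i * x j) ∂ρ)
      - (Matrix.of fun i j : n => ∫ x, x i * x j ∂ρ) * C
        * (Matrix.of fun i j : n => ∫ x, x i * x j ∂ρ)).PosSemidef := by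
  obtain ⟨m, b, hCb⟩ := posSemidef_iff_eq_sum_vecMulVec.mp hC
  simp only [star_trivial] at hCb
  rw [← weightedSecondMoment_one]
  have hHCH : (weightedSecondMoment ρ 1 * C * weightedSecondMoment ρ 1).IsHermitian := by
    simpa only [isHermitian_weightedSecondMoment.eq] using
      isHermitian_conjTranspose_mul_mul (weightedSecondMoment ρ 1) hC.isHermitian
  refine .of_dotProduct_mulVec_nonneg (isHermitian_weightedSecondMoment.sub hHCH) fun v => ?_
  rw [star_trivial, sub_mulVec, dotProduct_sub, sub_nonneg]
  exact dotProduct_mul_mul_mulVec_le_weightedSecondMoment b hCb h2 h4 v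

/-- For a probability distribution `ρ` with second moment matrix `H = E[x ⊗ x]`
(entrywise) and finite fourth moments, the map
`Σ_ρ(C) = E[⟨x, C x⟩ x ⊗ x] − H C H` sends PSD matrices to PSD matrices. -/
theorem stmt_3 {n : Type*} [Fintype n] [DecidableEq n]
    (ρ : Measure (n → ℝ)) [IsProbabilityMeasure ρ]
    (C : Matrix n n ℝ) (hC : C.PosSemidef)
    (h2 : ∀ i j : n, Integrable (fun x : n → ℝ => x i * x j) ρ)
    (h4 : ∀ i j : n, Integrable (fun x : n → ℝ => (dotProduct x (C.mulVec x)) * (x i * x j)) ρ) :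
    ((Matrix.of fun i j : n => ∫ x, (dotProduct x (C.mulVec x)) * (x i * x j) ∂ρ)
      - (Matrix.of fun i j : n => ∫ x, x i * x j ∂ρ) * C
        * (Matrix.of fun i j : n => ∫ x, x i * x j ∂ρ)).PosSemidef :=
  stmt_3_general ρ C hC h2 h4
end

section
/- Let S_λ be the (M+1)×(M+1) matrix S_λ = [[1, bᵀ],[0, D]] + λ [−α; c] (1, aᵀ), where α ∈ ℝ, a,b,c ∈ ℝ^M, D ∈ ℝ^{M×M}. Then its characteristic polynomial satisfies det(x − S_λ) = (x−1) det(x−D) − λ det [[aᵀc − α, aᵀ(1−D) − bᵀ],[c, x − D]]. In particular det(x − S_λ) = x^{M+1} − Σ_{m=0}^M p_m x^m − λ Σ_{m=0}^M q_m x^m for some coefficients with Σ p_m = 1. -/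
/-!
Conjugating `x - S_λ` by the unimodular matrices `[[1, aᵀ], [0, 1]]` and `[[1, -aᵀ], [0, 1]]`
turns the rank-one row `(1, aᵀ)` into `(1, 0)`, so `λ` only enters the first column and
multilinearity of the determinant in that column splits off `(x - 1) det (x - D)` and
`-λ det [[aᵀc - α, aᵀ(1 - D) - bᵀ], [c, x - D]]`.
Hence `det (x - S_λ) = P(x) - λ Q(x)` with `P = (X - 1) χ_D` monic of degree `M + 1` and
vanishing at `1`, and `Q = P - χ_{S_1}` of degree at most `M` as a difference of two monic
polynomials of degree `M + 1`; `P(1) = 0` is the statement `∑ p_m = 1`.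
-/

open Matrix Polynomial

namespace Matrix

variable {n R : Type*} [Fintype n] [DecidableEq n] [CommRing R]

theorem det_add_smul_updateCol_zero (X : Matrix n n R) (j : n) (w : n → R) (t : R) :
    det (X + t • updateCol 0 j w) = det X + t * det (updateCol X j w) := by
  have hX : X + t • updateCol 0 j w = updateCol X j ((fun i => X i j) + t • w) := by
    ext i k
    rcases eq_or_ne k j with rfl | hk <;> simp [*]
  rw [hX, det_updateCol_add, det_updateCol_smul, updateCol_eq_self]

theorem eval_charpoly_eq_det_smul_one_sub (S : Matrix n n R) (x : R) :
    S.charpoly.eval x = det (x • 1 - S) := by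
  rw [eval_charpoly, scalar_apply, smul_one_eq_diagonal]

theorem isMonicOfDegree_charpoly [Nontrivial R] (S : Matrix n n R) :
    IsMonicOfDegree S.charpoly (Fintype.card n) :=
  ⟨S.charpoly_natDegree_eq_dim, S.charpoly_monic⟩

end Matrix

namespace Polynomial

variable {R : Type*} [CommRing R]

theorem eval_eq_sum_fin_of_natDegree_lt {q : R[X]} {n : ℕ} (hq : q.natDegree < n) (x : R) :
    q.eval x = ∑ m : Fin n, q.coeff m * x ^ (m : ℕ) := by
  rw [eval_eq_sum_range' hq, Fin.sum_univ_eq_sum_range (fun m => q.coeff m * x ^ m)]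

theorem IsMonicOfDegree.exists_eval_eq_pow_sub_sum {p : R[X]} {n : ℕ}
    (hp : IsMonicOfDegree p n) (hp1 : p.eval 1 = 0) :
    ∃ c : Fin n → R, ∑ m, c m = 1 ∧
      ∀ x, p.eval x = x ^ n - ∑ m : Fin n, c m * x ^ (m : ℕ) := by
  have hsum (x : R) : p.eval x = x ^ n + ∑ m : Fin n, p.coeff m * x ^ (m : ℕ) := by
    conv_lhs => rw [hp.monic.as_sum, hp.natDegree_eq]
    simp [eval_finsetSum, Fin.sum_univ_eq_sum_range (fun m => p.coeff m * x ^ m)]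
  refine ⟨fun m => -p.coeff m, ?_, fun x => by simp [hsum x]⟩
  have := hsum 1
  simp only [hp1, one_pow, mul_one] at this
  simp only [Finset.sum_neg_distrib]
  linear_combination this

end Polynomial

section StepMatrix

variable {m R : Type*} [Fintype m] [DecidableEq m] [CommRing R]
  (α : R) (a b c : m → R) (D : Matrix m m R)

def stepMatrix (lam : R) : Matrix (Unit ⊕ m) (Unit ⊕ m) R :=
  fromBlocks (of fun _ _ => 1) (of fun _ j => b j) 0 D
    + lam • vecMulVec (Sum.elim (fun _ => -α) c) (Sum.elim (fun _ => 1) a)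

def stepBorderedMatrix (x : R) : Matrix (Unit ⊕ m) (Unit ⊕ m) R :=
  fromBlocks (of fun _ _ => a ⬝ᵥ c - α) (of fun _ j => (a ᵥ* (1 - D)) j - b j)
    (of fun i _ => c i) (x • 1 - D)

omit [Fintype m] in
theorem smul_one_sub_stepMatrix (lam x : R) :
    x • 1 - stepMatrix α a b c D lam =
      fromBlocks (of fun _ _ => x - 1 + lam * α) (of fun _ j => -b j + lam * α * a j)
        (of fun i _ => -(lam * c i)) (x • 1 - D - lam • vecMulVec c a) := by
  ext (i | i) (j | j) <;> simp [stepMatrix, vecMulVec_apply, one_apply] <;> ring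

theorem smul_one_sub_stepMatrix_conj (lam x : R) :
    fromBlocks 1 (of fun _ j => a j) 0 1 * (x • 1 - stepMatrix α a b c D lam)
        * fromBlocks 1 (of fun _ j => -a j) 0 1 =
      fromBlocks (of fun _ _ => x - 1) (of fun _ j => (a ᵥ* (1 - D)) j - b j) 0 (x • 1 - D)
        + (-lam) • updateCol 0 (Sum.inl ()) (Sum.elim (fun _ => a ⬝ᵥ c - α) c) := by
  rw [smul_one_sub_stepMatrix]
  simp only [fromBlocks_multiply, Matrix.one_mul, Matrix.mul_one, Matrix.zero_mul,
    Matrix.mul_zero, add_zero, zero_add]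
  ext (i | i) (j | j)
  · simp [mul_apply, dotProduct]
    ring_nf
    simp only [Finset.mul_sum]
    ring_nf
  · simp [mul_apply, one_apply, vecMulVec_apply, vecMul, dotProduct, mul_sub,
      Finset.sum_sub_distrib]
    ring_nf
    simp only [Finset.sum_mul]
    simp only [mul_comm, mul_left_comm]
    ring
  · simp
  · simp [mul_apply, vecMulVec_apply]
    ring

theorem updateCol_inl_eq_stepBorderedMatrix (x : R) :
    updateCol
        (fromBlocks (of fun _ _ => x - 1) (of fun _ j => (a ᵥ* (1 - D)) j - b j) 0 (x • 1 - D))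
        (Sum.inl ()) (Sum.elim (fun _ => a ⬝ᵥ c - α) c) =
      stepBorderedMatrix α a b c D x := by
  ext (i | i) (j | j) <;> simp [stepBorderedMatrix]

theorem det_smul_one_sub_stepMatrix (lam x : R) :
    det (x • 1 - stepMatrix α a b c D lam) =
      (x - 1) * det (x • 1 - D) - lam * det (stepBorderedMatrix α a b c D x) := by
  have hdet_one (v : m → R) :
      det (fromBlocks (1 : Matrix Unit Unit R) (of fun _ j => v j) 0 1) = 1 := by
    simp
  calc det (x • 1 - stepMatrix α a b c D lam)
      = det (fromBlocks 1 (of fun _ j => a j) 0 1 * (x • 1 - stepMatrix α a b c D lam)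
          * fromBlocks 1 (of fun _ j => -a j) 0 1) := by
        rw [det_mul, det_mul, hdet_one, hdet_one, one_mul, mul_one]
    _ = _ := by
        rw [smul_one_sub_stepMatrix_conj, det_add_smul_updateCol_zero,
          updateCol_inl_eq_stepBorderedMatrix, det_fromBlocks_zero₂₁, det_unique, of_apply,
          neg_mul, ← sub_eq_add_neg]

theorem exists_det_smul_one_sub_stepMatrix_eq_eval [Nontrivial R] :
    ∃ P Q : R[X], IsMonicOfDegree P (Fintype.card m + 1) ∧ P.eval 1 = 0 ∧
      Q.natDegree < Fintype.card m + 1 ∧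
      ∀ x lam, det (x • 1 - stepMatrix α a b c D lam) = P.eval x - lam * Q.eval x := by
  set P : R[X] := (X - C 1) * D.charpoly
  have hP : IsMonicOfDegree P (Fintype.card m + 1) :=
    add_comm 1 (Fintype.card m) ▸ (isMonicOfDegree_X_sub_one 1).mul (isMonicOfDegree_charpoly D)
  have hS : IsMonicOfDegree (stepMatrix α a b c D 1).charpoly (Fintype.card m + 1) := by
    simpa [add_comm] using isMonicOfDegree_charpoly (stepMatrix α a b c D 1)
  refine ⟨P, P - (stepMatrix α a b c D 1).charpoly, hP, by simp [P],
    hP.natDegree_sub_lt (by omega) hS, fun x lam => ?_⟩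
  have hP_eval : P.eval x = (x - 1) * det (x • 1 - D) := by
    simp [P, eval_charpoly_eq_det_smul_one_sub]
  rw [eval_sub, hP_eval, eval_charpoly_eq_det_smul_one_sub, det_smul_one_sub_stepMatrix,
    det_smul_one_sub_stepMatrix]
  ring

end StepMatrix

open Matrix in
/-- Characteristic polynomial of the memory-M step matrix
`S_λ = [[1, bᵀ],[0, D]] + λ [−α; c](1, aᵀ)`:
`det(x − S_λ) = (x−1) det(x−D) − λ det [[aᵀc − α, aᵀ(1−D) − bᵀ],[c, x − D]]`,
and hence `det(x − S_λ) = x^{M+1} − Σ p_m x^m − λ Σ q_m x^m` with `Σ p_m = 1`. -/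
theorem stmt_4 (M : ℕ) (α : ℝ) (a b c : Fin M → ℝ) (D : Matrix (Fin M) (Fin M) ℝ) :
    (∀ x lam : ℝ,
      Matrix.det (x • (1 : Matrix (Unit ⊕ Fin M) (Unit ⊕ Fin M) ℝ)
          - (Matrix.fromBlocks (Matrix.of fun _ _ => (1 : ℝ)) (Matrix.of fun _ j => b j)
              (0 : Matrix (Fin M) Unit ℝ) D
            + lam • Matrix.vecMulVec (Sum.elim (fun _ => -α) c) (Sum.elim (fun _ => (1 : ℝ)) a)))
        = (x - 1) * Matrix.det (x • (1 : Matrix (Fin M) (Fin M) ℝ) - D)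
          - lam * Matrix.det (Matrix.fromBlocks
              (Matrix.of fun (_ : Unit) (_ : Unit) => dotProduct a c - α)
              (Matrix.of fun _ j => Matrix.vecMul a ((1 : Matrix (Fin M) (Fin M) ℝ) - D) j - b j)
              (Matrix.of fun (i : Fin M) (_ : Unit) => c i)
              (x • (1 : Matrix (Fin M) (Fin M) ℝ) - D))) ∧
    (∃ p q : Fin (M + 1) → ℝ, (∑ m, p m = 1) ∧
      ∀ x lam : ℝ,
        Matrix.det (x • (1 : Matrix (Unit ⊕ Fin M) (Unit ⊕ Fin M) ℝ)
            - (Matrix.fromBlocks (Matrix.of fun _ _ => (1 : ℝ)) (Matrix.of fun _ j => b j)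
                (0 : Matrix (Fin M) Unit ℝ) D
              + lam • Matrix.vecMulVec (Sum.elim (fun _ => -α) c) (Sum.elim (fun _ => (1 : ℝ)) a)))
          = x ^ (M + 1) - (∑ m : Fin (M + 1), p m * x ^ (m : ℕ))
            - lam * ∑ m : Fin (M + 1), q m * x ^ (m : ℕ)) := by
  refine ⟨fun x lam => det_smul_one_sub_stepMatrix α a b c D lam x, ?_⟩
  obtain ⟨P, Q, hP, hP1, hQ, hdet⟩ := exists_det_smul_one_sub_stepMatrix_eq_eval α a b c D
  rw [Fintype.card_fin] at hP hQ
  obtain ⟨p, hp_sum, hp⟩ := hP.exists_eval_eq_pow_sub_sum hP1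
  refine ⟨p, fun m => Q.coeff m, hp_sum, fun x lam => ?_⟩
  rw [← hp, ← eval_eq_sum_fin_of_natDegree_lt hQ]
  exact hdet x lam
end

section
/- Let S_λ be as in the memory-M stationary dynamics, and suppose the quadratic loss has Hessian H with (w_t, u_t) evolving by (Δw_{t+1}; u_{t+1}) = S_H (Δw_t; u_t) blockwise. Then with p_m, q_m defined by the characteristic polynomial expansion x^{M+1} − Σ p_m x^m − λ Σ q_m x^m = det(x − S_λ), any trajectory satisfies the multistep recurrence w_{t+M+1} = Σ_{m=0}^M p_m w_{t+m} + Σ_{m=0}^M q_m H (w_{t+m} − w_*), and Σ_{m=0}^M p_m = 1. -/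
open Polynomial Matrix in
private lemma stmt5_map_eval_charmatrix {κ : Type*} [Fintype κ] [DecidableEq κ]
    (A : Matrix κ κ ℝ) (x : ℝ) :
    (Matrix.charmatrix A).map (Polynomial.evalRingHom x) = x • (1 : Matrix κ κ ℝ) - A := by
  ext i j
  by_cases h : i = j <;>
    simp [h, Matrix.charmatrix_apply_eq, Matrix.charmatrix_apply_ne, Matrix.one_apply_ne]

open Polynomial Matrix in
private lemma stmt5_eval_charpoly {κ : Type*} [Fintype κ] [DecidableEq κ]
    (A : Matrix κ κ ℝ) (x : ℝ) :
    (Matrix.charpoly A).eval x = Matrix.det (x • (1 : Matrix κ κ ℝ) - A) := by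
  have := RingHom.map_det (Polynomial.evalRingHom x) (Matrix.charmatrix A)
  rw [Matrix.charpoly, ← stmt5_map_eval_charmatrix A x]
  exact this

open Polynomial Matrix in
private lemma stmt5_charpoly_real {κ : Type*} [Fintype κ] [DecidableEq κ]
    {M : ℕ} (S0 V : Matrix κ κ ℝ) (p q : Fin (M + 1) → ℝ)
    (hchar : ∀ x lam : ℝ,
      Matrix.det (x • (1 : Matrix κ κ ℝ) - (S0 + lam • V))
        = x ^ (M + 1) - (∑ m : Fin (M + 1), p m * x ^ (m : ℕ))
          - lam * ∑ m : Fin (M + 1), q m * x ^ (m : ℕ)) (lam : ℝ) :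
    Matrix.charpoly (S0 + lam • V)
      = X ^ (M + 1) - (∑ m : Fin (M + 1), C (p m) * X ^ (m : ℕ))
        - C lam * ∑ m : Fin (M + 1), C (q m) * X ^ (m : ℕ) := by
  apply Polynomial.funext
  intro x
  rw [stmt5_eval_charpoly, hchar x lam]
  simp [Polynomial.eval_finset_sum]

open Polynomial Matrix in
private lemma stmt5_charpoly_P {κ : Type*} [Fintype κ] [DecidableEq κ]
    {M : ℕ} (S0 V : Matrix κ κ ℝ) (p q : Fin (M + 1) → ℝ)
    (hchar : ∀ x lam : ℝ,
      Matrix.det (x • (1 : Matrix κ κ ℝ) - (S0 + lam • V))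
        = x ^ (M + 1) - (∑ m : Fin (M + 1), p m * x ^ (m : ℕ))
          - lam * ∑ m : Fin (M + 1), q m * x ^ (m : ℕ)) :
    Matrix.charpoly (S0.map (C : ℝ →+* ℝ[X]) + (X : ℝ[X]) • V.map (C : ℝ →+* ℝ[X]))
      = X ^ (M + 1) - (∑ m : Fin (M + 1), C (C (p m)) * X ^ (m : ℕ))
        - C (X : ℝ[X]) * ∑ m : Fin (M + 1), C (C (q m)) * X ^ (m : ℕ) := by
  apply Polynomial.ext
  intro k
  apply Polynomial.funext
  intro lam
  have h1 : ∀ (f : (ℝ[X])[X]), (f.coeff k).eval lam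
      = (f.map (Polynomial.evalRingHom lam)).coeff k := by
    intro f; rw [Polynomial.coeff_map]; rfl
  rw [h1, h1]
  congr 1
  rw [← Matrix.charpoly_map _ (Polynomial.evalRingHom lam)]
  have h2 : (S0.map (C : ℝ →+* ℝ[X]) + (X : ℝ[X]) • V.map (C : ℝ →+* ℝ[X])).map
      (Polynomial.evalRingHom lam) = S0 + lam • V := by
    ext i j; simp [smul_eq_mul]; ring
  rw [h2, stmt5_charpoly_real S0 V p q hchar lam]
  simp only [Polynomial.map_sub, Polynomial.map_pow, Polynomial.map_X, Polynomial.map_sum,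
    Polynomial.map_mul, Polynomial.map_C, Polynomial.coe_evalRingHom, Polynomial.eval_C,
    Polynomial.eval_X]

open Polynomial Matrix in
private lemma stmt5_CH_P {κ : Type*} [Fintype κ] [DecidableEq κ]
    {M : ℕ} (S0 V : Matrix κ κ ℝ) (p q : Fin (M + 1) → ℝ)
    (hchar : ∀ x lam : ℝ,
      Matrix.det (x • (1 : Matrix κ κ ℝ) - (S0 + lam • V))
        = x ^ (M + 1) - (∑ m : Fin (M + 1), p m * x ^ (m : ℕ))
          - lam * ∑ m : Fin (M + 1), q m * x ^ (m : ℕ)) :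
    (S0.map (C : ℝ →+* ℝ[X]) + (X : ℝ[X]) • V.map (C : ℝ →+* ℝ[X])) ^ (M + 1)
      = (∑ m : Fin (M + 1),
          Matrix.diagonal (fun _ => (C (p m) : ℝ[X])) *
            (S0.map (C : ℝ →+* ℝ[X]) + (X : ℝ[X]) • V.map (C : ℝ →+* ℝ[X])) ^ (m : ℕ))
        + Matrix.diagonal (fun _ => (X : ℝ[X])) *
          ∑ m : Fin (M + 1),
            Matrix.diagonal (fun _ => (C (q m) : ℝ[X])) *
              (S0.map (C : ℝ →+* ℝ[X]) + (X : ℝ[X]) • V.map (C : ℝ →+* ℝ[X])) ^ (m : ℕ) := by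
  set P := S0.map (C : ℝ →+* ℝ[X]) + (X : ℝ[X]) • V.map (C : ℝ →+* ℝ[X]) with hP
  have h := Matrix.aeval_self_charpoly P
  rw [stmt5_charpoly_P S0 V p q hchar] at h
  simp only [map_sub, map_pow, Polynomial.aeval_X, map_sum, _root_.map_mul,
    Polynomial.aeval_C] at h
  have h2 : ∀ r : ℝ[X], (algebraMap ℝ[X] (Matrix κ κ ℝ[X])) r
      = Matrix.diagonal (fun _ => r) := by
    intro r; ext i j; by_cases hij : i = j <;>
      simp [Matrix.algebraMap_matrix_apply, Matrix.diagonal, hij]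
  simp only [h2] at h
  rw [sub_sub, sub_eq_zero] at h
  rw [h, Finset.mul_sum]

open Polynomial Matrix in
private noncomputable def stmt5_psi {κ : Type*} [Fintype κ] [DecidableEq κ]
    {n : Type*} [Fintype n] [DecidableEq n] (H : Matrix n n ℝ) :
    Matrix κ κ ℝ[X] →+* Matrix (κ × n) (κ × n) ℝ :=
  ((Matrix.compRingEquiv κ n ℝ) :
      Matrix κ κ (Matrix n n ℝ) ≃+* Matrix (κ × n) (κ × n) ℝ).toRingHom.comp
    (RingHom.mapMatrix (Polynomial.aeval H).toRingHom)

open Polynomial Matrix in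
private lemma stmt5_psi_apply {κ : Type*} [Fintype κ] [DecidableEq κ]
    {n : Type*} [Fintype n] [DecidableEq n] (H : Matrix n n ℝ)
    (A : Matrix κ κ ℝ[X]) (k k' : κ) (i j : n) :
    stmt5_psi H A (k, i) (k', j) = (Polynomial.aeval H (A k k')) i j := rfl

open Polynomial Matrix in
private lemma stmt5_psi_diag_C {κ : Type*} [Fintype κ] [DecidableEq κ]
    {n : Type*} [Fintype n] [DecidableEq n] (H : Matrix n n ℝ) (r : ℝ) :
    stmt5_psi H (Matrix.diagonal fun _ : κ => (C r : ℝ[X]))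
      = r • (1 : Matrix (κ × n) (κ × n) ℝ) := by
  ext ⟨k, i⟩ ⟨k', j⟩
  rw [stmt5_psi_apply]
  by_cases h : k = k' <;> by_cases h2 : i = j <;>
    simp [Matrix.diagonal, h, h2, Matrix.one_apply, Matrix.algebraMap_matrix_apply, Prod.ext_iff]

open Polynomial Matrix in
private lemma stmt5_big_CH {κ : Type*} [Fintype κ] [DecidableEq κ]
    {n : Type*} [Fintype n] [DecidableEq n]
    {M : ℕ} (S0 V : Matrix κ κ ℝ) (p q : Fin (M + 1) → ℝ)
    (hchar : ∀ x lam : ℝ,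
      Matrix.det (x • (1 : Matrix κ κ ℝ) - (S0 + lam • V))
        = x ^ (M + 1) - (∑ m : Fin (M + 1), p m * x ^ (m : ℕ))
          - lam * ∑ m : Fin (M + 1), q m * x ^ (m : ℕ)) (H : Matrix n n ℝ) :
    (stmt5_psi H (S0.map (C : ℝ →+* ℝ[X]) + (X : ℝ[X]) • V.map (C : ℝ →+* ℝ[X]))) ^ (M + 1)
      = (∑ m : Fin (M + 1),
          p m • (stmt5_psi H (S0.map (C : ℝ →+* ℝ[X])
            + (X : ℝ[X]) • V.map (C : ℝ →+* ℝ[X]))) ^ (m : ℕ))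
        + stmt5_psi H (Matrix.diagonal fun _ => (X : ℝ[X])) *
          ∑ m : Fin (M + 1),
            q m • (stmt5_psi H (S0.map (C : ℝ →+* ℝ[X])
              + (X : ℝ[X]) • V.map (C : ℝ →+* ℝ[X]))) ^ (m : ℕ) := by
  have h := congrArg (stmt5_psi H) (stmt5_CH_P S0 V p q hchar)
  simp only [map_pow, map_add, map_sum, _root_.map_mul, stmt5_psi_diag_C] at h
  simpa only [smul_mul_assoc, one_mul, ← map_add] using h

open Matrix in
private lemma stmt5_sum_mulVec {m' : Type*} [Fintype m'] {ι : Type*} (s : Finset ι)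
    (A : ι → Matrix m' m' ℝ) (x : m' → ℝ) :
    (∑ i ∈ s, A i) *ᵥ x = ∑ i ∈ s, A i *ᵥ x := by
  ext j
  simp only [Matrix.mulVec, dotProduct, Matrix.sum_apply, Finset.sum_apply,
    Finset.sum_mul]
  rw [Finset.sum_comm]

/-- Theorem 1 (part 1): for a quadratic loss with Hessian `H`, any trajectory of the
stationary memory-`M` matrix dynamics satisfies the multistep recurrence
`w_{t+M+1} = Σ p_m w_{t+m} + Σ q_m H (w_{t+m} − w_*)`, where `p, q` are the coefficients
of the characteristic polynomial expansion of `S_λ`, and `Σ p_m = 1`. -/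
theorem stmt_5 (M : ℕ) (α : ℝ) (a b c : Fin M → ℝ) (D : Matrix (Fin M) (Fin M) ℝ)
    (p q : Fin (M + 1) → ℝ)
    (hchar : ∀ x lam : ℝ,
      Matrix.det (x • (1 : Matrix (Unit ⊕ Fin M) (Unit ⊕ Fin M) ℝ)
          - (Matrix.fromBlocks (Matrix.of fun _ _ => (1 : ℝ)) (Matrix.of fun _ j => b j)
              (0 : Matrix (Fin M) Unit ℝ) D
            + lam • Matrix.vecMulVec (Sum.elim (fun _ => -α) c) (Sum.elim (fun _ => (1 : ℝ)) a)))
        = x ^ (M + 1) - (∑ m : Fin (M + 1), p m * x ^ (m : ℕ))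
          - lam * ∑ m : Fin (M + 1), q m * x ^ (m : ℕ))
    {n : Type*} [Fintype n] [DecidableEq n]
    (H : Matrix n n ℝ) (wstar : n → ℝ) (w : ℕ → n → ℝ) (u : ℕ → Fin M → n → ℝ)
    (hw : ∀ t, w (t + 1)
        = w t + (-α) • H.mulVec (w t + (∑ m, a m • u t m) - wstar) + ∑ m, b m • u t m)
    (hu : ∀ t m, u (t + 1) m
        = c m • H.mulVec (w t + (∑ m', a m' • u t m') - wstar) + ∑ m', D m m' • u t m') :
    (∑ m, p m = 1) ∧
    ∀ t, w (t + M + 1) = (∑ m : Fin (M + 1), p m • w (t + (m : ℕ)))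
      + ∑ m : Fin (M + 1), q m • H.mulVec (w (t + (m : ℕ)) - wstar) := by
  classical
  open Polynomial Matrix in
  set S0 : Matrix (Unit ⊕ Fin M) (Unit ⊕ Fin M) ℝ :=
    Matrix.fromBlocks (Matrix.of fun _ _ => (1:ℝ)) (Matrix.of fun _ j => b j) 0 D with hS0
  set V : Matrix (Unit ⊕ Fin M) (Unit ⊕ Fin M) ℝ :=
    Matrix.vecMulVec (Sum.elim (fun _ => -α) c) (Sum.elim (fun _ => (1:ℝ)) a) with hV
  -- sum of p's is 1
  have hps : ∑ m, p m = 1 := by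
    have hcol : ∀ i, ((1:ℝ) • (1 : Matrix (Unit ⊕ Fin M) (Unit ⊕ Fin M) ℝ)
        - (S0 + (0:ℝ) • V)) i (Sum.inl ()) = 0 := by
      intro i
      cases i with
      | inl _ => simp [hS0, Matrix.one_apply]
      | inr m => simp [hS0, Matrix.one_apply]
    have h0 := Matrix.det_eq_zero_of_column_eq_zero (Sum.inl ()) hcol
    rw [hchar 1 0] at h0
    simp at h0
    linarith
  refine ⟨hps, ?_⟩
  set T : Matrix ((Unit ⊕ Fin M) × n) ((Unit ⊕ Fin M) × n) ℝ :=
    stmt5_psi H (S0.map (Polynomial.C : ℝ →+* Polynomial ℝ)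
      + (Polynomial.X : Polynomial ℝ) • V.map (Polynomial.C : ℝ →+* Polynomial ℝ)) with hT
  set Hb : Matrix ((Unit ⊕ Fin M) × n) ((Unit ⊕ Fin M) × n) ℝ :=
    stmt5_psi H (Matrix.diagonal fun _ : Unit ⊕ Fin M => (Polynomial.X : Polynomial ℝ)) with hHbd
  have hTe : ∀ (k k' : Unit ⊕ Fin M) (i j : n),
      T (k, i) (k', j) = S0 k k' * (if i = j then (1:ℝ) else 0) + V k k' * H i j := by
    intro k k' i j
    rw [hT, stmt5_psi_apply]
    simp [Matrix.add_apply, Matrix.smul_apply, smul_eq_mul, Matrix.algebraMap_matrix_apply,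
      Matrix.one_apply, Matrix.mul_apply, Matrix.diagonal]
  have hHbe : ∀ (z : ((Unit ⊕ Fin M) × n) → ℝ) (k : Unit ⊕ Fin M) (i : n),
      (Hb *ᵥ z) (k, i) = ∑ j, H i j * z (k, j) := by
    intro z k i
    have hent : ∀ (k' : Unit ⊕ Fin M) (j : n),
        Hb (k, i) (k', j) = if k = k' then H i j else 0 := by
      intro k' j
      rw [hHbd, stmt5_psi_apply]
      by_cases h : k = k' <;> simp [Matrix.diagonal, h]
    simp only [Matrix.mulVec, dotProduct, Fintype.sum_prod_type, hent]
    rw [Finset.sum_eq_single k]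
    · simp
    · intro k' _ hk'; simp [Ne.symm hk']
    · intro h; simp at h
  set v : ℕ → ((Unit ⊕ Fin M) × n) → ℝ := fun t kj =>
    Sum.elim (fun _ => w t kj.2 - wstar kj.2) (fun m => u t m kj.2) kj.1 with hv
  have hstep : ∀ t, v (t + 1) = T *ᵥ v t := by
    intro t
    funext kj
    obtain ⟨k, i⟩ := kj
    have hformula : (T *ᵥ v t) (k, i)
        = (∑ k', S0 k k' * v t (k', i)) + ∑ k', V k k' * ∑ j, H i j * v t (k', j) := by
      simp only [Matrix.mulVec, dotProduct, Fintype.sum_prod_type, hTe]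
      rw [← Finset.sum_add_distrib]
      congr 1; funext k'
      simp only [add_mul, Finset.sum_add_distrib, Finset.mul_sum]
      congr 1
      · rw [Finset.sum_eq_single i] <;> simp +contextual [eq_comm]
      · congr 1; funext j; ring
    rw [hformula]
    cases k with
    | inl _ =>
      simp only [hv, Sum.elim_inl, Sum.elim_inr, Fintype.sum_sum_type, Finset.univ_unique,
        Finset.sum_singleton, hS0, hV, Matrix.fromBlocks_apply₁₁, Matrix.fromBlocks_apply₁₂,
        Matrix.vecMulVec_apply, Matrix.of_apply, one_mul, mul_one]
      have hwi := congrFun (hw t) i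
      simp only [Pi.add_apply, Pi.smul_apply, Pi.sub_apply, Finset.sum_apply, smul_eq_mul,
        Matrix.mulVec, dotProduct] at hwi
      rw [hwi]
      simp only [mul_add, mul_sub, add_mul, sub_mul, Finset.sum_add_distrib,
        Finset.sum_sub_distrib, Finset.mul_sum, one_mul, mul_one, neg_mul, neg_neg]
      ring_nf
      have hsw : ∑ x : n, ∑ m : Fin M, -(α * H i x * a m * u t m x)
          = ∑ m : Fin M, ∑ x : n, -(α * a m * H i x * u t m x) := by
        rw [Finset.sum_comm]
        exact Finset.sum_congr rfl fun _ _ => Finset.sum_congr rfl fun _ _ => by ring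
      rw [hsw]
      ring
    | inr m =>
      simp only [hv, Sum.elim_inl, Sum.elim_inr, Fintype.sum_sum_type, Finset.univ_unique,
        Finset.sum_singleton, hS0, hV, Matrix.fromBlocks_apply₂₁, Matrix.fromBlocks_apply₂₂,
        Matrix.vecMulVec_apply, Matrix.of_apply, Matrix.zero_apply, one_mul, mul_one, zero_mul]
      have hui := congrFun (hu t m) i
      simp only [Pi.add_apply, Pi.smul_apply, Pi.sub_apply, Finset.sum_apply, smul_eq_mul,
        Matrix.mulVec, dotProduct] at hui
      rw [hui]
      simp only [mul_add, mul_sub, add_mul, sub_mul, Finset.sum_add_distrib,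
        Finset.sum_sub_distrib, Finset.mul_sum, one_mul, mul_one, neg_mul, neg_neg]
      ring_nf
      have hsw : ∑ x : n, ∑ m' : Fin M, c m * H i x * a m' * u t m' x
          = ∑ m' : Fin M, ∑ x : n, c m * a m' * H i x * u t m' x := by
        rw [Finset.sum_comm]
        exact Finset.sum_congr rfl fun _ _ => Finset.sum_congr rfl fun _ _ => by ring
      rw [hsw]
      ring
  have hpow : ∀ t s, v (t + s) = (T ^ s) *ᵥ v t := by
    intro t s
    induction s with
    | zero => simp
    | succ s ih =>
      rw [show t + (s + 1) = (t + s) + 1 from rfl, hstep, ih, Matrix.mulVec_mulVec,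
        ← pow_succ']
  have hCH := stmt5_big_CH S0 V p q hchar H
  intro t
  have h1 : (T ^ (M + 1)) *ᵥ v t
      = (∑ m : Fin (M + 1), p m • v (t + (m : ℕ)))
        + Hb *ᵥ (∑ m : Fin (M + 1), q m • v (t + (m : ℕ))) := by
    rw [← hT] at hCH
    rw [← hHbd] at hCH
    rw [hCH, Matrix.add_mulVec, ← Matrix.mulVec_mulVec, stmt5_sum_mulVec, stmt5_sum_mulVec]
    congr 1
    · exact Finset.sum_congr rfl fun m _ => by
        rw [Matrix.smul_mulVec, ← hpow]
    · refine congrArg (fun z => Hb *ᵥ z) (Finset.sum_congr rfl fun m _ => ?_)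
      rw [Matrix.smul_mulVec, ← hpow]
  have h2 : v (t + (M + 1)) = (T ^ (M + 1)) *ᵥ v t := hpow t (M + 1)
  rw [h1] at h2
  funext i
  have h3 := congrFun h2 (Sum.inl (), i)
  simp only [hv, Sum.elim_inl, Pi.add_apply, Finset.sum_apply, Pi.smul_apply, smul_eq_mul,
    hHbe] at h3
  have h4 : ∑ j, H i j * (∑ m : Fin (M + 1), q m * (w (t + (m : ℕ)) j - wstar j))
      = ∑ m : Fin (M + 1), q m * (H.mulVec (w (t + (m : ℕ)) - wstar)) i := by
    simp only [Finset.mul_sum]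
    rw [Finset.sum_comm]
    refine Finset.sum_congr rfl fun m _ => ?_
    simp only [Matrix.mulVec, dotProduct, Pi.sub_apply, Finset.mul_sum]
    exact Finset.sum_congr rfl fun j _ => by ring
  rw [h4] at h3
  have h5 : ∑ m : Fin (M + 1), p m * (w (t + (m : ℕ)) i - wstar i)
      = (∑ m : Fin (M + 1), p m * w (t + (m : ℕ)) i) - wstar i := by
    rw [show ∀ x : Fin (M+1) → ℝ, ∑ m, x m * (w (t + (m : ℕ)) i - wstar i)
        = ∑ m, (x m * w (t + (m : ℕ)) i - x m * wstar i) from fun x =>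
      Finset.sum_congr rfl fun m _ => by ring]
    rw [Finset.sum_sub_distrib, ← Finset.sum_mul, hps, one_mul]
  simp only [Pi.add_apply, Finset.sum_apply, Pi.smul_apply, smul_eq_mul]
  rw [h5] at h3
  rw [show t + (M + 1) = t + M + 1 from rfl] at h3
  linarith [h3]
end

section
/- With L_t defined by the same propagator expansion with U_t, V_t ≥ 0, if Σ_{t≥1} U_t > 1 and V_t > 0 for at least one t, then sup_t L_t = ∞. -/
/-- With `L` given by the propagator expansion (renewal recursion
`L_t = ½ V_{t+1} + Σ_{s=1}^t U_s L_{t−s}`), if `Σ_{t≥1} U_t > 1` and `V_t > 0` for at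
least one `t ≥ 1`, then `sup_t L_t = ∞`. -/
theorem stmt_9 (U V L : ℕ → ℝ) (hU0 : U 0 = 0) (hUnn : ∀ t, 0 ≤ U t) (hVnn : ∀ t, 0 ≤ V t)
    (hL : ∀ t, L t = (1 / 2) * V (t + 1) + ∑ s ∈ Finset.Icc 1 t, U s * L (t - s))
    (hUgt : ∃ T, 1 < ∑ s ∈ Finset.Icc 1 T, U s)
    (hVpos : ∃ t, 1 ≤ t ∧ 0 < V t) :
    ∀ Mx : ℝ, ∃ t, Mx < L t := by
  obtain ⟨T, hT⟩ := hUgt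
  obtain ⟨t0, ht0, hV0⟩ := hVpos
  set a : ℝ := ∑ s ∈ Finset.Icc 1 T, U s with ha
  -- L is nonnegative
  have hLnn : ∀ t, 0 ≤ L t := by
    intro t
    induction t using Nat.strong_induction_on with
    | _ t ih =>
      rw [hL t]
      have h1 : 0 ≤ (1 / 2 : ℝ) * V (t + 1) := by
        have := hVnn (t + 1); linarith
      have h2 : 0 ≤ ∑ s ∈ Finset.Icc 1 t, U s * L (t - s) := by
        apply Finset.sum_nonneg
        intro s hs
        rw [Finset.mem_Icc] at hs
        exact mul_nonneg (hUnn s) (ih (t - s) (by omega))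
      linarith
  set s0 : ℕ := t0 - 1 with hs0
  have hc : 0 < L s0 := by
    rw [hL s0]
    have hst : s0 + 1 = t0 := by omega
    rw [hst]
    have h2 : 0 ≤ ∑ s ∈ Finset.Icc 1 s0, U s * L (s0 - s) :=
      Finset.sum_nonneg fun s _ => mul_nonneg (hUnn s) (hLnn _)
    linarith
  -- key window-sum growth
  have key : ∀ k : ℕ, L s0 * a ^ k ≤ ∑ u ∈ Finset.Icc s0 (s0 + k * T), L u := by
    intro k
    induction k with
    | zero => simp
    | succ k ih =>
      have hmaps : ∀ p ∈ (Finset.Icc 1 T) ×ˢ (Finset.Icc s0 (s0 + k * T)),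
          p.1 + p.2 ∈ Finset.Icc (s0 + 1) (s0 + (k + 1) * T) := by
        intro p hp
        rw [Finset.mem_product, Finset.mem_Icc, Finset.mem_Icc] at hp
        rw [Finset.mem_Icc]
        constructor <;> [omega; nlinarith [hp.1.2, hp.2.2]]
      have step2 : a * ∑ u ∈ Finset.Icc s0 (s0 + k * T), L u
          = ∑ p ∈ (Finset.Icc 1 T) ×ˢ (Finset.Icc s0 (s0 + k * T)), U p.1 * L p.2 := by
        rw [Finset.sum_product, ha, Finset.sum_mul]
        exact Finset.sum_congr rfl fun s _ => Finset.mul_sum _ _ _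
      have step3 : ∑ p ∈ (Finset.Icc 1 T) ×ˢ (Finset.Icc s0 (s0 + k * T)), U p.1 * L p.2
          ≤ ∑ u ∈ Finset.Icc (s0 + 1) (s0 + (k + 1) * T), L u := by
        rw [← Finset.sum_fiberwise_of_maps_to hmaps (fun p => U p.1 * L p.2)]
        apply Finset.sum_le_sum
        intro u hu
        set F := ((Finset.Icc 1 T) ×ˢ (Finset.Icc s0 (s0 + k * T))).filter
          (fun p => p.1 + p.2 = u) with hF
        have hinj : ∀ p ∈ F, ∀ q ∈ F, p.1 = q.1 → p = q := by
          intro p hp q hq hpq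
          rw [hF, Finset.mem_filter] at hp hq
          exact Prod.ext hpq (by omega)
        have himg : ∑ s ∈ F.image Prod.fst, U s * L (u - s)
            = ∑ p ∈ F, U p.1 * L p.2 := by
          rw [Finset.sum_image hinj]
          apply Finset.sum_congr rfl
          intro p hp
          rw [hF, Finset.mem_filter] at hp
          have : u - p.1 = p.2 := by omega
          rw [this]
        rw [← himg]
        have hsub : F.image Prod.fst ⊆ Finset.Icc 1 u := by
          intro s hs
          rw [Finset.mem_image] at hs
          obtain ⟨p, hp, rfl⟩ := hs
          rw [hF, Finset.mem_filter, Finset.mem_product, Finset.mem_Icc] at hp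
          rw [Finset.mem_Icc]
          omega
        have h1 : ∑ s ∈ F.image Prod.fst, U s * L (u - s)
            ≤ ∑ s ∈ Finset.Icc 1 u, U s * L (u - s) :=
          Finset.sum_le_sum_of_subset_of_nonneg hsub
            (fun s _ _ => mul_nonneg (hUnn s) (hLnn _))
        have h2 : 0 ≤ (1 / 2 : ℝ) * V (u + 1) := by have := hVnn (u + 1); linarith
        rw [hL u]
        linarith
      have step4 : ∑ u ∈ Finset.Icc (s0 + 1) (s0 + (k + 1) * T), L u
          ≤ ∑ u ∈ Finset.Icc s0 (s0 + (k + 1) * T), L u :=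
        Finset.sum_le_sum_of_subset_of_nonneg
          (Finset.Icc_subset_Icc (by omega) le_rfl) (fun u _ _ => hLnn u)
      have ha0 : (0 : ℝ) < a := by linarith
      calc L s0 * a ^ (k + 1) = a * (L s0 * a ^ k) := by ring
        _ ≤ a * ∑ u ∈ Finset.Icc s0 (s0 + k * T), L u := by
            exact mul_le_mul_of_nonneg_left ih ha0.le
        _ = _ := step2
        _ ≤ _ := step3
        _ ≤ _ := step4
  -- conclude
  intro Mx
  by_contra hcon
  push_neg at hcon
  have hMx : 0 < Mx := lt_of_lt_of_le hc (hcon s0)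
  have ha0 : (0 : ℝ) ≤ a := by linarith
  set b : ℝ := Real.sqrt a with hb
  have hb1 : 1 < b := by
    rw [hb]
    have : (1 : ℝ) = Real.sqrt 1 := by simp
    rw [this]
    exact Real.sqrt_lt_sqrt (by norm_num) hT
  have hbsq : b * b = a := Real.mul_self_sqrt ha0
  obtain ⟨n, hn⟩ := pow_unbounded_of_one_lt ((T + 1 : ℝ) * Mx / ((b - 1) * L s0)) hb1
  set k : ℕ := n + 1 with hk
  have hbk : b ^ n ≤ b ^ k := pow_le_pow_right₀ (by linarith) (by omega)
  have hbkpos : (0 : ℝ) < b ^ k := by positivity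
  have hb1' : (0 : ℝ) < (b - 1) * L s0 := mul_pos (by linarith) hc
  have hn' : (T + 1 : ℝ) * Mx < (b - 1) * L s0 * b ^ k := by
    rw [div_lt_iff₀ hb1'] at hn
    nlinarith
  -- lower bound for a^k
  have hber : 1 + (k : ℝ) * (b - 1) ≤ b ^ k := by
    have := one_add_mul_le_pow (a := b - 1) (by linarith) k
    simpa using this
  have hak : (k : ℝ) * (b - 1) * b ^ k ≤ a ^ k := by
    have : a ^ k = b ^ k * b ^ k := by rw [← hbsq, mul_pow]
    rw [this]
    have h1 : (k : ℝ) * (b - 1) ≤ b ^ k := by linarith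
    nlinarith
  have hk1 : (1 : ℝ) ≤ (k : ℝ) := by exact_mod_cast Nat.one_le_iff_ne_zero.mpr (by omega)
  have hlow : ((k * T + 1 : ℕ) : ℝ) * Mx < L s0 * a ^ k := by
    have h1 : ((k * T + 1 : ℕ) : ℝ) ≤ (k : ℝ) * (T + 1 : ℝ) := by push_cast; nlinarith
    have h2 : (k : ℝ) * ((T + 1 : ℝ) * Mx) < (k : ℝ) * ((b - 1) * L s0 * b ^ k) := by
      apply mul_lt_mul_of_pos_left hn' (by linarith)
    have h3 : (k : ℝ) * ((b - 1) * L s0 * b ^ k) ≤ L s0 * a ^ k := by nlinarith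
    nlinarith
  have hcard : (Finset.Icc s0 (s0 + k * T)).card = k * T + 1 := by
    rw [Nat.card_Icc]; omega
  have hup : ∑ u ∈ Finset.Icc s0 (s0 + k * T), L u ≤ ((k * T + 1 : ℕ) : ℝ) * Mx := by
    calc ∑ u ∈ Finset.Icc s0 (s0 + k * T), L u
        ≤ ∑ _u ∈ Finset.Icc s0 (s0 + k * T), Mx :=
          Finset.sum_le_sum fun u _ => hcon u
      _ = ((k * T + 1 : ℕ) : ℝ) * Mx := by rw [Finset.sum_const, hcard]; simp
  have := key k
  linarith
end

section
/- Let U_t ≥ 0 with U_t = 0 for t ≤ 0 and U_t ≤ C' t^{−ξ} for t > 0 with ξ > 1. If C' is small enough (specifically 2^{1+ξ} C' Σ_{r≥1} r^{−ξ} ≤ 1/2), then the convolution square satisfies (U∗U)_t ≤ (C'/2) t^{−ξ} for all t > 0, and consequently the resolvent kernel satisfies ((1−𝕌)^{-1})_t ≤ 2 C' t^{−ξ} for t > 0. -/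
/-- Discrete convolution of one-sided sequences. -/
def seqConv (A B : ℕ → ℝ) : ℕ → ℝ := fun t => ∑ r ∈ Finset.range (t + 1), A (t - r) * B r

/-- `m`-fold convolution power, with `U^{*0} = δ₀`. -/
def seqConvPow (U : ℕ → ℝ) : ℕ → ℕ → ℝ
  | 0 => fun t => if t = 0 then 1 else 0
  | m + 1 => seqConv U (seqConvPow U m)

namespace Stmt10Aux

lemma summable_shift {ξ : ℝ} (hξ : 1 < ξ) :
    Summable (fun r : ℕ => ((r : ℝ) + 1) ^ (-ξ)) := by
  have h : Summable (fun r : ℕ => ((r : ℝ)) ^ (-ξ)) := by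
    rw [Real.summable_nat_rpow]; linarith
  have h2 := (summable_nat_add_iff 1).2 h
  simpa [Nat.cast_add] using h2

lemma sum_Ioo_le {ξ : ℝ} (hξ : 1 < ξ) (t : ℕ) :
    ∑ r ∈ Finset.Ioo 0 t, ((r : ℝ)) ^ (-ξ) ≤ ∑' r : ℕ, ((r : ℝ) + 1) ^ (-ξ) := by
  have hIoo : Finset.Ioo 0 t = Finset.Ico 1 t := rfl
  rw [hIoo, Finset.sum_Ico_eq_sum_range]
  have heq : ∀ i : ℕ, ((1 + i : ℕ) : ℝ) ^ (-ξ) = ((i : ℝ) + 1) ^ (-ξ) := by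
    intro i; push_cast; ring_nf
  calc ∑ i ∈ Finset.range (t - 1), ((1 + i : ℕ) : ℝ) ^ (-ξ)
      = ∑ i ∈ Finset.range (t - 1), ((i : ℝ) + 1) ^ (-ξ) := by
        exact Finset.sum_congr rfl fun i _ => heq i
    _ ≤ ∑' r : ℕ, ((r : ℝ) + 1) ^ (-ξ) :=
        Summable.sum_le_tsum _ (fun i _ => Real.rpow_nonneg (by positivity) _)
          (summable_shift hξ)

lemma sum_reflect {ξ : ℝ} (t : ℕ) :
    ∑ r ∈ Finset.Ioo 0 t, (((t - r : ℕ) : ℝ)) ^ (-ξ)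
      = ∑ r ∈ Finset.Ioo 0 t, ((r : ℝ)) ^ (-ξ) := by
  apply Finset.sum_nbij' (fun r => t - r) (fun r => t - r)
  · intro a ha
    simp only [Finset.mem_Ioo] at ha ⊢
    omega
  · intro a ha
    simp only [Finset.mem_Ioo] at ha ⊢
    omega
  · intro a ha
    simp only [Finset.mem_Ioo] at ha
    omega
  · intro a ha
    simp only [Finset.mem_Ioo] at ha
    omega
  · intro a ha
    rfl

lemma key_pointwise {ξ : ℝ} (hξ : 1 < ξ) {t r : ℕ} (hr : r ∈ Finset.Ioo 0 t) :
    (((t - r : ℕ) : ℝ)) ^ (-ξ) * ((r : ℝ)) ^ (-ξ)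
      ≤ (2 : ℝ) ^ ξ * ((t : ℝ)) ^ (-ξ) * (((r : ℝ)) ^ (-ξ) + (((t - r : ℕ) : ℝ)) ^ (-ξ)) := by
  simp only [Finset.mem_Ioo] at hr
  obtain ⟨hr0, hrt⟩ := hr
  set x : ℝ := (r : ℝ) with hx
  set y : ℝ := ((t - r : ℕ) : ℝ) with hy
  have hxpos : (0 : ℝ) < x := by positivity
  have hypos : (0 : ℝ) < y := by
    have : 0 < t - r := by omega
    positivity
  have hxy : x + y = (t : ℝ) := by
    rw [hx, hy]
    push_cast [Nat.cast_sub hrt.le]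
    ring
  have htpos : (0 : ℝ) < (t : ℝ) := by
    have : 0 < t := by omega
    positivity
  have hhalf : ((t : ℝ) / 2) ^ (-ξ) = (2 : ℝ) ^ ξ * ((t : ℝ)) ^ (-ξ) := by
    rw [Real.div_rpow htpos.le (by norm_num : (0:ℝ) ≤ 2),
      Real.rpow_neg (by norm_num : (0:ℝ) ≤ 2), div_inv_eq_mul, mul_comm]
  have hξ0 : -ξ ≤ 0 := by linarith
  have hxnn : 0 ≤ x ^ (-ξ) := Real.rpow_nonneg hxpos.le _
  have hynn : 0 ≤ y ^ (-ξ) := Real.rpow_nonneg hypos.le _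
  rcases le_total x y with hc | hc
  · -- y ≥ t/2
    have h1 : (t : ℝ) / 2 ≤ y := by linarith
    have h2 : y ^ (-ξ) ≤ ((t : ℝ) / 2) ^ (-ξ) :=
      Real.rpow_le_rpow_of_nonpos (by linarith) h1 hξ0
    calc y ^ (-ξ) * x ^ (-ξ) ≤ ((t : ℝ) / 2) ^ (-ξ) * x ^ (-ξ) := by
          exact mul_le_mul_of_nonneg_right h2 hxnn
      _ = (2 : ℝ) ^ ξ * ((t : ℝ)) ^ (-ξ) * x ^ (-ξ) := by rw [hhalf]
      _ ≤ (2 : ℝ) ^ ξ * ((t : ℝ)) ^ (-ξ) * (x ^ (-ξ) + y ^ (-ξ)) := by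
          have : (0:ℝ) ≤ (2 : ℝ) ^ ξ * ((t : ℝ)) ^ (-ξ) := by positivity
          nlinarith
  · -- x ≥ t/2
    have h1 : (t : ℝ) / 2 ≤ x := by linarith
    have h2 : x ^ (-ξ) ≤ ((t : ℝ) / 2) ^ (-ξ) :=
      Real.rpow_le_rpow_of_nonpos (by linarith) h1 hξ0
    calc y ^ (-ξ) * x ^ (-ξ) ≤ y ^ (-ξ) * ((t : ℝ) / 2) ^ (-ξ) := by
          exact mul_le_mul_of_nonneg_left h2 hynn
      _ = (2 : ℝ) ^ ξ * ((t : ℝ)) ^ (-ξ) * y ^ (-ξ) := by rw [hhalf]; ring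
      _ ≤ (2 : ℝ) ^ ξ * ((t : ℝ)) ^ (-ξ) * (x ^ (-ξ) + y ^ (-ξ)) := by
          have : (0:ℝ) ≤ (2 : ℝ) ^ ξ * ((t : ℝ)) ^ (-ξ) := by positivity
          nlinarith

/-- Main convolution bound. -/
lemma conv_le {ξ : ℝ} (hξ : 1 < ξ) (A B : ℕ → ℝ) (a b : ℝ) (ha : 0 ≤ a) (hb : 0 ≤ b)
    (hA0 : A 0 = 0) (hB0 : B 0 = 0) (hAnn : ∀ s, 0 ≤ A s) (hBnn : ∀ s, 0 ≤ B s)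
    (hAb : ∀ s : ℕ, 0 < s → A s ≤ a * (s : ℝ) ^ (-ξ))
    (hBb : ∀ s : ℕ, 0 < s → B s ≤ b * (s : ℝ) ^ (-ξ))
    (t : ℕ) (ht : 0 < t) :
    seqConv A B t ≤
      (2 : ℝ) ^ (1 + ξ) * (∑' r : ℕ, ((r : ℝ) + 1) ^ (-ξ)) * a * b * (t : ℝ) ^ (-ξ) := by
  have htR : (0 : ℝ) < (t : ℝ) := by positivity
  set S : ℝ := ∑' r : ℕ, ((r : ℝ) + 1) ^ (-ξ) with hS
  -- reduce the sum to Ioo 0 t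
  have hsub : Finset.Ioo 0 t ⊆ Finset.range (t + 1) := by
    intro r hr
    simp only [Finset.mem_Ioo] at hr
    simp only [Finset.mem_range]
    omega
  have hconv : seqConv A B t = ∑ r ∈ Finset.Ioo 0 t, A (t - r) * B r := by
    rw [seqConv]
    refine (Finset.sum_subset hsub ?_).symm
    intro r hr hr'
    simp only [Finset.mem_range] at hr
    simp only [Finset.mem_Ioo, not_and, not_lt] at hr'
    rcases Nat.eq_zero_or_pos r with h0 | h0
    · subst h0; rw [hB0, mul_zero]
    · have : t ≤ r := hr' h0
      have : t - r = 0 := by omega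
      rw [this, hA0, zero_mul]
  rw [hconv]
  -- termwise bound
  have hterm : ∀ r ∈ Finset.Ioo 0 t,
      A (t - r) * B r ≤
        a * b * ((2 : ℝ) ^ ξ * ((t : ℝ)) ^ (-ξ)
          * (((r : ℝ)) ^ (-ξ) + (((t - r : ℕ) : ℝ)) ^ (-ξ))) := by
    intro r hr
    have hmem := hr
    simp only [Finset.mem_Ioo] at hmem
    have htr : 0 < t - r := by omega
    have h1 : A (t - r) ≤ a * ((t - r : ℕ) : ℝ) ^ (-ξ) := hAb _ htr
    have h2 : B r ≤ b * ((r : ℝ)) ^ (-ξ) := hBb _ hmem.1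
    have h3 := key_pointwise hξ hr
    have hArn : 0 ≤ A (t - r) := hAnn _
    have hBrn : 0 ≤ B r := hBnn _
    calc A (t - r) * B r ≤ (a * ((t - r : ℕ) : ℝ) ^ (-ξ)) * (b * ((r : ℝ)) ^ (-ξ)) := by
          apply mul_le_mul h1 h2 hBrn
          have : (0:ℝ) ≤ ((t - r : ℕ) : ℝ) ^ (-ξ) := Real.rpow_nonneg (by positivity) _
          positivity
      _ = a * b * ((((t - r : ℕ) : ℝ)) ^ (-ξ) * ((r : ℝ)) ^ (-ξ)) := by ring
      _ ≤ a * b * ((2 : ℝ) ^ ξ * ((t : ℝ)) ^ (-ξ)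
            * (((r : ℝ)) ^ (-ξ) + (((t - r : ℕ) : ℝ)) ^ (-ξ))) := by
          apply mul_le_mul_of_nonneg_left h3 (by positivity)
  have hsum := Finset.sum_le_sum hterm
  refine hsum.trans ?_
  rw [← Finset.mul_sum, ← Finset.mul_sum, Finset.sum_add_distrib, sum_reflect]
  have hS2 : ∑ r ∈ Finset.Ioo 0 t, ((r : ℝ)) ^ (-ξ) ≤ S := sum_Ioo_le hξ t
  have hSnn : 0 ≤ ∑ r ∈ Finset.Ioo 0 t, ((r : ℝ)) ^ (-ξ) :=
    Finset.sum_nonneg fun r _ => Real.rpow_nonneg (by positivity) _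
  have h2pow : (2 : ℝ) ^ (1 + ξ) = 2 * (2 : ℝ) ^ ξ := by
    rw [Real.rpow_add (by norm_num : (0:ℝ) < 2), Real.rpow_one]
  rw [h2pow]
  have htnn : (0:ℝ) ≤ ((t : ℝ)) ^ (-ξ) := Real.rpow_nonneg htR.le _
  have h2ξnn : (0:ℝ) ≤ (2 : ℝ) ^ ξ := Real.rpow_nonneg (by norm_num) _
  have key : a * b * ((2:ℝ) ^ ξ * (t:ℝ) ^ (-ξ) * (2 * (∑ r ∈ Finset.Ioo 0 t, ((r : ℝ)) ^ (-ξ))))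
      ≤ a * b * ((2:ℝ) ^ ξ * (t:ℝ) ^ (-ξ) * (2 * S)) := by
    apply mul_le_mul_of_nonneg_left _ (by positivity)
    apply mul_le_mul_of_nonneg_left _ (by positivity)
    linarith
  calc a * b * ((2:ℝ) ^ ξ * (t:ℝ) ^ (-ξ)
        * (∑ r ∈ Finset.Ioo 0 t, ((r : ℝ)) ^ (-ξ) + ∑ r ∈ Finset.Ioo 0 t, ((r : ℝ)) ^ (-ξ)))
      = a * b * ((2:ℝ) ^ ξ * (t:ℝ) ^ (-ξ)
        * (2 * (∑ r ∈ Finset.Ioo 0 t, ((r : ℝ)) ^ (-ξ)))) := by ring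
    _ ≤ a * b * ((2:ℝ) ^ ξ * (t:ℝ) ^ (-ξ) * (2 * S)) := key
    _ = 2 * (2:ℝ) ^ ξ * S * a * b * (t:ℝ) ^ (-ξ) := by ring

end Stmt10Aux

/-- Lemma (small-constant resolvent bound): if `U_t = 0` for `t = 0`, `0 ≤ U_t ≤ C' t^{−ξ}`
for `t > 0`, `ξ > 1`, and `2^{1+ξ} C' Σ_{r≥1} r^{−ξ} ≤ 1/2`, then
`(U∗U)_t ≤ (C'/2) t^{−ξ}` and the resolvent kernel `Σ_m U^{*m}` satisfies
`((1−𝕌)^{-1})_t ≤ 2C' t^{−ξ}` for `t > 0`. -/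
theorem stmt_10 (U : ℕ → ℝ) (C' ξ : ℝ) (hξ : 1 < ξ) (hU0 : U 0 = 0)
    (hUnn : ∀ t, 0 ≤ U t)
    (hUb : ∀ t : ℕ, 0 < t → U t ≤ C' * (t : ℝ) ^ (-ξ))
    (hsmall : (2 : ℝ) ^ (1 + ξ) * C' * (∑' r : ℕ, ((r : ℝ) + 1) ^ (-ξ)) ≤ 1 / 2) :
    (∀ t : ℕ, 0 < t → seqConv U U t ≤ C' / 2 * (t : ℝ) ^ (-ξ)) ∧
    (∀ t : ℕ, 0 < t → (∑' m : ℕ, seqConvPow U m t) ≤ 2 * C' * (t : ℝ) ^ (-ξ)) := by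
  set S : ℝ := ∑' r : ℕ, ((r : ℝ) + 1) ^ (-ξ) with hSdef
  have hSnn : 0 ≤ S :=
    tsum_nonneg fun r => Real.rpow_nonneg (by positivity) _
  have hC'nn : 0 ≤ C' := by
    have h1 := hUb 1 one_pos
    have h2 := hUnn 1
    rw [Nat.cast_one, Real.one_rpow, mul_one] at h1
    linarith
  have h2pos : (0:ℝ) < (2:ℝ) ^ (1 + ξ) := Real.rpow_pos_of_pos (by norm_num) _
  -- generic step: convolving U with a (c·t^{-ξ})-bounded kernel halves the constant
  have step : ∀ (B : ℕ → ℝ) (c : ℝ), 0 ≤ c → B 0 = 0 → (∀ s, 0 ≤ B s) →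
      (∀ s : ℕ, 0 < s → B s ≤ c * (s : ℝ) ^ (-ξ)) →
      ∀ t : ℕ, 0 < t → seqConv U B t ≤ c / 2 * (t : ℝ) ^ (-ξ) := by
    intro B c hc hB0 hBnn hBb t ht
    have h := Stmt10Aux.conv_le hξ U B C' c hC'nn hc hU0 hB0 hUnn hBnn hUb hBb t ht
    refine h.trans ?_
    have htnn : (0:ℝ) ≤ ((t : ℝ)) ^ (-ξ) := Real.rpow_nonneg (by positivity) _
    have : (2 : ℝ) ^ (1 + ξ) * S * C' * c ≤ 1 / 2 * c := by
      have := mul_le_mul_of_nonneg_right hsmall hc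
      calc (2 : ℝ) ^ (1 + ξ) * S * C' * c = ((2 : ℝ) ^ (1 + ξ) * C' * S) * c := by ring
        _ ≤ 1 / 2 * c := this
    calc (2 : ℝ) ^ (1 + ξ) * S * C' * c * (t : ℝ) ^ (-ξ)
        ≤ 1 / 2 * c * (t : ℝ) ^ (-ξ) := mul_le_mul_of_nonneg_right this htnn
      _ = c / 2 * (t : ℝ) ^ (-ξ) := by ring
  have part1 : ∀ t : ℕ, 0 < t → seqConv U U t ≤ C' / 2 * (t : ℝ) ^ (-ξ) :=
    step U C' hC'nn hU0 hUnn hUb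
  -- properties of convolution powers
  have pow_nn : ∀ m, ∀ s, 0 ≤ seqConvPow U m s := by
    intro m
    induction m with
    | zero => intro s; simp only [seqConvPow]; split <;> norm_num
    | succ m ih =>
      intro s
      simp only [seqConvPow, seqConv]
      exact Finset.sum_nonneg fun r _ => mul_nonneg (hUnn _) (ih r)
  have pow_zero : ∀ m, seqConvPow U (m + 1) 0 = 0 := by
    intro m
    simp only [seqConvPow, seqConv]
    simp [hU0]
  have pow_one : ∀ t : ℕ, seqConvPow U 1 t = U t := by
    intro t
    simp only [seqConvPow, seqConv]
    rw [Finset.sum_eq_single 0]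
    · simp
    · intro r _ hr0; simp [hr0]
    · intro h; simp only [Finset.mem_range] at h; omega
  have pow_bd : ∀ m, ∀ t : ℕ, 0 < t →
      seqConvPow U (m + 1) t ≤ C' * (1 / 2 : ℝ) ^ m * (t : ℝ) ^ (-ξ) := by
    intro m
    induction m with
    | zero =>
      intro t ht
      rw [pow_one]
      simpa using hUb t ht
    | succ m ih =>
      intro t ht
      have hc : 0 ≤ C' * (1 / 2 : ℝ) ^ m := by positivity
      have h := step (seqConvPow U (m + 1)) (C' * (1 / 2 : ℝ) ^ m) hc (pow_zero m)
        (pow_nn (m + 1)) ih t ht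
      have : seqConvPow U (m + 1 + 1) t = seqConv U (seqConvPow U (m + 1)) t := rfl
      rw [this]
      refine h.trans (le_of_eq ?_)
      ring
  refine ⟨part1, fun t ht => ?_⟩
  have htnn : (0:ℝ) ≤ ((t : ℝ)) ^ (-ξ) := Real.rpow_nonneg (by positivity) _
  -- summability
  have hgsum : Summable (fun m : ℕ => C' * (1 / 2 : ℝ) ^ m * (t : ℝ) ^ (-ξ)) := by
    apply Summable.mul_right
    apply Summable.mul_left
    exact summable_geometric_of_lt_one (by norm_num) (by norm_num)
  have hsumm1 : Summable (fun m : ℕ => seqConvPow U (m + 1) t) := by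
    apply Summable.of_nonneg_of_le (fun m => pow_nn (m + 1) t) (fun m => pow_bd m t ht) hgsum
  have hsumm : Summable (fun m : ℕ => seqConvPow U m t) :=
    (summable_nat_add_iff 1).1 hsumm1
  have h0 : seqConvPow U 0 t = 0 := by
    simp only [seqConvPow]
    rw [if_neg (by omega)]
  rw [Summable.tsum_eq_zero_add hsumm, h0, zero_add]
  have hle : (∑' m : ℕ, seqConvPow U (m + 1) t)
      ≤ ∑' m : ℕ, C' * (1 / 2 : ℝ) ^ m * (t : ℝ) ^ (-ξ) :=
    Summable.tsum_le_tsum (fun m => pow_bd m t ht) hsumm1 hgsum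
  refine hle.trans ?_
  rw [tsum_mul_right, tsum_mul_left, tsum_geometric_of_lt_one (by norm_num) (by norm_num)]
  have : ((1 : ℝ) - 1 / 2)⁻¹ = 2 := by norm_num
  rw [this]
  exact le_of_eq (by ring)
end

section
/- Let U_t ≥ 0 with Σ_{t≥1} U_t < 1 and U_t = O(t^{−ξ}) for some ξ > 1. Then the resolvent convolution kernel satisfies ((1−𝕌)^{-1})_t = O(t^{−ξ}) as t → ∞. -/
namespace Stmt11

variable {U : ℕ → ℝ}

lemma pow_nonneg (hUnn : ∀ t, 0 ≤ U t) : ∀ m t, 0 ≤ seqConvPow U m t := by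
  intro m
  induction m with
  | zero => intro t; dsimp [seqConvPow]; split <;> norm_num
  | succ m ih =>
    intro t
    show 0 ≤ ∑ r ∈ Finset.range (t + 1), U (t - r) * seqConvPow U m r
    exact Finset.sum_nonneg fun r _ => mul_nonneg (hUnn _) (ih r)

lemma pow_vanish (hU0 : U 0 = 0) : ∀ m t, t < m → seqConvPow U m t = 0 := by
  intro m
  induction m with
  | zero => intro t ht; omega
  | succ m ih =>
    intro t ht
    show seqConv U (seqConvPow U m) t = 0
    apply Finset.sum_eq_zero
    intro r hr
    have hr' : r ≤ t := Nat.lt_succ_iff.mp (Finset.mem_range.mp hr)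
    rcases eq_or_lt_of_le hr' with h | h
    · subst h; simp [hU0]
    · rw [ih r (by omega), mul_zero]

lemma R_eq (hU0 : U 0 = 0) (r n : ℕ) (h : r < n) :
    (∑' m, seqConvPow U m r) = ∑ m ∈ Finset.range n, seqConvPow U m r := by
  apply tsum_eq_sum
  intro m hm
  exact pow_vanish hU0 m r (by simpa using Nat.lt_of_lt_of_le h (Nat.le_of_not_lt
    (by simpa [Finset.mem_range] using hm)))

lemma R_nonneg (hUnn : ∀ t, 0 ≤ U t) (r : ℕ) : 0 ≤ ∑' m, seqConvPow U m r :=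
  tsum_nonneg fun m => pow_nonneg hUnn m r

/-- shifted partial sums of `U` are bounded by the total sum -/
lemma shift_sum_le (hU0 : U 0 = 0) (hUnn : ∀ t, 0 ≤ U t) (hUsum : Summable U) (r n : ℕ) :
    ∑ t ∈ Finset.range n, U (t - r) ≤ ∑' t, U t := by
  rcases le_or_gt n r with h | h
  · have : ∀ t ∈ Finset.range n, U (t - r) = 0 := by
      intro t ht
      have : t - r = 0 := by have := Finset.mem_range.mp ht; omega
      rw [this, hU0]
    rw [Finset.sum_eq_zero this]
    exact tsum_nonneg hUnn
  · rw [Finset.range_eq_Ico, ← Finset.sum_Ico_consecutive _ (Nat.zero_le r) h.le]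
    have h1 : ∑ t ∈ Finset.Ico 0 r, U (t - r) = 0 := by
      apply Finset.sum_eq_zero
      intro t ht
      have : t - r = 0 := by have := (Finset.mem_Ico.mp ht).2; omega
      rw [this, hU0]
    have h2 : ∑ t ∈ Finset.Ico r n, U (t - r) = ∑ i ∈ Finset.range (n - r), U i := by
      rw [Finset.sum_Ico_eq_sum_range]
      exact Finset.sum_congr rfl fun i _ => by congr 1; omega
    rw [h1, h2, zero_add]
    exact Summable.sum_le_tsum _ (fun i _ => hUnn i) hUsum

/-- reflected partial sums of `U` are bounded by the total sum -/
lemma reflect_sum_le (hU0 : U 0 = 0) (hUnn : ∀ t, 0 ≤ U t) (hUsum : Summable U) (t : ℕ) :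
    ∑ r ∈ Finset.range t, U (t - r) ≤ ∑' s, U s := by
  have h1 : ∑ r ∈ Finset.range t, U (t - r) = ∑ r ∈ Finset.range t, U (r + 1) := by
    have := Finset.sum_range_reflect (fun r => U (r + 1)) t
    rw [← this]
    apply Finset.sum_congr rfl
    intro j hj
    have hj' := Finset.mem_range.mp hj
    congr 1; omega
  have h2 : ∑ r ∈ Finset.range t, U (r + 1) = ∑ r ∈ Finset.range (t + 1), U r := by
    rw [Finset.sum_range_succ', hU0, add_zero]
  rw [h1, h2]
  exact Summable.sum_le_tsum _ (fun i _ => hUnn i) hUsum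

lemma pow_sum_le (hU0 : U 0 = 0) (hUnn : ∀ t, 0 ≤ U t) (hUsum : Summable U) (m n : ℕ) :
    ∑ t ∈ Finset.range n, seqConvPow U m t ≤ (∑' t, U t) ^ m := by
  have ha0 : 0 ≤ ∑' t, U t := tsum_nonneg hUnn
  induction m with
  | zero =>
    simp only [seqConvPow, pow_zero]
    rcases Nat.eq_zero_or_pos n with h | h
    · subst h; simp
    · rw [Finset.sum_ite_eq' (Finset.range n) 0 (fun _ => (1:ℝ))]
      simp [Finset.mem_range.mpr h]
  | succ m ih =>
    have step1 : ∀ t ∈ Finset.range n, seqConvPow U (m + 1) t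
        = ∑ r ∈ Finset.range n, U (t - r) * seqConvPow U m r := by
      intro t ht
      show ∑ r ∈ Finset.range (t + 1), U (t - r) * seqConvPow U m r = _
      apply Finset.sum_subset
      · intro x hx
        have h1 := Finset.mem_range.mp hx
        have h2 := Finset.mem_range.mp ht
        exact Finset.mem_range.mpr (by omega)
      · intro x _ hx
        have : t - x = 0 := by
          rw [Finset.mem_range] at hx; omega
        rw [this, hU0, zero_mul]
    calc ∑ t ∈ Finset.range n, seqConvPow U (m + 1) t
        = ∑ t ∈ Finset.range n, ∑ r ∈ Finset.range n, U (t - r) * seqConvPow U m r :=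
          Finset.sum_congr rfl step1
      _ = ∑ r ∈ Finset.range n, ∑ t ∈ Finset.range n, U (t - r) * seqConvPow U m r :=
          Finset.sum_comm
      _ = ∑ r ∈ Finset.range n, (∑ t ∈ Finset.range n, U (t - r)) * seqConvPow U m r := by
          simp [Finset.sum_mul]
      _ ≤ ∑ r ∈ Finset.range n, (∑' t, U t) * seqConvPow U m r := by
          apply Finset.sum_le_sum
          intro r _
          exact mul_le_mul_of_nonneg_right (shift_sum_le hU0 hUnn hUsum r n)
            (pow_nonneg hUnn m r)
      _ = (∑' t, U t) * ∑ r ∈ Finset.range n, seqConvPow U m r := by rw [Finset.mul_sum]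
      _ ≤ (∑' t, U t) * (∑' t, U t) ^ m := mul_le_mul_of_nonneg_left ih ha0
      _ = (∑' t, U t) ^ (m + 1) := by ring

lemma R_partial_le (hU0 : U 0 = 0) (hUnn : ∀ t, 0 ≤ U t) (hUsum : Summable U)
    (hUlt : ∑' t, U t < 1) (n : ℕ) :
    ∑ r ∈ Finset.range n, (∑' m, seqConvPow U m r) ≤ (1 - ∑' t, U t)⁻¹ := by
  have ha0 : 0 ≤ ∑' t, U t := tsum_nonneg hUnn
  calc ∑ r ∈ Finset.range n, (∑' m, seqConvPow U m r)
      = ∑ r ∈ Finset.range n, ∑ m ∈ Finset.range n, seqConvPow U m r := by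
        apply Finset.sum_congr rfl
        intro r hr
        exact R_eq hU0 r n (Finset.mem_range.mp hr)
    _ = ∑ m ∈ Finset.range n, ∑ r ∈ Finset.range n, seqConvPow U m r := Finset.sum_comm
    _ ≤ ∑ m ∈ Finset.range n, (∑' t, U t) ^ m :=
        Finset.sum_le_sum fun m _ => pow_sum_le hU0 hUnn hUsum m n
    _ ≤ ∑' m : ℕ, (∑' t, U t) ^ m :=
        Summable.sum_le_tsum _ (fun m _ => _root_.pow_nonneg ha0 m)
          (summable_geometric_of_lt_one ha0 hUlt)
    _ = (1 - ∑' t, U t)⁻¹ := tsum_geometric_of_lt_one ha0 hUlt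

lemma renewal (hU0 : U 0 = 0) (t : ℕ) (ht : 1 ≤ t) :
    (∑' m, seqConvPow U m t) = ∑ r ∈ Finset.range t, U (t - r) * (∑' m, seqConvPow U m r) := by
  rw [R_eq hU0 t (t + 1) (Nat.lt_succ_self t), Finset.sum_range_succ']
  have h0 : seqConvPow U 0 t = 0 := by
    dsimp [seqConvPow]; rw [if_neg (by omega)]
  rw [h0, add_zero]
  have key : ∀ m, seqConvPow U (m + 1) t = ∑ r ∈ Finset.range t, U (t - r) * seqConvPow U m r := by
    intro m
    show ∑ r ∈ Finset.range (t + 1), U (t - r) * seqConvPow U m r = _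
    rw [Finset.sum_range_succ, Nat.sub_self, hU0, zero_mul, add_zero]
  calc ∑ m ∈ Finset.range t, seqConvPow U (m + 1) t
      = ∑ m ∈ Finset.range t, ∑ r ∈ Finset.range t, U (t - r) * seqConvPow U m r :=
        Finset.sum_congr rfl fun m _ => key m
    _ = ∑ r ∈ Finset.range t, ∑ m ∈ Finset.range t, U (t - r) * seqConvPow U m r :=
        Finset.sum_comm
    _ = ∑ r ∈ Finset.range t, U (t - r) * (∑' m, seqConvPow U m r) := by
        apply Finset.sum_congr rfl
        intro r hr
        rw [← Finset.mul_sum, R_eq hU0 r t (Finset.mem_range.mp hr)]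

end Stmt11

/-- Lemma: if `U ≥ 0`, `Σ_{t≥1} U_t < 1` and `U_t = O(t^{−ξ})` with `ξ > 1`, then the
resolvent convolution kernel `((1−𝕌)^{-1})_t = Σ_m (U^{*m})_t` is `O(t^{−ξ})`. -/
theorem stmt_11 (U : ℕ → ℝ) (ξ : ℝ) (hξ : 1 < ξ) (hU0 : U 0 = 0) (hUnn : ∀ t, 0 ≤ U t)
    (hUsum : Summable U) (hUlt : ∑' t, U t < 1)
    (hUb : ∃ C : ℝ, ∀ t : ℕ, 1 ≤ t → U t ≤ C * (t : ℝ) ^ (-ξ)) :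
    ∃ C' : ℝ, ∀ t : ℕ, 1 ≤ t → (∑' m : ℕ, seqConvPow U m t) ≤ C' * (t : ℝ) ^ (-ξ) := by
  classical
  obtain ⟨C0, hC0⟩ := hUb
  set a : ℝ := ∑' t, U t with ha_def
  have ha0 : 0 ≤ a := tsum_nonneg hUnn
  have ha1 : a < 1 := hUlt
  set CU : ℝ := max C0 0 with hCU_def
  have hCU0 : 0 ≤ CU := le_max_right _ _
  have hCUb : ∀ t : ℕ, 1 ≤ t → U t ≤ CU * (t : ℝ) ^ (-ξ) := by
    intro t ht
    refine (hC0 t ht).trans (mul_le_mul_of_nonneg_right (le_max_left _ _) ?_)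
    exact Real.rpow_nonneg (Nat.cast_nonneg t) _
  have hξ0 : (0:ℝ) < ξ := by linarith
  set b : ℝ := ((a + 1) / 2) ^ (1 / ξ) with hb_def
  have hhalf0 : (0:ℝ) < (a + 1) / 2 := by linarith
  have hhalf1 : (a + 1) / 2 < 1 := by linarith
  have hb0 : 0 < b := Real.rpow_pos_of_pos hhalf0 _
  have hbξ : b ^ ξ = (a + 1) / 2 := by
    rw [hb_def, ← Real.rpow_mul hhalf0.le, one_div_mul_cancel (by positivity : ξ ≠ 0),
      Real.rpow_one]
  have hb1 : b < 1 := Real.rpow_lt_one hhalf0.le hhalf1 (by positivity)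
  set δ : ℝ := 1 - b with hδ_def
  have hδ0 : 0 < δ := by simp [hδ_def]; linarith
  set S : ℝ := (1 - a)⁻¹ with hS_def
  have hS0 : 0 < S := by
    rw [hS_def]; exact inv_pos.mpr (by linarith)
  set θ : ℝ := a * b ^ (-ξ) with hθ_def
  have hbneg : b ^ (-ξ) = 2 / (a + 1) := by
    rw [Real.rpow_neg hb0.le, hbξ]
    field_simp
  have hθ1 : θ < 1 := by
    rw [hθ_def, hbneg, mul_div_assoc']
    exact (div_lt_one (by linarith)).mpr (by linarith)
  have hθ0 : 0 ≤ θ := mul_nonneg ha0 (Real.rpow_nonneg hb0.le _)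
  set K : ℝ := CU * δ ^ (-ξ) * S with hK_def
  have hK0 : 0 ≤ K := by positivity
  set C : ℝ := K / (1 - θ) with hC_def
  have hCpos : 0 ≤ C := div_nonneg hK0 (by linarith)
  have hCeq : θ * C + K = C := by
    have h : C * (1 - θ) = K := by
      rw [hC_def, div_mul_cancel₀ _ (by linarith : (1:ℝ) - θ ≠ 0)]
    linear_combination -h
  refine ⟨C, ?_⟩
  intro t
  induction t using Nat.strong_induction_on with
  | _ t IH =>
  intro ht
  have ht0 : (0:ℝ) < (t:ℝ) := by exact_mod_cast ht
  have htpow : (0:ℝ) < (t:ℝ) ^ (-ξ) := Real.rpow_pos_of_pos ht0 _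
  rw [Stmt11.renewal hU0 t ht]
  set R : ℕ → ℝ := fun r => ∑' m, seqConvPow U m r with hR_def
  have hRnn : ∀ r, 0 ≤ R r := fun r => Stmt11.R_nonneg hUnn r
  set T := Finset.range t with hT_def
  set T1 := T.filter (fun r : ℕ => (r:ℝ) < b * t) with hT1_def
  set T2 := T.filter (fun r : ℕ => ¬ (r:ℝ) < b * t) with hT2_def
  have hsplit : ∑ r ∈ T, U (t - r) * R r
      = ∑ r ∈ T1, U (t - r) * R r + ∑ r ∈ T2, U (t - r) * R r :=
    (Finset.sum_filter_add_sum_filter_not T _ _).symm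
  -- Bound part 1
  have hpart1 : ∑ r ∈ T1, U (t - r) * R r ≤ CU * δ ^ (-ξ) * (t:ℝ) ^ (-ξ) * S := by
    have hterm : ∀ r ∈ T1, U (t - r) * R r ≤ (CU * (δ * t) ^ (-ξ)) * R r := by
      intro r hr
      rw [hT1_def, Finset.mem_filter, hT_def, Finset.mem_range] at hr
      obtain ⟨hrt, hrb⟩ := hr
      have hcast : ((t - r : ℕ) : ℝ) = (t:ℝ) - r := by
        rw [Nat.cast_sub hrt.le]
      have hge : δ * t ≤ ((t - r : ℕ) : ℝ) := by
        rw [hcast, hδ_def]; nlinarith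
      have hδt : 0 < δ * t := by positivity
      have h1r : 1 ≤ t - r := by omega
      have hU' : U (t - r) ≤ CU * (δ * t) ^ (-ξ) := by
        refine (hCUb (t - r) h1r).trans (mul_le_mul_of_nonneg_left ?_ hCU0)
        exact Real.rpow_le_rpow_of_nonpos hδt hge (by linarith)
      exact mul_le_mul_of_nonneg_right hU' (hRnn r)
    calc ∑ r ∈ T1, U (t - r) * R r ≤ ∑ r ∈ T1, (CU * (δ * t) ^ (-ξ)) * R r :=
          Finset.sum_le_sum hterm
      _ = (CU * (δ * t) ^ (-ξ)) * ∑ r ∈ T1, R r := by rw [Finset.mul_sum]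
      _ ≤ (CU * (δ * t) ^ (-ξ)) * S := by
          apply mul_le_mul_of_nonneg_left _ (by positivity)
          calc ∑ r ∈ T1, R r ≤ ∑ r ∈ T, R r :=
                Finset.sum_le_sum_of_subset_of_nonneg (Finset.filter_subset _ _)
                  (fun r _ _ => hRnn r)
            _ ≤ S := Stmt11.R_partial_le hU0 hUnn hUsum hUlt t
      _ = CU * δ ^ (-ξ) * (t:ℝ) ^ (-ξ) * S := by
          rw [Real.mul_rpow hδ0.le ht0.le]; ring
  -- Bound part 2
  have hpart2 : ∑ r ∈ T2, U (t - r) * R r ≤ a * (C * (b ^ (-ξ) * (t:ℝ) ^ (-ξ))) := by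
    have hterm : ∀ r ∈ T2, U (t - r) * R r ≤ U (t - r) * (C * (b ^ (-ξ) * (t:ℝ) ^ (-ξ))) := by
      intro r hr
      rw [hT2_def, Finset.mem_filter, hT_def, Finset.mem_range, not_lt] at hr
      obtain ⟨hrt, hrb⟩ := hr
      have hbt : 0 < b * t := by positivity
      have hr1 : 1 ≤ r := by
        by_contra h
        push_neg at h
        interval_cases r
        simp at hrb
        nlinarith
      have hRr : R r ≤ C * (r:ℝ) ^ (-ξ) := IH r hrt hr1
      have hrpow : (r:ℝ) ^ (-ξ) ≤ (b * t) ^ (-ξ) :=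
        Real.rpow_le_rpow_of_nonpos hbt hrb (by linarith)
      have : R r ≤ C * (b ^ (-ξ) * (t:ℝ) ^ (-ξ)) := by
        rw [← Real.mul_rpow hb0.le ht0.le]
        exact hRr.trans (mul_le_mul_of_nonneg_left hrpow hCpos)
      exact mul_le_mul_of_nonneg_left this (hUnn _)
    calc ∑ r ∈ T2, U (t - r) * R r
        ≤ ∑ r ∈ T2, U (t - r) * (C * (b ^ (-ξ) * (t:ℝ) ^ (-ξ))) := Finset.sum_le_sum hterm
      _ = (∑ r ∈ T2, U (t - r)) * (C * (b ^ (-ξ) * (t:ℝ) ^ (-ξ))) := by rw [Finset.sum_mul]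
      _ ≤ a * (C * (b ^ (-ξ) * (t:ℝ) ^ (-ξ))) := by
          apply mul_le_mul_of_nonneg_right _ (by positivity)
          calc ∑ r ∈ T2, U (t - r) ≤ ∑ r ∈ T, U (t - r) :=
                Finset.sum_le_sum_of_subset_of_nonneg (Finset.filter_subset _ _)
                  (fun r _ _ => hUnn _)
            _ ≤ a := Stmt11.reflect_sum_le hU0 hUnn hUsum t
  calc ∑ r ∈ T, U (t - r) * R r
      = ∑ r ∈ T1, U (t - r) * R r + ∑ r ∈ T2, U (t - r) * R r := hsplit
    _ ≤ CU * δ ^ (-ξ) * (t:ℝ) ^ (-ξ) * S + a * (C * (b ^ (-ξ) * (t:ℝ) ^ (-ξ))) :=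
        add_le_add hpart1 hpart2
    _ = (θ * C + K) * (t:ℝ) ^ (-ξ) := by rw [hθ_def, hK_def]; ring
    _ = C * (t:ℝ) ^ (-ξ) := by rw [hCeq]
end

section
/- Let U_t ≥ 0 with Σ U_t = 0 (noiseless) or more generally with U_Σ < 1 and U_t = O(t^{−ξ_U}), and suppose V_t = C_V t^{−ξ_V}(1 + o(1)) with ξ_U > max(ξ_V, 1). Then L_t = ½ Σ_{s=1}^t ((1−𝕌)^{-1})_s V_{t−s+1} satisfies L_t = (C_V / (2(1 − U_Σ))) t^{−ξ_V} (1 + o(1)) as t → ∞. -/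
/-!
Let `R = (1 - 𝕌)⁻¹`, inverted in `ℝ⟦X⟧`, be the resolvent kernel. The recursion for `L` is a
renewal equation, so `L_t = ½ ∑_{s ≤ t} R_s V_{t-s+1}`. Since `U_Σ < 1`, `R` is nonnegative and summable with
`∑ R = (1 - U_Σ)⁻¹`, and it inherits the decay of `U`: splitting `R_t = ∑_{s ≥ 1} U_s R_{t-s}`
at `s = εt`, the small `s` contribute at most `(1 - ε)^{-ξ_U} U_Σ < 1` times the inductive bound
`M (t+1)^{-ξ_U}`, and the large `s` at most `C (εt)^{-ξ_U} ∑ R`. This gives `R_t = O(t^{-ξ_U})`.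

In `L_t t^{ξ_V}`, the terms with `s ≤ t/2` converge to `½ R_s C_V` and are dominated by a multiple
of `R_s`, so Tannery's theorem gives the limit `½ C_V ∑ R`. For the terms with `s > t/2`, fix
`a ∈ (max ξ_V 1, ξ_U)`: then `R_s = O(t^{-ξ_U})` and `V_u t^{ξ_V} = O(t^a u^{-a})` for
`u = t - s + 1 ≤ t`, so they sum to `O(t^{a-ξ_U}) → 0`.
-/

open Finset Filter Topology PowerSeries

lemma Real.rpow_le_two_rpow_abs {r ξ : ℝ} (h1 : 1 / 2 ≤ r) (h2 : r ≤ 2) : r ^ ξ ≤ 2 ^ |ξ| := by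
  rcases le_or_gt 0 ξ with hξ | hξ
  · rw [abs_of_nonneg hξ]
    exact Real.rpow_le_rpow (by linarith) h2 hξ
  · rw [abs_of_neg hξ, Real.rpow_neg zero_le_two, ← Real.inv_rpow zero_le_two]
    exact Real.rpow_le_rpow_of_nonpos (by norm_num) (by linarith) hξ.le

lemma Real.rpow_neg_le_two_rpow_mul {x ξ : ℝ} (hx : 1 ≤ x) (hξ : 0 ≤ ξ) :
    x ^ (-ξ) ≤ 2 ^ ξ * (x + 1) ^ (-ξ) := calc
  x ^ (-ξ) = 2 ^ ξ * (2 * x) ^ (-ξ) := by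
    rw [Real.mul_rpow zero_le_two (by linarith), ← mul_assoc, ← Real.rpow_add zero_lt_two,
      add_neg_cancel, Real.rpow_zero, one_mul]
  _ ≤ 2 ^ ξ * (x + 1) ^ (-ξ) := mul_le_mul_of_nonneg_left
    (Real.rpow_le_rpow_of_nonpos (by linarith) (by linarith) (by linarith)) (by positivity)

lemma Real.summable_nat_add_one_rpow_neg {a : ℝ} (ha : 1 < a) :
    Summable fun n : ℕ => ((n : ℝ) + 1) ^ (-a) := by
  have h := (summable_nat_add_iff 1).mpr (Real.summable_nat_rpow.mpr (neg_lt_neg ha))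
  exact h.congr fun n => by push_cast; rfl

lemma Finset.sum_Icc_one_eq_sum_range {M : Type*} [AddCommMonoid M] {f : ℕ → M} (hf : f 0 = 0)
    (t : ℕ) : ∑ s ∈ Icc 1 t, f s = ∑ s ∈ range (t + 1), f s := by
  rw [range_eq_Ico, sum_eq_sum_Ico_succ_bot (Nat.succ_pos t), hf, zero_add]
  rfl

lemma Finset.sum_comp_sub_le_sum_range {M : Type*} [AddCommMonoid M] [PartialOrder M]
    [IsOrderedAddMonoid M] {g : ℕ → M} (hg : ∀ n, 0 ≤ g n) {s : Finset ℕ} {t : ℕ}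
    (hs : s ⊆ range (t + 1)) : ∑ k ∈ s, g (t - k) ≤ ∑ k ∈ range (t + 1), g k := calc
  _ ≤ ∑ k ∈ range (t + 1), g (t - k) := sum_le_sum_of_subset_of_nonneg hs fun _ _ _ => hg _
  _ = _ := by simpa using sum_range_reflect g (t + 1)

lemma PowerSeries.coeff_mk_mul_mk {R : Type*} [Semiring R] (f g : ℕ → R) (n : ℕ) :
    coeff n (PowerSeries.mk f * PowerSeries.mk g) = ∑ k ∈ range (n + 1), f k * g (n - k) := by
  rw [coeff_mul, Nat.sum_antidiagonal_eq_sum_range_succ_mk]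
  simp only [coeff_mk]

lemma rpow_neg_sub_add_one_le {ξ ε : ℝ} (hξ : 0 ≤ ξ) (hε : 0 ≤ ε) (hε1 : ε < 1) {s t : ℕ}
    (hst : s ≤ t) (hs : (s : ℝ) ≤ ε * t) :
    (((t - s : ℕ) : ℝ) + 1) ^ (-ξ) ≤ (1 - ε) ^ (-ξ) * ((t : ℝ) + 1) ^ (-ξ) := by
  have hgap : (1 - ε) * ((t : ℝ) + 1) ≤ ((t - s : ℕ) : ℝ) + 1 := by
    rw [Nat.cast_sub hst]; nlinarith
  rw [← Real.mul_rpow (by linarith) (by positivity)]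
  exact Real.rpow_le_rpow_of_nonpos (by nlinarith) hgap (by linarith)

lemma rpow_neg_le_of_mul_lt {ξ ε : ℝ} (hξ : 0 ≤ ξ) (hε : 0 < ε) {s t : ℕ} (ht : 1 ≤ t)
    (hs : ε * t < s) : (s : ℝ) ^ (-ξ) ≤ ε ^ (-ξ) * 2 ^ ξ * ((t : ℝ) + 1) ^ (-ξ) := calc
  (s : ℝ) ^ (-ξ) ≤ (ε * t) ^ (-ξ) :=
    Real.rpow_le_rpow_of_nonpos (by positivity) hs.le (by linarith)
  _ = ε ^ (-ξ) * (t : ℝ) ^ (-ξ) := Real.mul_rpow hε.le (Nat.cast_nonneg t)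
  _ ≤ ε ^ (-ξ) * (2 ^ ξ * ((t : ℝ) + 1) ^ (-ξ)) := mul_le_mul_of_nonneg_left
    (Real.rpow_neg_le_two_rpow_mul (by exact_mod_cast ht) hξ) (by positivity)
  _ = _ := (mul_assoc _ _ _).symm

noncomputable def resolventKernel (U : ℕ → ℝ) (n : ℕ) : ℝ :=
  coeff n (1 - PowerSeries.mk U)⁻¹

section ResolventKernel

variable {U : ℕ → ℝ}

lemma one_sub_mk_mul_mk_resolventKernel (hU0 : U 0 = 0) :
    (1 - PowerSeries.mk U) * PowerSeries.mk (resolventKernel U) = 1 := by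
  rw [show PowerSeries.mk (resolventKernel U) = (1 - PowerSeries.mk U)⁻¹ from
    ext fun n => coeff_mk n _]
  exact PowerSeries.mul_inv_cancel _ (by simp [hU0])

lemma sum_range_mul_resolventKernel (hU0 : U 0 = 0) (n : ℕ) :
    ∑ k ∈ range (n + 1), U k * resolventKernel U (n - k)
      = resolventKernel U n - if n = 0 then 1 else 0 := by
  have h := congrArg (coeff n) (one_sub_mk_mul_mk_resolventKernel hU0)
  rw [sub_mul, one_mul, map_sub, coeff_mk_mul_mk, coeff_mk, coeff_one] at h
  linarith

lemma resolventKernel_zero (hU0 : U 0 = 0) : resolventKernel U 0 = 1 := by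
  have h := sum_range_mul_resolventKernel hU0 0
  simp only [zero_add, range_one, sum_singleton, hU0, zero_mul, if_true] at h
  linarith

lemma resolventKernel_eq_sum_Icc (hU0 : U 0 = 0) {t : ℕ} (ht : 1 ≤ t) :
    resolventKernel U t = ∑ s ∈ Icc 1 t, U s * resolventKernel U (t - s) := by
  rw [sum_Icc_one_eq_sum_range (by simp [hU0]), sum_range_mul_resolventKernel hU0,
    if_neg (by omega), sub_zero]

theorem eq_sum_resolventKernel_mul_of_renewal (hU0 : U 0 = 0) {X g : ℕ → ℝ}
    (hX : ∀ t, X t = g t + ∑ s ∈ Icc 1 t, U s * X (t - s)) (t : ℕ) :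
    X t = ∑ k ∈ range (t + 1), resolventKernel U k * g (t - k) := by
  have hser : PowerSeries.mk X = PowerSeries.mk g + PowerSeries.mk U * PowerSeries.mk X := by
    ext n
    rw [map_add, coeff_mk_mul_mk, coeff_mk, coeff_mk, hX n,
      sum_Icc_one_eq_sum_range (by simp [hU0])]
  have hsol : PowerSeries.mk X = PowerSeries.mk (resolventKernel U) * PowerSeries.mk g := calc
    _ = PowerSeries.mk (resolventKernel U) * ((1 - PowerSeries.mk U) * PowerSeries.mk X) := by
      rw [← mul_assoc, mul_comm _ (1 - _), one_sub_mk_mul_mk_resolventKernel hU0, one_mul]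
    _ = _ := by rw [sub_mul, one_mul, sub_eq_of_eq_add hser]
  simpa only [coeff_mk, coeff_mk_mul_mk] using congrArg (coeff t) hsol

lemma resolventKernel_nonneg (hU0 : U 0 = 0) (hU : ∀ t, 0 ≤ U t) (t : ℕ) :
    0 ≤ resolventKernel U t := by
  induction t using Nat.strong_induction_on with
  | _ t ih =>
    rcases Nat.eq_zero_or_pos t with rfl | ht
    · rw [resolventKernel_zero hU0]; exact zero_le_one
    · rw [resolventKernel_eq_sum_Icc hU0 ht]
      exact sum_nonneg fun s hs => mul_nonneg (hU s) (ih _ (by simp at hs; omega))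

lemma sum_range_resolventKernel_le (hU0 : U 0 = 0) (hU : ∀ t, 0 ≤ U t) (hUsum : Summable U)
    (hUlt : ∑' t, U t < 1) (N : ℕ) :
    ∑ t ∈ range N, resolventKernel U t ≤ (1 - ∑' t, U t)⁻¹ := by
  set S := ∑ t ∈ range N, resolventKernel U t
  have hR := resolventKernel_nonneg hU0 hU
  have hS : 0 ≤ S := sum_nonneg fun t _ => hR t
  have hconv : S - 1 ≤ (∑' t, U t) * S := calc
    S - 1 ≤ S - ∑ t ∈ range N, if t = 0 then (1 : ℝ) else 0 := by
      rw [sum_ite_eq']; split_ifs <;> linarith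
    _ = ∑ m ∈ range N, ∑ k ∈ range (m + 1), U k * resolventKernel U (m - k) := by
      simp only [sum_range_mul_resolventKernel hU0, sum_sub_distrib, S]
    _ = ∑ m ∈ range N, U m * ∑ k ∈ range (N - m), resolventKernel U k := by
      simp only [mul_sum]
      exact sum_range_diag_flip N fun k j => U k * resolventKernel U j
    _ ≤ ∑ m ∈ range N, U m * S := by
      gcongr with m
      · exact hU m
      · exact sum_le_sum_of_subset_of_nonneg (range_subset_range.mpr (Nat.sub_le N m))
          fun t _ _ => hR t
    _ ≤ (∑' t, U t) * S := by
      rw [← sum_mul]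
      exact mul_le_mul_of_nonneg_right (hUsum.sum_le_tsum _ fun t _ => hU t) hS
  rw [← one_div, le_div_iff₀ (by linarith)]
  linarith

lemma summable_resolventKernel (hU0 : U 0 = 0) (hU : ∀ t, 0 ≤ U t) (hUsum : Summable U)
    (hUlt : ∑' t, U t < 1) : Summable (resolventKernel U) :=
  summable_of_sum_range_le (resolventKernel_nonneg hU0 hU)
    (sum_range_resolventKernel_le hU0 hU hUsum hUlt)

lemma tsum_resolventKernel (hU0 : U 0 = 0) (hU : ∀ t, 0 ≤ U t) (hUsum : Summable U)
    (hUlt : ∑' t, U t < 1) : ∑' t, resolventKernel U t = (1 - ∑' t, U t)⁻¹ := by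
  have hR := summable_resolventKernel hU0 hU hUsum hUlt
  have hcauchy : (∑' t, U t) * ∑' t, resolventKernel U t = ∑' t, resolventKernel U t - 1 := by
    rw [tsum_mul_tsum_eq_tsum_sum_range_of_summable_norm hUsum.norm hR.norm]
    simp only [sum_range_mul_resolventKernel hU0]
    rw [hR.tsum_sub (summable_of_ne_finset_zero (s := {0}) fun n hn =>
      if_neg (by simpa using hn)), tsum_ite_eq]
  exact eq_inv_of_mul_eq_one_left (by linear_combination -hcauchy)

lemma resolventKernel_le_of_split (hU0 : U 0 = 0) (hU : ∀ t, 0 ≤ U t) (hUsum : Summable U)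
    (hUlt : ∑' t, U t < 1) {t : ℕ} (ht : 1 ≤ t) {r a b : ℝ} (ha : 0 ≤ a) (hb : 0 ≤ b)
    (hsmall : ∀ s ∈ Icc 1 t, (s : ℝ) ≤ r → resolventKernel U (t - s) ≤ a)
    (hlarge : ∀ s ∈ Icc 1 t, r < s → U s ≤ b) :
    resolventKernel U t ≤ (∑' t, U t) * a + b * (1 - ∑' t, U t)⁻¹ := by
  have hR := resolventKernel_nonneg hU0 hU
  have hterm : ∀ s ∈ Icc 1 t,
      U s * resolventKernel U (t - s) ≤ U s * a + b * resolventKernel U (t - s) := by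
    intro s hs
    by_cases hsr : (s : ℝ) ≤ r
    · exact (mul_le_mul_of_nonneg_left (hsmall s hs hsr) (hU s)).trans
        (le_add_of_nonneg_right (mul_nonneg hb (hR _)))
    · exact (mul_le_mul_of_nonneg_right (hlarge s hs (not_le.mp hsr)) (hR _)).trans
        (le_add_of_nonneg_left (mul_nonneg (hU s) ha))
  have hsumR : ∑ s ∈ Icc 1 t, resolventKernel U (t - s) ≤ (1 - ∑' t, U t)⁻¹ :=
    (sum_comp_sub_le_sum_range hR fun s hs => by simp at hs ⊢; omega).trans
      (sum_range_resolventKernel_le hU0 hU hUsum hUlt _)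
  calc resolventKernel U t = ∑ s ∈ Icc 1 t, U s * resolventKernel U (t - s) :=
        resolventKernel_eq_sum_Icc hU0 ht
    _ ≤ ∑ s ∈ Icc 1 t, (U s * a + b * resolventKernel U (t - s)) := sum_le_sum hterm
    _ = (∑ s ∈ Icc 1 t, U s) * a + b * ∑ s ∈ Icc 1 t, resolventKernel U (t - s) := by
      rw [sum_add_distrib, sum_mul, mul_sum]
    _ ≤ _ := add_le_add (mul_le_mul_of_nonneg_right (hUsum.sum_le_tsum _ fun t _ => hU t) ha)
        (mul_le_mul_of_nonneg_left hsumR hb)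

theorem resolventKernel_le_mul_rpow (hU0 : U 0 = 0) (hU : ∀ t, 0 ≤ U t) (hUsum : Summable U)
    (hUlt : ∑' t, U t < 1) {ξ : ℝ} (hξ : 0 ≤ ξ)
    (hUb : ∃ C : ℝ, ∀ t : ℕ, 1 ≤ t → U t ≤ C * (t : ℝ) ^ (-ξ)) :
    ∃ M, ∀ t, resolventKernel U t ≤ M * ((t : ℝ) + 1) ^ (-ξ) := by
  obtain ⟨C, hC⟩ := hUb
  have hC0 : 0 ≤ C := by simpa using (hU 1).trans (hC 1 le_rfl)
  obtain ⟨ε, hθ, hε, hε1⟩ : ∃ ε : ℝ, (1 - ε) ^ (-ξ) * ∑' t, U t < 1 ∧ 0 < ε ∧ ε < 1 := by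
    have hcont : ContinuousAt (fun ε : ℝ => (1 - ε) ^ (-ξ) * ∑' t, U t) 0 := by
      fun_prop (disch := norm_num)
    have hev := hcont.eventually (gt_mem_nhds (by simpa using hUlt))
    exact ((hev.filter_mono nhdsWithin_le_nhds).and (Ioo_mem_nhdsGT one_pos)).exists
  set θ := (1 - ε) ^ (-ξ) * ∑' t, U t
  set K := C * ε ^ (-ξ) * 2 ^ ξ * (1 - ∑' t, U t)⁻¹
  set M := max 1 (K / (1 - θ))
  have hKM : K ≤ M * (1 - θ) := (div_le_iff₀ (by linarith)).mp (le_max_right _ _)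
  refine ⟨M, fun t => ?_⟩
  induction t using Nat.strong_induction_on with
  | _ t ih =>
    rcases Nat.eq_zero_or_pos t with rfl | ht
    · simp [M, resolventKernel_zero hU0]
    set w := ((t : ℝ) + 1) ^ (-ξ)
    have hsmall : ∀ s ∈ Icc 1 t, (s : ℝ) ≤ ε * t →
        resolventKernel U (t - s) ≤ M * ((1 - ε) ^ (-ξ) * w) := fun s hs hsε =>
      (ih _ (by simp at hs; omega)).trans <| mul_le_mul_of_nonneg_left
        (rpow_neg_sub_add_one_le hξ hε.le hε1 (mem_Icc.mp hs).2 hsε) (by positivity)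
    have hlarge : ∀ s ∈ Icc 1 t, ε * t < s → U s ≤ C * (ε ^ (-ξ) * 2 ^ ξ * w) :=
      fun s hs hsε => (hC s (mem_Icc.mp hs).1).trans
        (mul_le_mul_of_nonneg_left (rpow_neg_le_of_mul_lt hξ hε ht hsε) hC0)
    calc resolventKernel U t
        ≤ (∑' t, U t) * (M * ((1 - ε) ^ (-ξ) * w))
          + C * (ε ^ (-ξ) * 2 ^ ξ * w) * (1 - ∑' t, U t)⁻¹ :=
          resolventKernel_le_of_split hU0 hU hUsum hUlt ht (by positivity) (by positivity)
            hsmall hlarge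
      _ = (M * θ + K) * w := by ring
      _ ≤ M * w := mul_le_mul_of_nonneg_right (by linarith) (by positivity)

end ResolventKernel

section ConvolutionAsymptotics

variable {R V : ℕ → ℝ} {ξV C : ℝ}

lemma exists_abs_mul_rpow_le_of_tendsto
    (hV : Tendsto (fun t : ℕ => V t * (t : ℝ) ^ ξV) atTop (𝓝 C)) :
    ∃ B, 0 ≤ B ∧ ∀ u : ℕ, 1 ≤ u → ∀ x : ℝ, 0 < x → |V u| * x ^ ξV ≤ B * (x / u) ^ ξV := by
  obtain ⟨B, hB⟩ := hV.abs.bddAbove_range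
  refine ⟨B, (abs_nonneg _).trans (hB ⟨0, rfl⟩), fun u hu x hx => ?_⟩
  have hu0 : (0 : ℝ) < u := by exact_mod_cast hu
  calc |V u| * x ^ ξV = |V u * (u : ℝ) ^ ξV| * (x / u) ^ ξV := by
        rw [abs_mul, abs_of_pos (Real.rpow_pos_of_pos hu0 _), Real.div_rpow hx.le hu0.le]
        field_simp
    _ ≤ B * (x / u) ^ ξV := by gcongr; exact hB ⟨u, rfl⟩

lemma tendsto_comp_sub_add_one_mul_rpow
    (hV : Tendsto (fun t : ℕ => V t * (t : ℝ) ^ ξV) atTop (𝓝 C)) (s : ℕ) :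
    Tendsto (fun t : ℕ => V (t - s + 1) * (t : ℝ) ^ ξV) atTop (𝓝 C) := by
  have hshift : Tendsto (fun t : ℕ => t - s + 1) atTop atTop :=
    tendsto_atTop_atTop.mpr fun b => ⟨b + s, fun a ha => by omega⟩
  have hcast : ∀ᶠ t : ℕ in atTop, ((t - s + 1 : ℕ) : ℝ) = t + (1 - s) := by
    filter_upwards [eventually_ge_atTop s] with t ht
    push_cast [ht]; ring
  have hratio : Tendsto (fun t : ℕ => ((t : ℝ) / ((t - s + 1 : ℕ) : ℝ)) ^ ξV) atTop (𝓝 1) := by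
    have h : Tendsto (fun t : ℕ => (t : ℝ) / ((t - s + 1 : ℕ) : ℝ)) atTop (𝓝 1) :=
      (tendsto_natCast_div_add_atTop (1 - s : ℝ)).congr' (by
        filter_upwards [hcast] with t ht; rw [ht])
    simpa using h.rpow_const (p := ξV) (Or.inl one_ne_zero)
  have h := (hV.comp hshift).mul hratio
  rw [mul_one] at h
  refine h.congr' ?_
  filter_upwards [eventually_ge_atTop s] with t ht
  have hu : (0 : ℝ) < ((t - s + 1 : ℕ) : ℝ) := by positivity
  simp only [Function.comp_apply]
  rw [Real.div_rpow (Nat.cast_nonneg t) hu.le]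
  field_simp

lemma tendsto_sum_range_half_mul_rpow (hR : Summable R)
    (hV : Tendsto (fun t : ℕ => V t * (t : ℝ) ^ ξV) atTop (𝓝 C)) :
    Tendsto (fun t : ℕ => ∑ s ∈ range (t / 2 + 1), R s * (V (t - s + 1) * (t : ℝ) ^ ξV))
      atTop (𝓝 ((∑' s, R s) * C)) := by
  obtain ⟨B, hB0, hB⟩ := exists_abs_mul_rpow_le_of_tendsto hV
  set f : ℕ → ℕ → ℝ := fun t s =>
    if s ≤ t / 2 then R s * (V (t - s + 1) * (t : ℝ) ^ ξV) else 0
  have hf : ∀ t, ∑' s, f t s = ∑ s ∈ range (t / 2 + 1), R s * (V (t - s + 1) * (t : ℝ) ^ ξV) :=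
    fun t => by
      rw [tsum_eq_sum (s := range (t / 2 + 1)) fun s hs => if_neg (by simpa using hs)]
      exact sum_congr rfl fun s hs => if_pos (by simpa [Nat.lt_succ_iff] using hs)
  simp only [← hf, ← tsum_mul_right]
  refine tendsto_tsum_of_dominated_convergence (hR.abs.mul_right (B * 2 ^ |ξV|))
    (fun s => ?_) ?_
  · refine ((tendsto_comp_sub_add_one_mul_rpow hV s).const_mul (R s)).congr' ?_
    filter_upwards [eventually_ge_atTop (2 * s)] with t ht
    exact (if_pos (by omega)).symm
  · filter_upwards [eventually_ge_atTop 1] with t ht s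
    simp only [f]
    split_ifs with hs
    · have ht0 : (0 : ℝ) < t := by exact_mod_cast ht
      have hu : (0 : ℝ) < ((t - s + 1 : ℕ) : ℝ) := by positivity
      have hratio : (t : ℝ) / ((t - s + 1 : ℕ) : ℝ) ≤ 2 := by
        rw [div_le_iff₀ hu]; exact_mod_cast (by omega : t ≤ 2 * (t - s + 1))
      have hratio' : 1 / 2 ≤ (t : ℝ) / ((t - s + 1 : ℕ) : ℝ) := by
        have : ((t - s + 1 : ℕ) : ℝ) ≤ 2 * t := by exact_mod_cast (by omega : t - s + 1 ≤ 2 * t)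
        rw [le_div_iff₀ hu]; linarith
      rw [Real.norm_eq_abs, abs_mul, abs_mul,
        abs_of_nonneg (by positivity : (0 : ℝ) ≤ (t : ℝ) ^ ξV)]
      refine mul_le_mul_of_nonneg_left ?_ (abs_nonneg _)
      calc |V (t - s + 1)| * (t : ℝ) ^ ξV ≤ B * ((t : ℝ) / ((t - s + 1 : ℕ) : ℝ)) ^ ξV :=
            hB _ (by omega) _ ht0
        _ ≤ B * 2 ^ |ξV| := by gcongr; exact Real.rpow_le_two_rpow_abs hratio' hratio
    · rw [norm_zero]; positivity

lemma abs_mul_mul_rpow_le_of_lt_two_mul {M ξU B a : ℝ}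
    (hR : ∀ s : ℕ, |R s| ≤ M * ((s : ℝ) + 1) ^ (-ξU))
    (hB : ∀ u : ℕ, 1 ≤ u → ∀ x : ℝ, 0 < x → |V u| * x ^ ξV ≤ B * (x / u) ^ ξV) (hM0 : 0 ≤ M)
    (hB0 : 0 ≤ B) (hξU : 0 ≤ ξU) (haV : ξV ≤ a) {t s : ℕ} (hts : t < 2 * s) (hst : s ≤ t) :
    |R s * (V (t - s + 1) * (t : ℝ) ^ ξV)|
      ≤ M * 2 ^ ξU * B * (t : ℝ) ^ (a - ξU) * (((t - s : ℕ) : ℝ) + 1) ^ (-a) := by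
  have ht0 : (0 : ℝ) < t := by exact_mod_cast (by omega : 0 < t)
  have hut : ((t - s : ℕ) : ℝ) + 1 ≤ t := by exact_mod_cast (by omega : t - s + 1 ≤ t)
  have hRs : |R s| ≤ M * 2 ^ ξU * (t : ℝ) ^ (-ξU) := calc
    |R s| ≤ M * ((t : ℝ) / 2) ^ (-ξU) := by
      have : (t : ℝ) ≤ 2 * s := by exact_mod_cast hts.le
      exact (hR s).trans <| mul_le_mul_of_nonneg_left
        (Real.rpow_le_rpow_of_nonpos (by positivity) (by linarith) (by linarith)) hM0
    _ = M * 2 ^ ξU * (t : ℝ) ^ (-ξU) := by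
      rw [Real.div_rpow ht0.le zero_le_two, Real.rpow_neg zero_le_two, div_inv_eq_mul]; ring
  have hVu : |V (t - s + 1)| * (t : ℝ) ^ ξV
      ≤ B * ((t : ℝ) ^ a * (((t - s : ℕ) : ℝ) + 1) ^ (-a)) := calc
    _ ≤ B * ((t : ℝ) / (((t - s : ℕ) : ℝ) + 1)) ^ ξV := by
      simpa using hB (t - s + 1) (by omega) _ ht0
    _ ≤ B * ((t : ℝ) / (((t - s : ℕ) : ℝ) + 1)) ^ a := by
      gcongr
      exact (one_le_div (by positivity)).mpr hut
    _ = B * ((t : ℝ) ^ a * (((t - s : ℕ) : ℝ) + 1) ^ (-a)) := by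
      rw [Real.div_rpow ht0.le (by positivity), Real.rpow_neg (by positivity), div_eq_mul_inv]
  rw [abs_mul, abs_mul, abs_of_nonneg (by positivity : (0 : ℝ) ≤ (t : ℝ) ^ ξV)]
  calc _ ≤ (M * 2 ^ ξU * (t : ℝ) ^ (-ξU))
        * (B * ((t : ℝ) ^ a * (((t - s : ℕ) : ℝ) + 1) ^ (-a))) :=
        mul_le_mul hRs hVu (by positivity) (by positivity)
    _ = M * 2 ^ ξU * B * ((t : ℝ) ^ a * (t : ℝ) ^ (-ξU)) * (((t - s : ℕ) : ℝ) + 1) ^ (-a) := by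
        ring
    _ = _ := by rw [← Real.rpow_add ht0, ← sub_eq_add_neg]

lemma tendsto_sum_Ico_half_mul_rpow {M ξU : ℝ}
    (hR : ∀ s : ℕ, |R s| ≤ M * ((s : ℝ) + 1) ^ (-ξU))
    (hV : Tendsto (fun t : ℕ => V t * (t : ℝ) ^ ξV) atTop (𝓝 C)) (hξ : max ξV 1 < ξU) :
    Tendsto (fun t : ℕ => ∑ s ∈ Ico (t / 2 + 1) (t + 1), R s * (V (t - s + 1) * (t : ℝ) ^ ξV))
      atTop (𝓝 0) := by
  obtain ⟨B, hB0, hB⟩ := exists_abs_mul_rpow_le_of_tendsto hV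
  have hM0 : 0 ≤ M := by simpa using (abs_nonneg _).trans (hR 0)
  obtain ⟨a, ha1, haV, haU⟩ : ∃ a, 1 < a ∧ ξV ≤ a ∧ a < ξU := by
    obtain ⟨hξV, hξ1⟩ := max_lt_iff.mp hξ
    exact ⟨(max ξV 1 + ξU) / 2, by grind, by grind, by grind⟩
  set g : ℕ → ℝ := fun n => ((n : ℝ) + 1) ^ (-a)
  have hg : Summable g := Real.summable_nat_add_one_rpow_neg ha1
  set K := M * 2 ^ ξU * B
  have hdecay : Tendsto (fun t : ℕ => K * (∑' n, g n) * (t : ℝ) ^ (a - ξU)) atTop (𝓝 0) := by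
    have h := ((tendsto_rpow_neg_atTop (y := ξU - a) (by linarith)).comp
      tendsto_natCast_atTop_atTop).const_mul (K * ∑' n, g n)
    simpa only [mul_zero, neg_sub, Function.comp_def] using h
  refine squeeze_zero_norm' (Eventually.of_forall fun t => ?_) hdecay
  calc _ ≤ ∑ s ∈ Ico (t / 2 + 1) (t + 1), ‖R s * (V (t - s + 1) * (t : ℝ) ^ ξV)‖ :=
        norm_sum_le _ _
    _ ≤ ∑ s ∈ Ico (t / 2 + 1) (t + 1), K * (t : ℝ) ^ (a - ξU) * g (t - s) := by
        refine sum_le_sum fun s hs => ?_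
        obtain ⟨hs1, hs2⟩ := mem_Ico.mp hs
        exact abs_mul_mul_rpow_le_of_lt_two_mul hR hB hM0 hB0 (by linarith) haV (by omega)
          (by omega)
    _ ≤ K * (t : ℝ) ^ (a - ξU) * ∑' n, g n := by
        rw [← mul_sum]
        refine mul_le_mul_of_nonneg_left ?_ (by positivity)
        refine (sum_comp_sub_le_sum_range (fun n => by positivity) fun s hs => ?_).trans
          (hg.sum_le_tsum _ fun n _ => by positivity)
        simp only [mem_Ico, mem_range] at hs ⊢; omega
    _ = _ := by ring

theorem tendsto_sum_range_mul_mul_rpow {M ξU : ℝ}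
    (hR : ∀ s : ℕ, |R s| ≤ M * ((s : ℝ) + 1) ^ (-ξU))
    (hV : Tendsto (fun t : ℕ => V t * (t : ℝ) ^ ξV) atTop (𝓝 C)) (hξ : max ξV 1 < ξU) :
    Tendsto (fun t : ℕ => (∑ s ∈ range (t + 1), R s * V (t - s + 1)) * (t : ℝ) ^ ξV)
      atTop (𝓝 ((∑' s, R s) * C)) := by
  have hRsum : Summable R := summable_abs_iff.mp <| .of_nonneg_of_le (fun _ => abs_nonneg _) hR
    ((Real.summable_nat_add_one_rpow_neg (lt_of_le_of_lt (le_max_right _ _) hξ)).mul_left M)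
  have h := (tendsto_sum_range_half_mul_rpow hRsum hV).add
    (tendsto_sum_Ico_half_mul_rpow hR hV hξ)
  rw [add_zero] at h
  refine h.congr fun t => ?_
  rw [sum_range_add_sum_Ico _ (by omega), sum_mul]
  exact sum_congr rfl fun s _ => (mul_assoc _ _ _).symm

end ConvolutionAsymptotics

theorem stmt_12_general (U V L : ℕ → ℝ) (ξU ξV C_V : ℝ)
    (hU0 : U 0 = 0) (hUnn : ∀ t, 0 ≤ U t)
    (hL : ∀ t, L t = (1 / 2) * V (t + 1) + ∑ s ∈ Finset.Icc 1 t, U s * L (t - s))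
    (hUsum : Summable U) (hUlt : ∑' t, U t < 1)
    (hUb : ∃ C : ℝ, ∀ t : ℕ, 1 ≤ t → U t ≤ C * (t : ℝ) ^ (-ξU))
    (hV : Filter.Tendsto (fun t : ℕ => V t * (t : ℝ) ^ ξV) Filter.atTop (nhds C_V))
    (hξ : ξU > max ξV 1) :
    Filter.Tendsto (fun t : ℕ => L t * (t : ℝ) ^ ξV) Filter.atTop
      (nhds (C_V / (2 * (1 - ∑' t, U t)))) := by
  obtain ⟨M, hM⟩ := resolventKernel_le_mul_rpow hU0 hUnn hUsum hUlt
    (by linarith [le_max_right ξV 1]) hUb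
  have hR : ∀ s : ℕ, |resolventKernel U s| ≤ M * ((s : ℝ) + 1) ^ (-ξU) := fun s => by
    rw [abs_of_nonneg (resolventKernel_nonneg hU0 hUnn s)]
    exact hM s
  have hconv := (tendsto_sum_range_mul_mul_rpow hR hV hξ).const_mul (1 / 2)
  rw [tsum_resolventKernel hU0 hUnn hUsum hUlt] at hconv
  convert hconv using 2 with t
  · rw [eq_sum_resolventKernel_mul_of_renewal (g := fun t => 1 / 2 * V (t + 1)) hU0 hL, sum_mul,
      sum_mul, mul_sum]
    exact sum_congr rfl fun s _ => by ring
  · field_simp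

/-- Signal-dominated regime: with `L` given by the propagator expansion (renewal
recursion `L_t = ½ V_{t+1} + Σ_{s=1}^t U_s L_{t−s}`), if `U_Σ < 1`, `U_t = O(t^{−ξ_U})`,
`V_t = C_V t^{−ξ_V}(1+o(1))` with `C_V > 0` and `ξ_U > max(ξ_V, 1)`, then
`L_t = (C_V / (2(1−U_Σ))) t^{−ξ_V} (1 + o(1))`. -/
theorem stmt_12 (U V L : ℕ → ℝ) (ξU ξV C_V : ℝ)
    (hU0 : U 0 = 0) (hUnn : ∀ t, 0 ≤ U t) (hVnn : ∀ t, 0 ≤ V t)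
    (hL : ∀ t, L t = (1 / 2) * V (t + 1) + ∑ s ∈ Finset.Icc 1 t, U s * L (t - s))
    (hUsum : Summable U) (hUlt : ∑' t, U t < 1)
    (hUb : ∃ C : ℝ, ∀ t : ℕ, 1 ≤ t → U t ≤ C * (t : ℝ) ^ (-ξU))
    (hCV : 0 < C_V)
    (hV : Filter.Tendsto (fun t : ℕ => V t * (t : ℝ) ^ ξV) Filter.atTop (nhds C_V))
    (hξ : ξU > max ξV 1) :
    Filter.Tendsto (fun t : ℕ => L t * (t : ℝ) ^ ξV) Filter.atTop
      (nhds (C_V / (2 * (1 - ∑' t, U t)))) :=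
  stmt_12_general U V L ξU ξV C_V hU0 hUnn hL hUsum hUlt hUb hV hξ
end

section
/- Let U_t, V_t ≥ 0 with U_Σ < 1, U_t = C_U t^{−ξ_U}(1+o(1)), V_t = O(t^{−ξ_V}), where ξ_V > ξ_U > 1 and C_U > 0. Then L_t = ½ Σ_{s=1}^t ((1−𝕌)^{-1})_s V_{t−s+1} satisfies L_t = (V_Σ C_U / (2(1−U_Σ)²)) t^{−ξ_U}(1+o(1)), where V_Σ = Σ_{t≥1} V_t. -/
/-!
Write `G = (1 - 𝕌)⁻¹`, so that `L = ½ V(· + 1) ⋆ G` for the Cauchy product `⋆`. The key estimate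
is that for summable `a, b ≥ 0` with `a t * t ^ ξ → α` and `b t * t ^ ξ → β`, the product satisfies
`(a ⋆ b) t * t ^ ξ → (∑ a) β + (∑ b) α`: the mass of `∑ₛ a s b (t - s)` sits where one of `s`,
`t - s` is bounded, while in the middle range both factors are `O(t ^ (-ξ))` and have small tails.

Since `G = 1 + U ⋆ G` and `∑ G = (1 - U_Σ)⁻¹`, the same splitting first shows that `G t * t ^ ξ_U`
is bounded (the part of `U ⋆ G` that feels `G` near `t` has weight about `U_Σ < 1`), and then that
its limsup and liminf `ℓ` both satisfy `ℓ = U_Σ ℓ + C_U / (1 - U_Σ)`, so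
`G t * t ^ ξ_U → C_U / (1 - U_Σ) ^ 2`. As `V t * t ^ ξ_U → 0`, the key estimate applied to
`½ V(· + 1)` and `G` gives the limit of `L t * t ^ ξ_U`.
-/

open Filter Finset Topology

namespace Renewal

noncomputable def conv (a b : ℕ → ℝ) (t : ℕ) : ℝ := ∑ s ∈ range (t + 1), a s * b (t - s)

theorem coeff_mk_mul_mk (a b : ℕ → ℝ) (t : ℕ) :
    PowerSeries.coeff t (PowerSeries.mk a * PowerSeries.mk b) = conv a b t := by
  simp [PowerSeries.coeff_mul, Finset.Nat.sum_antidiagonal_eq_sum_range_succ_mk, conv]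

theorem sum_Ico_reflect_of_add_eq (f : ℕ → ℝ) {m n t : ℕ} (hmn : m + n = t + 1) :
    ∑ s ∈ Ico m n, f (t - s) = ∑ s ∈ Ico m n, f s := by
  refine sum_nbij' (fun s => t - s) (fun s => t - s) ?_ ?_ ?_ ?_ ?_ <;>
    intro s hs <;> simp only [mem_Ico] at hs ⊢ <;> omega

theorem conv_eq_sum_range_add_sum_Ico_add_sum_range {K t : ℕ} (a b : ℕ → ℝ) (h : 2 * K + 1 ≤ t) :
    conv a b t = ∑ s ∈ range (K + 1), a s * b (t - s)
      + ∑ s ∈ Ico (K + 1) (t - K), a s * b (t - s)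
      + ∑ s ∈ range (K + 1), b s * a (t - s) := by
  have hend : ∑ s ∈ Ico (t - K) (t + 1), a s * b (t - s)
      = ∑ s ∈ range (K + 1), b s * a (t - s) := by
    rw [range_eq_Ico]
    refine sum_nbij' (fun s => t - s) (fun s => t - s) ?_ ?_ ?_ ?_ ?_ <;>
      intro s hs <;> simp only [mem_Ico] at hs ⊢
    all_goals first | omega | rw [Nat.sub_sub_self (by omega), mul_comm]
  rw [conv, range_eq_Ico, ← sum_Ico_consecutive _ (by omega : 0 ≤ t - K) (by omega : t - K ≤ t + 1),
    ← sum_Ico_consecutive _ (by omega : 0 ≤ K + 1) (by omega : K + 1 ≤ t - K), hend,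
    ← range_eq_Ico]

theorem sum_range_conv_le {a b : ℕ → ℝ} (ha : ∀ n, 0 ≤ a n) (hb : ∀ n, 0 ≤ b n) (n : ℕ) :
    ∑ t ∈ range n, conv a b t ≤ (∑ s ∈ range n, a s) * ∑ s ∈ range n, b s := by
  have hswap : ∑ t ∈ range n, conv a b t = ∑ s ∈ range n, ∑ t ∈ Ico s n, a s * b (t - s) := by
    refine sum_comm' fun t s => ?_
    simp only [mem_range, mem_Ico]
    omega
  rw [hswap, sum_mul]
  refine sum_le_sum fun s hs => ?_
  rw [← mul_sum, sum_Ico_eq_sum_range]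
  refine mul_le_mul_of_nonneg_left ?_ (ha s)
  simp only [add_tsub_cancel_left]
  exact sum_le_sum_of_subset_of_nonneg (range_mono (Nat.sub_le n s)) fun i _ _ => hb i

theorem mul_mul_add_rpow_le {ξ x y u v Cx Cy : ℝ} (hξ : 0 ≤ ξ) (hx : 0 ≤ x) (hy : 0 ≤ y)
    (hu : 0 ≤ u) (hv : 0 ≤ v) (hxu : x * u ^ ξ ≤ Cx) (hyv : y * v ^ ξ ≤ Cy) :
    x * y * (u + v) ^ ξ ≤ 2 ^ ξ * (Cy * x + Cx * y) := by
  wlog huv : u ≤ v generalizing x y u v Cx Cy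
  · have := this hy hx hv hu hyv hxu (le_of_not_ge huv)
    rw [add_comm u v]
    linarith
  have hCx : 0 ≤ Cx * y := mul_nonneg ((mul_nonneg hx (by positivity)).trans hxu) hy
  have h2v : (u + v) ^ ξ ≤ 2 ^ ξ * v ^ ξ := by
    rw [← Real.mul_rpow zero_le_two hv]
    exact Real.rpow_le_rpow (by positivity) (by linarith) hξ
  calc x * y * (u + v) ^ ξ ≤ x * y * (2 ^ ξ * v ^ ξ) :=
        mul_le_mul_of_nonneg_left h2v (mul_nonneg hx hy)
    _ = 2 ^ ξ * (x * (y * v ^ ξ)) := by ring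
    _ ≤ 2 ^ ξ * (Cy * x + Cx * y) := by
        gcongr
        nlinarith

theorem eventually_rpow_le_mul_rpow_sub (ξ : ℝ) (K : ℕ) {r : ℝ} (hr : 1 < r) :
    ∀ᶠ t : ℕ in atTop, (t : ℝ) ^ ξ ≤ r * ((t - K : ℕ) : ℝ) ^ ξ := by
  have hratio : Tendsto (fun t : ℕ => ((t : ℝ) / (t - K : ℕ)) ^ ξ) atTop (𝓝 1) := by
    rw [← tendsto_add_atTop_iff_nat K]
    have h : Tendsto (fun n : ℕ => 1 + (K : ℝ) / n) atTop (𝓝 1) := by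
      simpa using tendsto_const_nhds.add (tendsto_const_div_atTop_nhds_zero_nat (K : ℝ))
    have hrpow := (Real.continuousAt_rpow_const 1 ξ (Or.inl one_ne_zero)).tendsto.comp h
    rw [Real.one_rpow] at hrpow
    refine hrpow.congr' ?_
    filter_upwards [eventually_ge_atTop 1] with n hn
    have hn0 : (n : ℝ) ≠ 0 := by positivity
    simp [add_div, hn0, add_comm]
  filter_upwards [hratio.eventually (gt_mem_nhds hr), eventually_gt_atTop K] with t ht htK
  have hpos : (0 : ℝ) < (t - K : ℕ) := by exact_mod_cast Nat.sub_pos_of_lt htK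
  rw [Real.div_rpow (Nat.cast_nonneg t) hpos.le, div_lt_iff₀ (by positivity)] at ht
  exact ht.le

variable {ξ : ℝ} {a b : ℕ → ℝ}

theorem sum_range_mul_mul_rpow_le {r β : ℝ} (hξ : 0 ≤ ξ) (ha : ∀ n, 0 ≤ a n)
    (hb : ∀ n, 0 ≤ b n) {K t : ℕ} (hr0 : 0 ≤ r) (hr : (t : ℝ) ^ ξ ≤ r * ((t - K : ℕ) : ℝ) ^ ξ)
    (hβ : ∀ u, t - K ≤ u → b u * (u : ℝ) ^ ξ ≤ β) :
    (∑ s ∈ range (K + 1), a s * b (t - s)) * (t : ℝ) ^ ξ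
      ≤ r * ((∑ s ∈ range (K + 1), a s) * β) := by
  rw [sum_mul, sum_mul, mul_sum]
  refine sum_le_sum fun s hs => ?_
  have hsK : t - K ≤ t - s := by have := mem_range.mp hs; omega
  have hmono : ((t - K : ℕ) : ℝ) ^ ξ ≤ ((t - s : ℕ) : ℝ) ^ ξ :=
    Real.rpow_le_rpow (Nat.cast_nonneg _) (Nat.cast_le.mpr hsK) hξ
  calc a s * b (t - s) * (t : ℝ) ^ ξ ≤ a s * b (t - s) * (r * ((t - s : ℕ) : ℝ) ^ ξ) := by
        gcongr
        · exact mul_nonneg (ha s) (hb _)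
        · exact hr.trans (mul_le_mul_of_nonneg_left hmono hr0)
    _ = r * (a s * (b (t - s) * ((t - s : ℕ) : ℝ) ^ ξ)) := by ring
    _ ≤ r * (a s * β) := by gcongr; exacts [ha s, hβ _ hsK]

theorem sum_range_mul_le_sum_range_mul_mul_rpow {β : ℝ} (hξ : 0 ≤ ξ) (ha : ∀ n, 0 ≤ a n)
    (hb : ∀ n, 0 ≤ b n) {K t : ℕ} (hβ : ∀ u, t - K ≤ u → β ≤ b u * (u : ℝ) ^ ξ) :
    (∑ s ∈ range (K + 1), a s) * β
      ≤ (∑ s ∈ range (K + 1), a s * b (t - s)) * (t : ℝ) ^ ξ := by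
  rw [sum_mul, sum_mul]
  refine sum_le_sum fun s hs => ?_
  have hmono : ((t - s : ℕ) : ℝ) ^ ξ ≤ (t : ℝ) ^ ξ :=
    Real.rpow_le_rpow (Nat.cast_nonneg _) (Nat.cast_le.mpr (Nat.sub_le t s)) hξ
  calc a s * β ≤ a s * (b (t - s) * ((t - s : ℕ) : ℝ) ^ ξ) :=
        mul_le_mul_of_nonneg_left (hβ _ (by have := mem_range.mp hs; omega)) (ha s)
    _ ≤ a s * b (t - s) * (t : ℝ) ^ ξ := by
        rw [mul_assoc]; gcongr; exacts [ha s, hb _]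

/-- Near the two ends of `[0, t]` one factor carries the decay, with `t ^ ξ` compared to
`(t - K) ^ ξ` through `r`; in the middle, whichever index is at least `t / 2` does, at the
price of `2 ^ ξ`. -/
theorem conv_mul_rpow_le {r α β Ca Cb : ℝ} (hξ : 0 ≤ ξ) (ha : ∀ n, 0 ≤ a n)
    (hb : ∀ n, 0 ≤ b n) {K t : ℕ} (hKt : 2 * K + 1 ≤ t) (hr0 : 0 ≤ r)
    (hr : (t : ℝ) ^ ξ ≤ r * ((t - K : ℕ) : ℝ) ^ ξ)
    (hα : ∀ u, t - K ≤ u → a u * (u : ℝ) ^ ξ ≤ α) (hβ : ∀ u, t - K ≤ u → b u * (u : ℝ) ^ ξ ≤ β)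
    (hCa : ∀ u, a u * (u : ℝ) ^ ξ ≤ Ca) (hCb : ∀ u, b u * (u : ℝ) ^ ξ ≤ Cb) :
    conv a b t * (t : ℝ) ^ ξ
      ≤ r * ((∑ s ∈ range (K + 1), a s) * β + (∑ s ∈ range (K + 1), b s) * α)
        + 2 ^ ξ * (Cb * ∑ s ∈ Ico (K + 1) (t - K), a s + Ca * ∑ s ∈ Ico (K + 1) (t - K), b s) := by
  have hmid : (∑ s ∈ Ico (K + 1) (t - K), a s * b (t - s)) * (t : ℝ) ^ ξ
      ≤ 2 ^ ξ * (Cb * ∑ s ∈ Ico (K + 1) (t - K), a s + Ca * ∑ s ∈ Ico (K + 1) (t - K), b s) := by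
    rw [← sum_Ico_reflect_of_add_eq b (m := K + 1) (n := t - K) (t := t) (by omega), mul_sum,
      mul_sum, ← sum_add_distrib, mul_sum, sum_mul]
    refine sum_le_sum fun s hs => ?_
    have hst : (t : ℝ) = s + (t - s : ℕ) := by
      rw [Nat.cast_sub (by have := mem_Ico.mp hs; omega)]; ring
    rw [hst]
    exact mul_mul_add_rpow_le hξ (ha s) (hb _) (Nat.cast_nonneg _) (Nat.cast_nonneg _) (hCa s)
      (hCb _)
  rw [conv_eq_sum_range_add_sum_Ico_add_sum_range a b hKt, add_mul, add_mul]
  have h1 := sum_range_mul_mul_rpow_le hξ ha hb hr0 hr hβ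
  have h3 := sum_range_mul_mul_rpow_le hξ hb ha hr0 hr hα
  linarith

theorem sum_Ico_le_of_tsum_sub_le {f : ℕ → ℝ} (hf : ∀ n, 0 ≤ f n) (hs : Summable f) {k : ℕ}
    {δ : ℝ} (hk : ∑' n, f n - δ ≤ ∑ s ∈ range k, f s) (m : ℕ) : ∑ s ∈ Ico k m, f s ≤ δ := by
  rcases le_total k m with hkm | hmk
  · rw [sum_Ico_eq_sub _ hkm]
    linarith [hs.sum_le_tsum (range m) fun i _ => hf i]
  · rw [Ico_eq_empty_of_le hmk, sum_empty]
    linarith [hs.sum_le_tsum (range k) fun i _ => hf i]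

theorem exists_pos_lt_of_continuous {φ ψ : ℝ → ℝ} (hφ : Continuous φ) (hψ : Continuous ψ)
    (h : φ 0 < ψ 0) : ∃ δ > 0, φ δ < ψ δ := by
  have hnear : ∀ᶠ δ in 𝓝[>] 0, φ δ < ψ δ := nhdsWithin_le_nhds ((isOpen_lt hφ hψ).mem_nhds h)
  obtain ⟨δ, hδ, hpos⟩ := (hnear.and self_mem_nhdsWithin).exists
  exact ⟨δ, hpos, hδ⟩

theorem eventually_conv_mul_rpow_lt (hξ : 0 ≤ ξ) (ha : ∀ n, 0 ≤ a n) (hb : ∀ n, 0 ≤ b n)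
    (hsa : Summable a) (hsb : Summable b) {α β : ℝ}
    (hα : ∀ α' > α, ∀ᶠ t : ℕ in atTop, a t * (t : ℝ) ^ ξ < α')
    (hβ : ∀ β' > β, ∀ᶠ t : ℕ in atTop, b t * (t : ℝ) ^ ξ < β') :
    ∀ c > (∑' n, a n) * β + (∑' n, b n) * α,
      ∀ᶠ t : ℕ in atTop, conv a b t * (t : ℝ) ^ ξ < c := by
  intro c hc
  set A := ∑' n, a n
  set B := ∑' n, b n
  obtain ⟨Ca, hCa⟩ := (isBoundedUnder_of_eventually_le
    ((hα (α + 1) (by linarith)).mono fun _ h => h.le)).bddAbove_range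
  obtain ⟨Cb, hCb⟩ := (isBoundedUnder_of_eventually_le
    ((hβ (β + 1) (by linarith)).mono fun _ h => h.le)).bddAbove_range
  have hCa0 : 0 ≤ Ca := (mul_nonneg (ha 0) (by positivity)).trans (hCa ⟨0, rfl⟩)
  have hCb0 : 0 ≤ Cb := (mul_nonneg (hb 0) (by positivity)).trans (hCb ⟨0, rfl⟩)
  obtain ⟨δ, hδ, hδc⟩ := exists_pos_lt_of_continuous (ψ := fun _ => c)
    (φ := fun δ => (1 + δ) * (A * (β + δ) + B * (α + δ)) + 2 ^ ξ * (Cb * δ + Ca * δ))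
    (by fun_prop) (by fun_prop) (by simpa using hc)
  obtain ⟨K, hK⟩ := eventually_atTop.mp
    ((hsa.hasSum.tendsto_sum_nat.eventually (lt_mem_nhds (sub_lt_self A hδ))).and
      (hsb.hasSum.tendsto_sum_nat.eventually (lt_mem_nhds (sub_lt_self B hδ))))
  obtain ⟨Ta, hTa⟩ := eventually_atTop.mp (hα (α + δ) (by linarith))
  obtain ⟨Tb, hTb⟩ := eventually_atTop.mp (hβ (β + δ) (by linarith))
  have hαδ : 0 ≤ α + δ := (mul_nonneg (ha Ta) (by positivity)).trans (hTa Ta le_rfl).le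
  have hβδ : 0 ≤ β + δ := (mul_nonneg (hb Tb) (by positivity)).trans (hTb Tb le_rfl).le
  filter_upwards [eventually_rpow_le_mul_rpow_sub ξ K (lt_add_of_pos_right 1 hδ),
    eventually_ge_atTop (Ta + Tb + 2 * K + 1)] with t hr ht
  calc conv a b t * (t : ℝ) ^ ξ
      ≤ (1 + δ) * ((∑ s ∈ range (K + 1), a s) * (β + δ) + (∑ s ∈ range (K + 1), b s) * (α + δ))
        + 2 ^ ξ * (Cb * ∑ s ∈ Ico (K + 1) (t - K), a s + Ca * ∑ s ∈ Ico (K + 1) (t - K), b s) :=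
        conv_mul_rpow_le hξ ha hb (by omega) (by linarith) hr
          (fun u hu => (hTa u (by omega)).le) (fun u hu => (hTb u (by omega)).le)
          (fun u => hCa ⟨u, rfl⟩) (fun u => hCb ⟨u, rfl⟩)
    _ ≤ (1 + δ) * (A * (β + δ) + B * (α + δ)) + 2 ^ ξ * (Cb * δ + Ca * δ) := by
        gcongr
        · exact hsa.sum_le_tsum _ fun i _ => ha i
        · exact hsb.sum_le_tsum _ fun i _ => hb i
        · exact sum_Ico_le_of_tsum_sub_le ha hsa (hK (K + 1) K.le_succ).1.le _
        · exact sum_Ico_le_of_tsum_sub_le hb hsb (hK (K + 1) K.le_succ).2.le _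
    _ < c := hδc

theorem eventually_lt_conv_mul_rpow (hξ : 0 ≤ ξ) (ha : ∀ n, 0 ≤ a n) (hb : ∀ n, 0 ≤ b n)
    (hsa : Summable a) (hsb : Summable b) {α β : ℝ}
    (hα : ∀ α' < α, ∀ᶠ t : ℕ in atTop, α' < a t * (t : ℝ) ^ ξ)
    (hβ : ∀ β' < β, ∀ᶠ t : ℕ in atTop, β' < b t * (t : ℝ) ^ ξ) :
    ∀ c < (∑' n, a n) * β + (∑' n, b n) * α,
      ∀ᶠ t : ℕ in atTop, c < conv a b t * (t : ℝ) ^ ξ := by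
  intro c hc
  set A := ∑' n, a n
  set B := ∑' n, b n
  obtain ⟨δ, hδ, hδc⟩ := exists_pos_lt_of_continuous (φ := fun _ => c)
    (ψ := fun δ => A * (β - δ) + B * (α - δ)) (by fun_prop) (by fun_prop) (by simpa using hc)
  have hpartial : Tendsto (fun n => (∑ s ∈ range n, a s) * (β - δ) + (∑ s ∈ range n, b s) * (α - δ))
      atTop (𝓝 (A * (β - δ) + B * (α - δ))) :=
    (hsa.hasSum.tendsto_sum_nat.mul_const _).add (hsb.hasSum.tendsto_sum_nat.mul_const _)
  obtain ⟨K, hK⟩ := eventually_atTop.mp (hpartial.eventually (lt_mem_nhds hδc))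
  obtain ⟨Ta, hTa⟩ := eventually_atTop.mp (hα (α - δ) (by linarith))
  obtain ⟨Tb, hTb⟩ := eventually_atTop.mp (hβ (β - δ) (by linarith))
  filter_upwards [eventually_ge_atTop (Ta + Tb + 2 * K + 1)] with t ht
  have hmid : 0 ≤ ∑ s ∈ Ico (K + 1) (t - K), a s * b (t - s) :=
    sum_nonneg fun s _ => mul_nonneg (ha s) (hb _)
  have h1 := sum_range_mul_le_sum_range_mul_mul_rpow hξ ha hb (K := K) (t := t)
    fun u hu => (hTb u (by omega)).le
  have h3 := sum_range_mul_le_sum_range_mul_mul_rpow hξ hb ha (K := K) (t := t)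
    fun u hu => (hTa u (by omega)).le
  rw [conv_eq_sum_range_add_sum_Ico_add_sum_range a b (by omega : 2 * K + 1 ≤ t), add_mul, add_mul]
  linarith [hK (K + 1) K.le_succ, mul_nonneg hmid (Real.rpow_nonneg (Nat.cast_nonneg t) ξ)]

theorem tendsto_conv_mul_rpow (hξ : 0 ≤ ξ) (ha : ∀ n, 0 ≤ a n) (hb : ∀ n, 0 ≤ b n)
    (hsa : Summable a) (hsb : Summable b) {α β : ℝ}
    (hα : Tendsto (fun t : ℕ => a t * (t : ℝ) ^ ξ) atTop (𝓝 α))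
    (hβ : Tendsto (fun t : ℕ => b t * (t : ℝ) ^ ξ) atTop (𝓝 β)) :
    Tendsto (fun t : ℕ => conv a b t * (t : ℝ) ^ ξ) atTop
      (𝓝 ((∑' n, a n) * β + (∑' n, b n) * α)) :=
  tendsto_order.2
    ⟨eventually_lt_conv_mul_rpow hξ ha hb hsa hsb (tendsto_order.1 hα).1 (tendsto_order.1 hβ).1,
      eventually_conv_mul_rpow_lt hξ ha hb hsa hsb (tendsto_order.1 hα).2 (tendsto_order.1 hβ).2⟩

theorem exists_forall_le_of_le_mul_add {x : ℕ → ℝ} {ρ D : ℝ} {T : ℕ} (hρ : ρ < 1)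
    (h : ∀ t ≥ T, ∀ H ≥ 0, (∀ u < t, x u ≤ H) → x t ≤ ρ * H + D) : ∃ H, ∀ t, x t ≤ H := by
  obtain ⟨M, hM⟩ := ((Set.finite_Iic T).image x).bddAbove
  refine ⟨max (max M 0) (D / (1 - ρ)), fun t => ?_⟩
  induction t using Nat.strong_induction_on with
  | _ t ih =>
    rcases le_or_gt t T with htT | hTt
    · exact (hM ⟨t, htT, rfl⟩).trans ((le_max_left _ _).trans (le_max_left _ _))
    · set H := max (max M 0) (D / (1 - ρ))
      have hD : D ≤ (1 - ρ) * H := by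
        rw [← div_le_iff₀' (by linarith)]; exact le_max_right _ _
      have := h t hTt.le H ((le_max_right _ _).trans (le_max_left _ _)) ih
      linarith

noncomputable def renewal (U : ℕ → ℝ) (t : ℕ) : ℝ :=
  PowerSeries.coeff t (1 - PowerSeries.mk U)⁻¹

section RenewalSequence

variable {U : ℕ → ℝ}

theorem mk_renewal_mul_one_sub (hU0 : U 0 = 0) :
    PowerSeries.mk (renewal U) * (1 - PowerSeries.mk U) = 1 := by
  have hmk : PowerSeries.mk (renewal U) = (1 - PowerSeries.mk U)⁻¹ := by
    ext t; simp [renewal]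
  rw [hmk]
  exact PowerSeries.inv_mul_cancel _ (by simp [hU0])

theorem renewal_eq_ite_add_conv (hU0 : U 0 = 0) (t : ℕ) :
    renewal U t = (if t = 0 then 1 else 0) + conv U (renewal U) t := by
  have h := congrArg (PowerSeries.coeff t) (mk_renewal_mul_one_sub hU0)
  rw [mul_sub, mul_one, mul_comm, map_sub, coeff_mk_mul_mk, PowerSeries.coeff_mk,
    PowerSeries.coeff_one] at h
  linarith

theorem renewal_zero (hU0 : U 0 = 0) : renewal U 0 = 1 := by
  simpa [conv, hU0] using renewal_eq_ite_add_conv hU0 0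

theorem conv_renewal (hU0 : U 0 = 0) {t : ℕ} (ht : t ≠ 0) : conv U (renewal U) t = renewal U t := by
  simp [renewal_eq_ite_add_conv hU0 t, ht]

theorem renewal_nonneg (hU0 : U 0 = 0) (hU : ∀ n, 0 ≤ U n) (t : ℕ) : 0 ≤ renewal U t := by
  induction t using Nat.strong_induction_on with
  | _ t ih =>
    rcases t with _ | n
    · simp [renewal_zero hU0]
    · rw [← conv_renewal hU0 n.succ_ne_zero, conv, sum_range_succ', hU0, zero_mul, add_zero]
      exact sum_nonneg fun s hs => mul_nonneg (hU _) (ih _ (by have := mem_range.mp hs; omega))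

variable (hU0 : U 0 = 0) (hU : ∀ n, 0 ≤ U n) (hsU : Summable U) (hq : ∑' n, U n < 1)
include hU0 hU hsU hq

theorem summable_renewal : Summable (renewal U) := by
  refine summable_of_sum_range_le (c := (1 - ∑' n, U n)⁻¹) (renewal_nonneg hU0 hU) fun n => ?_
  set S := ∑ t ∈ range n, renewal U t
  have hS : S ≤ 1 + (∑' n, U n) * S := by
    calc S = ∑ t ∈ range n, (if t = 0 then 1 else 0) + ∑ t ∈ range n, conv U (renewal U) t := by
          rw [← sum_add_distrib]; exact sum_congr rfl fun t _ => renewal_eq_ite_add_conv hU0 t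
      _ ≤ 1 + (∑ s ∈ range n, U s) * S := by
          gcongr
          · rw [sum_ite_eq']; split_ifs <;> norm_num
          · exact sum_range_conv_le hU (renewal_nonneg hU0 hU) n
      _ ≤ 1 + (∑' n, U n) * S := by
          gcongr
          · exact sum_nonneg fun t _ => renewal_nonneg hU0 hU t
          · exact hsU.sum_le_tsum _ fun i _ => hU i
  rw [← one_div, le_div_iff₀ (by linarith)]
  linarith

theorem tsum_renewal : ∑' t, renewal U t = (1 - ∑' n, U n)⁻¹ := by
  have hsG := summable_renewal hU0 hU hsU hq
  have hnorm {f : ℕ → ℝ} (hf : Summable f) : Summable fun n => ‖f n‖ := by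
    simpa only [Real.norm_eq_abs] using summable_abs_iff.mpr hf
  have hcauchy : (∑' n, U n) * ∑' t, renewal U t = ∑' t, renewal U t - 1 := by
    rw [tsum_mul_tsum_eq_tsum_sum_range_of_summable_norm (hnorm hsU) (hnorm hsG)]
    have hconv : conv U (renewal U) = fun t => renewal U t - if t = 0 then 1 else 0 :=
      funext fun t => by linarith [renewal_eq_ite_add_conv hU0 t]
    change ∑' t, conv U (renewal U) t = _
    rw [hconv, hsG.tsum_sub (hasSum_ite_eq 0 (1 : ℝ)).summable, tsum_ite_eq]
  exact eq_inv_of_mul_eq_one_left (by linarith)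

theorem renewal_mul_rpow_le_of_forall_lt (hξ : 0 ≤ ξ) {C r H : ℝ} {K t : ℕ}
    (hC : ∀ t : ℕ, U t * (t : ℝ) ^ ξ ≤ C) (hKt : 2 * K + 1 ≤ t) (hr0 : 0 ≤ r)
    (hr : (t : ℝ) ^ ξ ≤ r * ((t - K : ℕ) : ℝ) ^ ξ) (hH0 : 0 ≤ H)
    (hH : ∀ u < t, renewal U u * (u : ℝ) ^ ξ ≤ H) :
    renewal U t * (t : ℝ) ^ ξ
      ≤ r * ((∑' n, U n) * H + (∑' n, renewal U n) * C)
        + 2 ^ ξ * (H * ∑ s ∈ Ico (K + 1) (t - K), U s + C * ∑' n, renewal U n) := by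
  have hG := renewal_nonneg hU0 hU
  have hC0 : 0 ≤ C := (mul_nonneg (hU 0) (by positivity)).trans (hC 0)
  -- Truncating below `t` does not change the convolution at `t` because `U 0 = 0`,
  -- and makes `H` a bound at every index.
  set b : ℕ → ℝ := fun u => if u < t then renewal U u else 0
  have hb : ∀ u, 0 ≤ b u := fun u => by dsimp only [b]; split_ifs; exacts [hG u, le_rfl]
  have hbH : ∀ u, b u * (u : ℝ) ^ ξ ≤ H := fun u => by
    dsimp only [b]; split_ifs with hu
    · exact hH u hu
    · simpa using hH0
  have hbG : ∀ s : Finset ℕ, ∑ u ∈ s, b u ≤ ∑' n, renewal U n := fun s =>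
    (sum_le_sum fun u _ => by dsimp only [b]; split_ifs; exacts [le_rfl, hG u]).trans
      ((summable_renewal hU0 hU hsU hq).sum_le_tsum s fun i _ => hG i)
  have hGb : renewal U t = conv U b t := by
    rw [← conv_renewal hU0 (by omega : t ≠ 0)]
    refine sum_congr rfl fun s hs => ?_
    rcases Nat.eq_zero_or_pos s with rfl | hs0
    · simp [hU0]
    · simp [b, show t - s < t by omega]
  rw [hGb]
  calc conv U b t * (t : ℝ) ^ ξ
      ≤ r * ((∑ s ∈ range (K + 1), U s) * H + (∑ s ∈ range (K + 1), b s) * C)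
        + 2 ^ ξ * (H * ∑ s ∈ Ico (K + 1) (t - K), U s + C * ∑ s ∈ Ico (K + 1) (t - K), b s) :=
        conv_mul_rpow_le hξ hU hb hKt hr0 hr (fun u _ => hC u) (fun u _ => hbH u) hC hbH
    _ ≤ _ := by
        gcongr
        · exact hsU.sum_le_tsum _ fun i _ => hU i
        · exact hbG _
        · exact hbG _

theorem exists_forall_renewal_mul_rpow_le (hξ : 0 ≤ ξ) {C : ℝ}
    (hC : ∀ t : ℕ, U t * (t : ℝ) ^ ξ ≤ C) : ∃ H, ∀ t : ℕ, renewal U t * (t : ℝ) ^ ξ ≤ H := by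
  set q := ∑' n, U n
  set Gs := ∑' n, renewal U n
  obtain ⟨δ, hδ, hδρ⟩ := exists_pos_lt_of_continuous (φ := fun δ => (1 + δ) * q + 2 ^ ξ * δ)
    (ψ := fun _ => 1) (by fun_prop) (by fun_prop) (by simpa using hq)
  obtain ⟨K, hK⟩ := eventually_atTop.mp
    (hsU.hasSum.tendsto_sum_nat.eventually (lt_mem_nhds (sub_lt_self q hδ)))
  obtain ⟨T, hT⟩ := eventually_atTop.mp
    (eventually_rpow_le_mul_rpow_sub ξ K (lt_add_of_pos_right 1 hδ))
  refine exists_forall_le_of_le_mul_add (T := T + 2 * K + 1)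
    (D := (1 + δ) * (Gs * C) + 2 ^ ξ * (C * Gs)) hδρ fun t ht H hH0 hH => ?_
  calc renewal U t * (t : ℝ) ^ ξ
      ≤ (1 + δ) * (q * H + Gs * C) + 2 ^ ξ * (H * ∑ s ∈ Ico (K + 1) (t - K), U s + C * Gs) :=
        renewal_mul_rpow_le_of_forall_lt hU0 hU hsU hq hξ hC (by omega) (by linarith)
          (hT t (by omega)) hH0 hH
    _ ≤ (1 + δ) * (q * H + Gs * C) + 2 ^ ξ * (H * δ + C * Gs) := by
        gcongr
        exact sum_Ico_le_of_tsum_sub_le hU hsU (hK (K + 1) K.le_succ).le _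
    _ = ((1 + δ) * q + 2 ^ ξ * δ) * H + ((1 + δ) * (Gs * C) + 2 ^ ξ * (C * Gs)) := by ring

theorem tendsto_renewal_mul_rpow (hξ : 0 ≤ ξ) {C : ℝ}
    (hC : Tendsto (fun t : ℕ => U t * (t : ℝ) ^ ξ) atTop (𝓝 C)) :
    Tendsto (fun t : ℕ => renewal U t * (t : ℝ) ^ ξ) atTop (𝓝 (C / (1 - ∑' n, U n) ^ 2)) := by
  set x := fun t : ℕ => renewal U t * (t : ℝ) ^ ξ
  have hG := renewal_nonneg hU0 hU
  have hsG := summable_renewal hU0 hU hsU hq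
  obtain ⟨CU, hCU⟩ := hC.bddAbove_range
  obtain ⟨H, hH⟩ := exists_forall_renewal_mul_rpow_le hU0 hU hsU hq hξ fun t => hCU ⟨t, rfl⟩
  have hbdd : IsBoundedUnder (· ≤ ·) atTop x := isBoundedUnder_of ⟨H, hH⟩
  have hbdd' : IsBoundedUnder (· ≥ ·) atTop x :=
    isBoundedUnder_of ⟨0, fun t => mul_nonneg (hG t) (by positivity)⟩
  have hx : ∀ᶠ t in atTop, conv U (renewal U) t * (t : ℝ) ^ ξ = x t := by
    filter_upwards [eventually_ne_atTop 0] with t ht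
    rw [conv_renewal hU0 ht]
  have hM : limsup x atTop ≤ (∑' n, U n) * limsup x atTop + (∑' t, renewal U t) * C := by
    refine le_of_forall_gt_imp_ge_of_dense fun c hc => limsup_le_of_le hbdd'.isCoboundedUnder_le ?_
    filter_upwards [eventually_conv_mul_rpow_lt hξ hU hG hsU hsG (tendsto_order.1 hC).2
      (fun β hβ => eventually_lt_of_limsup_lt hβ hbdd) c hc, hx] with t ht hxt
    exact hxt ▸ ht.le
  have hm : (∑' n, U n) * liminf x atTop + (∑' t, renewal U t) * C ≤ liminf x atTop := by
    refine le_of_forall_lt_imp_le_of_dense fun c hc => le_liminf_of_le hbdd.isCoboundedUnder_ge ?_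
    filter_upwards [eventually_lt_conv_mul_rpow hξ hU hG hsU hsG (tendsto_order.1 hC).1
      (fun β hβ => eventually_lt_of_lt_liminf hβ hbdd') c hc, hx] with t ht hxt
    exact hxt ▸ ht.le
  rw [tsum_renewal hU0 hU hsU hq] at hM hm
  have h1q : 0 < 1 - ∑' n, U n := by linarith
  have hval : C / (1 - ∑' n, U n) ^ 2 = (1 - ∑' n, U n)⁻¹ * C / (1 - ∑' n, U n) := by
    field_simp
  refine tendsto_of_le_liminf_of_limsup_le ?_ ?_ hbdd hbdd'
  · rw [hval, div_le_iff₀ h1q]; linarith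
  · rw [hval, le_div_iff₀ h1q]; linarith

end RenewalSequence

theorem eq_conv_renewal {U f g : ℕ → ℝ} (hU0 : U 0 = 0)
    (hf : ∀ t, f t = g t + ∑ s ∈ Icc 1 t, U s * f (t - s)) : f = conv g (renewal U) := by
  have hsum (t : ℕ) : conv U f t = ∑ s ∈ Icc 1 t, U s * f (t - s) := by
    rw [conv, range_eq_Ico, sum_eq_sum_Ico_succ_bot t.succ_pos, hU0, zero_mul, zero_add]
    rfl
  have hrec : (1 - PowerSeries.mk U) * PowerSeries.mk f = PowerSeries.mk g := by
    ext t
    rw [sub_mul, one_mul, map_sub, coeff_mk_mul_mk, PowerSeries.coeff_mk, PowerSeries.coeff_mk,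
      hsum, hf t]
    ring
  have hmk : PowerSeries.mk f = PowerSeries.mk g * PowerSeries.mk (renewal U) := by
    rw [← hrec, mul_comm, ← mul_assoc, mk_renewal_mul_one_sub hU0, one_mul]
  ext t
  simpa [coeff_mk_mul_mk] using congrArg (PowerSeries.coeff t) hmk

theorem summable_shift_of_le_rpow {v : ℕ → ℝ} {C ξ : ℝ} (hv0 : ∀ t, 0 ≤ v t)
    (hv : ∀ t : ℕ, 1 ≤ t → v t ≤ C * (t : ℝ) ^ (-ξ)) (hξ : 1 < ξ) :
    Summable fun t => v (t + 1) := by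
  have hp : Summable fun t : ℕ => ((t + 1 : ℕ) : ℝ) ^ (-ξ) :=
    (summable_nat_add_iff 1).mpr (Real.summable_nat_rpow.mpr (by linarith))
  exact (hp.mul_left C).of_nonneg_of_le (fun t => hv0 _) fun t => hv (t + 1) (by omega)

theorem tendsto_shift_mul_rpow_zero {v : ℕ → ℝ} {C ξ ξ' : ℝ} (hv0 : ∀ t, 0 ≤ v t)
    (hv : ∀ t : ℕ, 1 ≤ t → v t ≤ C * (t : ℝ) ^ (-ξ')) (hξ0 : 0 ≤ ξ) (hξ : ξ < ξ') :
    Tendsto (fun t : ℕ => v (t + 1) * (t : ℝ) ^ ξ) atTop (𝓝 0) := by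
  have hlim : Tendsto (fun t : ℕ => C * ((t : ℝ) + 1) ^ (ξ - ξ')) atTop (𝓝 0) := by
    have h := (tendsto_rpow_neg_atTop (by linarith : 0 < ξ' - ξ)).comp
      (tendsto_atTop_add_const_right atTop 1 tendsto_natCast_atTop_atTop)
    simpa [Function.comp_def] using h.const_mul C
  refine squeeze_zero (fun t => mul_nonneg (hv0 _) (by positivity)) (fun t => ?_) hlim
  have ht : (0 : ℝ) < t + 1 := by positivity
  calc v (t + 1) * (t : ℝ) ^ ξ ≤ v (t + 1) * ((t : ℝ) + 1) ^ ξ :=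
        mul_le_mul_of_nonneg_left (Real.rpow_le_rpow (by positivity) (by linarith) hξ0) (hv0 _)
    _ ≤ C * ((t : ℝ) + 1) ^ (-ξ') * ((t : ℝ) + 1) ^ ξ :=
        mul_le_mul_of_nonneg_right (by exact_mod_cast hv (t + 1) (by omega)) (by positivity)
    _ = C * ((t : ℝ) + 1) ^ (ξ - ξ') := by
        rw [mul_assoc, ← Real.rpow_add ht]; ring_nf

end Renewal

open Renewal

theorem stmt_13_general (U V L : ℕ → ℝ) (ξU ξV C_U : ℝ)
    (hU0 : U 0 = 0) (hV0 : V 0 = 0) (hUnn : ∀ t, 0 ≤ U t) (hVnn : ∀ t, 0 ≤ V t)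
    (hL : ∀ t, L t = (1 / 2) * V (t + 1) + ∑ s ∈ Finset.Icc 1 t, U s * L (t - s))
    (hUsum : Summable U) (hUlt : ∑' t, U t < 1)
    (hU : Filter.Tendsto (fun t : ℕ => U t * (t : ℝ) ^ ξU) Filter.atTop (nhds C_U))
    (hVb : ∃ C : ℝ, ∀ t : ℕ, 1 ≤ t → V t ≤ C * (t : ℝ) ^ (-ξV))
    (hξ : ξV > ξU) (hξU : 1 < ξU) :
    Filter.Tendsto (fun t : ℕ => L t * (t : ℝ) ^ ξU) Filter.atTop
      (nhds ((∑' t, V t) * C_U / (2 * (1 - ∑' t, U t) ^ 2))) := by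
  obtain ⟨C, hC⟩ := hVb
  have hξ0 : 0 ≤ ξU := by linarith
  have hsV : Summable fun t => V (t + 1) := summable_shift_of_le_rpow hVnn hC (by linarith)
  have hV : Tendsto (fun t : ℕ => (1 / 2 * V (t + 1)) * (t : ℝ) ^ ξU) atTop (𝓝 0) := by
    simpa [mul_assoc] using (tendsto_shift_mul_rpow_zero hVnn hC hξ0 hξ).const_mul (1 / 2 : ℝ)
  have hlim := tendsto_conv_mul_rpow hξ0 (fun t => mul_nonneg (by norm_num) (hVnn (t + 1)))
    (renewal_nonneg hU0 hUnn) (hsV.mul_left _) (summable_renewal hU0 hUnn hUsum hUlt) hV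
    (tendsto_renewal_mul_rpow hU0 hUnn hUsum hUlt hξ0 hU)
  rw [← eq_conv_renewal hU0 hL] at hlim
  convert hlim using 2
  rw [tsum_mul_left, ((summable_nat_add_iff 1).mp hsV).tsum_eq_zero_add, hV0]
  field_simp
  ring

/-- Noise-dominated regime: with `L` given by the propagator expansion (renewal
recursion `L_t = ½ V_{t+1} + Σ_{s=1}^t U_s L_{t−s}`), if `U_Σ < 1`,
`U_t = C_U t^{−ξ_U}(1+o(1))`, `V_t = O(t^{−ξ_V})` with `ξ_V > ξ_U > 1` and `C_U > 0`, then
`L_t = (V_Σ C_U / (2(1−U_Σ)²)) t^{−ξ_U}(1+o(1))`, where `V_Σ = Σ_{t≥1} V_t`. -/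
theorem stmt_13 (U V L : ℕ → ℝ) (ξU ξV C_U : ℝ)
    (hU0 : U 0 = 0) (hV0 : V 0 = 0) (hUnn : ∀ t, 0 ≤ U t) (hVnn : ∀ t, 0 ≤ V t)
    (hL : ∀ t, L t = (1 / 2) * V (t + 1) + ∑ s ∈ Finset.Icc 1 t, U s * L (t - s))
    (hUsum : Summable U) (hUlt : ∑' t, U t < 1)
    (hCU : 0 < C_U)
    (hU : Filter.Tendsto (fun t : ℕ => U t * (t : ℝ) ^ ξU) Filter.atTop (nhds C_U))
    (hVb : ∃ C : ℝ, ∀ t : ℕ, 1 ≤ t → V t ≤ C * (t : ℝ) ^ (-ξV))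
    (hξ : ξV > ξU) (hξU : 1 < ξU) :
    Filter.Tendsto (fun t : ℕ => L t * (t : ℝ) ^ ξU) Filter.atTop
      (nhds ((∑' t, V t) * C_U / (2 * (1 - ∑' t, U t) ^ 2))) :=
  stmt_13_general U V L ξU ξV C_U hU0 hV0 hUnn hVnn hL hUsum hUlt hU hVb hξ hξU
end

section
/- Consider the 2×2 matrix S_λ with characteristic equation (x−1)(x−1+δ) − λ(q₁x + q₀) = 0, where 0 < δ < 2 and α_eff := −(q₀+q₁)/δ > 0. If q₁ ≤ −α_eff, then both roots are real for all λ > 0. If q₁ > −α_eff, then every non-real root x satisfies |q₁ x + q₀|² = δ² α_eff (α_eff + q₁). -/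
/-! For real `λ` the characteristic polynomial is the monic real quadratic
`x² + (δ - 2 - λ q₁) x + (1 - δ - λ q₀)`. A non-real root `x` therefore has conjugate `x̄` as its
other root, so Vieta gives `x + x̄ = 2 - δ + λ q₁` and `x x̄ = 1 - δ - λ q₀`, and the discriminant
`(δ - λ q₁)² + 4 λ (q₀ + q₁)` is negative. Expanding `|q₁ x + q₀|²` in `x + x̄` and `x x̄`, the
parameter `λ` cancels and leaves `(q₀ + q₁)² - δ q₁ (q₀ + q₁) = δ² α_eff (α_eff + q₁)`. If
`q₁ ≤ -α_eff`, i.e. `q₁ δ ≤ q₀ + q₁`, the discriminant is at least `(δ + λ q₁)² ≥ 0` for `λ > 0`,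
so no root is non-real. -/

namespace Complex

section RealQuadratic

variable {b c : ℝ} {x : ℂ}

theorem two_mul_re_of_sq_add_mul_add_eq_zero (hx : x ^ 2 + b * x + c = 0) (him : x.im ≠ 0) :
    2 * x.re = -b := by
  have him_eq : x.im * (2 * x.re + b) = 0 := by
    have h : x.re * x.im + x.im * x.re + b * x.im = 0 := by simpa [sq] using congrArg im hx
    linear_combination h
  linarith [(mul_eq_zero.mp him_eq).resolve_left him]

theorem normSq_of_sq_add_mul_add_eq_zero (hx : x ^ 2 + b * x + c = 0) (him : x.im ≠ 0) :
    normSq x = c := by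
  have hre_eq : x.re * x.re - x.im * x.im + b * x.re + c = 0 := by
    simpa [sq] using congrArg re hx
  rw [normSq_apply]
  linear_combination (-1 : ℝ) * hre_eq + x.re * two_mul_re_of_sq_add_mul_add_eq_zero hx him

theorem sq_lt_four_mul_of_sq_add_mul_add_eq_zero (hx : x ^ 2 + b * x + c = 0) (him : x.im ≠ 0) :
    b ^ 2 < 4 * c := by
  have hre := two_mul_re_of_sq_add_mul_add_eq_zero hx him
  have hnorm := normSq_of_sq_add_mul_add_eq_zero hx him
  rw [normSq_apply] at hnorm
  have hb : b = -(2 * x.re) := by linarith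
  rw [hb, ← hnorm]
  nlinarith [mul_self_pos.mpr him]

end RealQuadratic

theorem normSq_ofReal_mul_add_ofReal (a b : ℝ) (x : ℂ) :
    normSq (a * x + b) = a ^ 2 * normSq x + 2 * a * b * x.re + b ^ 2 := by
  simp only [normSq_apply, add_re, add_im, mul_re, mul_im, ofReal_re, ofReal_im]
  ring

end Complex

theorem stmt_17_general (δ q₀ q₁ : ℝ) (hδ0 : 0 < δ) :
    ((q₁ ≤ -(-(q₀ + q₁) / δ)) →
      ∀ lam : ℝ, 0 < lam → ∀ x : ℂ,
        (x - 1) * (x - 1 + (δ : ℂ)) - (lam : ℂ) * ((q₁ : ℂ) * x + (q₀ : ℂ)) = 0 →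
        x.im = 0) ∧
    ((q₁ > -(-(q₀ + q₁) / δ)) →
      ∀ lam : ℝ, ∀ x : ℂ,
        (x - 1) * (x - 1 + (δ : ℂ)) - (lam : ℂ) * ((q₁ : ℂ) * x + (q₀ : ℂ)) = 0 →
        x.im ≠ 0 →
        ‖(q₁ : ℂ) * x + (q₀ : ℂ)‖ ^ 2
          = δ ^ 2 * (-(q₀ + q₁) / δ) * ((-(q₀ + q₁) / δ) + q₁)) := by
  have monic_form : ∀ lam : ℝ, ∀ x : ℂ,
      (x - 1) * (x - 1 + (δ : ℂ)) - (lam : ℂ) * ((q₁ : ℂ) * x + (q₀ : ℂ)) = 0 →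
        x ^ 2 + ((δ - 2 - lam * q₁ : ℝ) : ℂ) * x + ((1 - δ - lam * q₀ : ℝ) : ℂ) = 0 := by
    intro lam x hx
    push_cast
    linear_combination hx
  constructor
  · intro hq lam hlam x hx
    by_contra him
    have hdisc := Complex.sq_lt_four_mul_of_sq_add_mul_add_eq_zero (monic_form lam x hx) him
    have hq' : q₁ * δ ≤ q₀ + q₁ := by rwa [neg_div, neg_neg, le_div_iff₀ hδ0] at hq
    nlinarith [sq_nonneg (δ + lam * q₁), mul_nonneg hlam.le (sub_nonneg.mpr hq')]
  · intro _ lam x hx him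
    have hre := Complex.two_mul_re_of_sq_add_mul_add_eq_zero (monic_form lam x hx) him
    have hnorm := Complex.normSq_of_sq_add_mul_add_eq_zero (monic_form lam x hx) him
    have hrhs : δ ^ 2 * (-(q₀ + q₁) / δ) * ((-(q₀ + q₁) / δ) + q₁)
        = (q₀ + q₁) ^ 2 - δ * q₁ * (q₀ + q₁) := by
      field_simp
      ring
    rw [Complex.sq_norm, Complex.normSq_ofReal_mul_add_ofReal, hnorm, hrhs]
    linear_combination q₀ * q₁ * hre

/-- Memory-1 eigenvalue geometry: for the characteristic equation
`(x−1)(x−1+δ) − λ(q₁x + q₀) = 0` with `0 < δ < 2` and `α_eff = −(q₀+q₁)/δ > 0`: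
if `q₁ ≤ −α_eff` then all roots are real for every `λ > 0`; if `q₁ > −α_eff` then every
non-real root `x` satisfies `|q₁ x + q₀|² = δ² α_eff (α_eff + q₁)`. -/
theorem stmt_17 (δ q₀ q₁ : ℝ) (hδ0 : 0 < δ) (hδ2 : δ < 2)
    (hα : 0 < -(q₀ + q₁) / δ) :
    ((q₁ ≤ -(-(q₀ + q₁) / δ)) →
      ∀ lam : ℝ, 0 < lam → ∀ x : ℂ,
        (x - 1) * (x - 1 + (δ : ℂ)) - (lam : ℂ) * ((q₁ : ℂ) * x + (q₀ : ℂ)) = 0 →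
        x.im = 0) ∧
    ((q₁ > -(-(q₀ + q₁) / δ)) →
      ∀ lam : ℝ, ∀ x : ℂ,
        (x - 1) * (x - 1 + (δ : ℂ)) - (lam : ℂ) * ((q₁ : ℂ) * x + (q₀ : ℂ)) = 0 →
        x.im ≠ 0 →
        ‖(q₁ : ℂ) * x + (q₀ : ℂ)‖ ^ 2
          = δ ^ 2 * (-(q₀ + q₁) / δ) * ((-(q₀ + q₁) / δ) + q₁)) :=
  stmt_17_general δ q₀ q₁ hδ0
end

section
/- For the memory-1 stationary algorithm with parameters (δ, α_eff, q₀) and λ_max > 0, the companion recurrence matrix S_λ is strictly stable (spectral radius < 1) simultaneously for all 0 < λ ≤ λ_max if and only if: 0 < δ < 2, α_eff > 0, −q₀ < δ/λ_max, and δ α_eff < (4 − 2δ)/λ_max − 2q₀. -/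
/-!
The eigenvalues of `S_λ` are the roots of the monic real quadratic
`p(x) = x² + b x + c` with `b = δ - 2 + λ (q₀ + δ α_eff)` and `c = 1 - δ - λ q₀`. By the
Schur–Cohn (Jury) criterion both roots lie in the open unit disc iff `|c| < 1`, `p(1) > 0` and
`p(-1) > 0`, where `p(1) = λ δ α_eff` and `p(-1) = 4 - 2δ - λ (2 q₀ + δ α_eff)`. All three
conditions are affine in `λ`, so they hold on `(0, λ_max]` iff they hold at `λ_max` and,
weakly, at `λ = 0`; together with `|1 - δ| < 1` this is the stated criterion.
-/

open Complex

theorem abs_lt_one_of_quadratic_eq_zero {a b c : ℝ} (hc : |c| < 1) (h₁ : 0 < 1 + b + c)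
    (h₂ : 0 < 1 - b + c) (ha : a ^ 2 + b * a + c = 0) : |a| < 1 := by
  obtain ⟨hc₁, hc₂⟩ := abs_lt.mp hc
  -- the other root is `-b - a`, so `c = a * (-b - a)` and `1 ± b + c = (1 ∓ a) * (1 ± (b + a))`
  rw [abs_lt]
  constructor <;> nlinarith

theorem Complex.norm_lt_one_of_quadratic_eq_zero {b c : ℝ} (hc : |c| < 1) (h₁ : 0 < 1 + b + c)
    (h₂ : 0 < 1 - b + c) {x : ℂ} (hx : x ^ 2 + b * x + c = 0) : ‖x‖ < 1 := by
  have hre : x.re ^ 2 - x.im ^ 2 + b * x.re + c = 0 := by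
    simpa [sq] using congrArg re hx
  have him : x.im * (2 * x.re + b) = 0 := by
    have := congrArg im hx
    simp only [sq, add_im, mul_im, ofReal_re, ofReal_im, zero_im] at this
    linear_combination this
  rw [← sq_lt_one_iff₀ (norm_nonneg x), Complex.sq_norm, normSq_apply]
  rcases mul_eq_zero.mp him with ht | hb
  · have := abs_lt_one_of_quadratic_eq_zero hc h₁ h₂ (a := x.re) (by rw [ht] at hre; linarith)
    rw [ht]
    nlinarith [abs_lt.mp this]
  · have : c = x.re ^ 2 + x.im ^ 2 := by nlinarith
    nlinarith [abs_lt.mp hc]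

theorem jury_conditions_of_abs_lt_one {r s : ℝ} (hr : |r| < 1) (hs : |s| < 1) :
    |r * s| < 1 ∧ 0 < 1 - (r + s) + r * s ∧ 0 < 1 + (r + s) + r * s := by
  obtain ⟨hr₁, hr₂⟩ := abs_lt.mp hr
  obtain ⟨hs₁, hs₂⟩ := abs_lt.mp hs
  refine ⟨?_, by nlinarith, by nlinarith⟩
  rw [abs_mul]
  nlinarith [abs_nonneg r, abs_nonneg s]

theorem jury_conditions_of_norm_roots_lt_one {b c : ℝ}
    (h : ∀ x : ℂ, x ^ 2 + b * x + c = 0 → ‖x‖ < 1) :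
    |c| < 1 ∧ 0 < 1 + b + c ∧ 0 < 1 - b + c := by
  rcases le_or_gt (4 * c) (b ^ 2) with hD | hD
  · set d := √(b ^ 2 - 4 * c)
    have hd : d ^ 2 = b ^ 2 - 4 * c := Real.sq_sqrt (by linarith)
    have hroot : ∀ r : ℝ, r ^ 2 + b * r + c = 0 → |r| < 1 := fun r hr => by
      simpa using h r (by exact_mod_cast hr)
    have h₁ := hroot ((-b + d) / 2) (by linear_combination hd / 4)
    have h₂ := hroot ((-b - d) / 2) (by linear_combination hd / 4)
    have hvieta : (-b + d) / 2 * ((-b - d) / 2) = c := by linear_combination -hd / 4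
    obtain ⟨hc, hp, hm⟩ := jury_conditions_of_abs_lt_one h₁ h₂
    rw [hvieta] at hc hp hm
    refine ⟨hc, by linarith, by linarith⟩
  · set t := √(4 * c - b ^ 2)
    have ht : t ^ 2 = 4 * c - b ^ 2 := Real.sq_sqrt (by linarith)
    set x : ℂ := ⟨-b / 2, t / 2⟩
    have hx : x ^ 2 + b * x + c = 0 := by
      apply Complex.ext <;> simp only [x, sq, add_re, add_im, mul_re, mul_im, ofReal_re, ofReal_im,
        zero_mul, sub_zero, add_zero, zero_re, zero_im]
      · linear_combination -ht / 4
      · ring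
    have hnorm : ‖x‖ ^ 2 = c := by
      rw [Complex.sq_norm, normSq_apply]; linear_combination ht / 4
    have hc : c < 1 := by nlinarith [h x hx, norm_nonneg x]
    refine ⟨abs_lt.mpr ⟨by nlinarith, hc⟩, ?_, ?_⟩
    · nlinarith [sq_nonneg (1 + b / 2)]
    · nlinarith [sq_nonneg (1 - b / 2)]

theorem quadratic_roots_norm_lt_one_iff (b c : ℝ) :
    (∀ x : ℂ, x ^ 2 + b * x + c = 0 → ‖x‖ < 1) ↔ |c| < 1 ∧ 0 < 1 + b + c ∧ 0 < 1 - b + c :=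
  ⟨jury_conditions_of_norm_roots_lt_one, fun ⟨hc, h₁, h₂⟩ _ hx =>
    Complex.norm_lt_one_of_quadratic_eq_zero hc h₁ h₂ hx⟩

theorem memory_one_roots_norm_lt_one_iff (δ αeff q₀ lam : ℝ) :
    (∀ x : ℂ, (x - 1) * (x - 1 + δ) - lam * (((-q₀ - δ * αeff : ℝ) : ℂ) * x + q₀) = 0 →
        ‖x‖ < 1) ↔
      |1 - δ - lam * q₀| < 1 ∧ 0 < lam * (δ * αeff) ∧ lam * (2 * q₀ + δ * αeff) < 4 - 2 * δ := by
  have hpoly : ∀ x : ℂ, (x - 1) * (x - 1 + δ) - lam * (((-q₀ - δ * αeff : ℝ) : ℂ) * x + q₀) =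
      x ^ 2 + ((δ - 2 + lam * (q₀ + δ * αeff) : ℝ) : ℂ) * x + ((1 - δ - lam * q₀ : ℝ) : ℂ) := by
    intro x; push_cast; ring
  simp only [hpoly, quadratic_roots_norm_lt_one_iff]
  refine and_congr_right' (and_congr ?_ ?_) <;> constructor <;> intro h <;> linarith

theorem mul_lt_of_mul_lt_of_le {l L k M : ℝ} (hl : 0 ≤ l) (hlL : l ≤ L) (hM : 0 < M)
    (h : L * k < M) : l * k < M := by
  rcases le_total k 0 with hk | hk
  · nlinarith
  · nlinarith

/-- Memory-1 stability criterion: with `q₁ = −q₀ − δ α_eff`, the step matrix `S_λ`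
(whose eigenvalues are the roots of `(x−1)(x−1+δ) − λ(q₁x+q₀)`), together with
`D = 1 − δ`, is strictly stable simultaneously for all `0 < λ ≤ λ_max` if and only if
`0 < δ < 2`, `α_eff > 0`, `−q₀ < δ/λ_max`, and `δ α_eff < (4−2δ)/λ_max − 2q₀`. -/
theorem stmt_18 (δ αeff q₀ lammax : ℝ) (hlam : 0 < lammax) :
    ((|1 - δ| < 1) ∧
      ∀ lam : ℝ, 0 < lam → lam ≤ lammax → ∀ x : ℂ,
        (x - 1) * (x - 1 + (δ : ℂ))
            - (lam : ℂ) * (((-q₀ - δ * αeff : ℝ) : ℂ) * x + (q₀ : ℂ)) = 0 →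
        ‖x‖ < 1)
    ↔ (0 < δ ∧ δ < 2 ∧ 0 < αeff ∧ -q₀ < δ / lammax
        ∧ δ * αeff < (4 - 2 * δ) / lammax - 2 * q₀) := by
  simp only [memory_one_roots_norm_lt_one_iff, abs_lt, lt_div_iff₀ hlam, lt_sub_iff_add_lt]
  constructor
  · rintro ⟨⟨hδ₁, hδ₂⟩, hstable⟩
    obtain ⟨⟨-, hq₀⟩, hα, hsum⟩ := hstable lammax hlam le_rfl
    have hδ : 0 < δ := by linarith
    exact ⟨hδ, by linarith, pos_of_mul_pos_right (pos_of_mul_pos_right hα hlam.le) hδ.le,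
      by linarith, by linarith⟩
  · rintro ⟨hδ₁, hδ₂, hα, hq₀, hsum⟩
    refine ⟨⟨by linarith, by linarith⟩, fun lam hl hlL => ?_⟩
    have hq₀' : lam * -q₀ < δ := mul_lt_of_mul_lt_of_le hl.le hlL hδ₁ (by linarith)
    have hsum' : lam * (2 * q₀ + δ * αeff) < 4 - 2 * δ :=
      mul_lt_of_mul_lt_of_le hl.le hlL (by linarith) (by linarith)
    have hα' : 0 < lam * (δ * αeff) := by positivity
    exact ⟨⟨by linarith, by linarith⟩, hα', by linarith⟩
end

section
/- Let 0 < δ < 2 and suppose the eigenvalue of S_λ relevant for the stability sum gives R_λ = (2λq₀² + (λq₀ + 2 − δ)δα_eff) / (λ(δ + λq₀)(4 − 2δ − λ(2q₀ + δα_eff))) for strictly stable S_λ. If the parameters satisfy δ → 0, α_eff → ∞ with α_eff bounded by stability, and q₀ ≤ 0, then for a spectrum λ_k with Σ_k λ_k = ∞ restricted appropriately (in particular Σ_k λ_k diverging after multiplication by α_eff), the stability sum Σ_k λ_k² R_{λ_k} tends to infinity; hence q₀ > 0 is necessary for bounded noise. -/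
/-- The memory-1 stability-sum resolvent quantity
`R_λ = (2λq₀² + (λq₀ + 2 − δ)δα_eff) / (λ(δ + λq₀)(4 − 2δ − λ(2q₀ + δα_eff)))`. -/
noncomputable def Rlam (δ αeff q₀ lam : ℝ) : ℝ :=
  (2 * lam * q₀ ^ 2 + (lam * q₀ + 2 - δ) * δ * αeff)
    / (lam * (δ + lam * q₀) * (4 - 2 * δ - lam * (2 * q₀ + δ * αeff)))

lemma Rlam_lb {d a q l : ℝ} (hd : 0 < d) (hd2 : d ≤ 1/2) (ha : 0 < a)
    (hq : q ≤ 0) (hl : 0 < l)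
    (hs1 : 0 < d + l * q) (hs2 : l * (2 * q + d * a) < 4 - 2 * d) :
    l * a / 4 ≤ l ^ 2 * Rlam d a q l := by
  have hD : 0 < 4 - 2 * d - l * (2 * q + d * a) := by linarith
  have hden : 0 < l * (d + l * q) * (4 - 2 * d - l * (2 * q + d * a)) :=
    mul_pos (mul_pos hl hs1) hD
  have h1 : 1 ≤ l * q + 2 - d := by linarith
  have hnum : d * a ≤ 2 * l * q ^ 2 + (l * q + 2 - d) * d * a := by
    nlinarith [mul_nonneg (mul_nonneg (by norm_num : (0:ℝ) ≤ 2) hl.le) (sq_nonneg q),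
      mul_le_mul_of_nonneg_right h1 (mul_nonneg hd.le ha.le)]
  have hb2 : 4 - 2 * d - l * (2 * q + d * a) ≤ 4 := by
    nlinarith [mul_pos hl (mul_pos hd ha)]
  have hb1 : d + l * q ≤ d := by nlinarith
  have hdle : l * (d + l * q) * (4 - 2 * d - l * (2 * q + d * a)) ≤ 4 * l * d := by
    nlinarith [mul_le_mul hb1 hb2 hD.le hd.le]
  have key : d * a / (4 * l * d) ≤ (2 * l * q ^ 2 + (l * q + 2 - d) * d * a) /
      (l * (d + l * q) * (4 - 2 * d - l * (2 * q + d * a))) :=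
    div_le_div₀ (le_trans (by positivity) hnum) hnum hden hdle
  have h4 : l ^ 2 * (d * a / (4 * l * d)) = l * a / 4 := by
    field_simp
  calc l * a / 4 = l ^ 2 * (d * a / (4 * l * d)) := h4.symm
    _ ≤ l ^ 2 * Rlam d a q l := by
        rw [Rlam]
        exact mul_le_mul_of_nonneg_left key (by positivity)

lemma Rlam_ub {d a q l : ℝ} (hd : 0 < d) (hd2 : d < 2) (ha : 0 < a)
    (hq : q ≤ 0) (hl : 0 < l) (hl1 : l < 1)
    (h1 : d / 2 ≤ d + l * q) (h2 : 2 - d ≤ 4 - 2 * d - l * (2 * q + d * a)) :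
    l ^ 2 * Rlam d a q l ≤ (2 * q ^ 2 + 2 * d * a) / (d / 2 * (2 - d)) * l := by
  have hD : 0 < 4 - 2 * d - l * (2 * q + d * a) := by linarith
  have hden : 0 < l * (d / 2 * (2 - d)) := mul_pos hl (mul_pos (by linarith) (by linarith))
  have hnumle : 2 * l * q ^ 2 + (l * q + 2 - d) * d * a ≤ 2 * q ^ 2 + 2 * d * a := by
    nlinarith [sq_nonneg q, mul_pos hd ha, mul_nonneg (mul_nonneg hl.le (neg_nonneg.2 hq)) (mul_pos hd ha).le]
  have hdge : l * (d / 2 * (2 - d)) ≤ l * (d + l * q) * (4 - 2 * d - l * (2 * q + d * a)) := by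
    have := mul_le_mul h1 h2 (by linarith) (by linarith : (0:ℝ) ≤ d + l * q)
    nlinarith [this]
  have key : (2 * l * q ^ 2 + (l * q + 2 - d) * d * a) /
      (l * (d + l * q) * (4 - 2 * d - l * (2 * q + d * a)))
      ≤ (2 * q ^ 2 + 2 * d * a) / (l * (d / 2 * (2 - d))) :=
    div_le_div₀ (by nlinarith [sq_nonneg q, mul_pos hd ha]) hnumle hden hdge
  have h4 : l ^ 2 * ((2 * q ^ 2 + 2 * d * a) / (l * (d / 2 * (2 - d))))
      = (2 * q ^ 2 + 2 * d * a) / (d / 2 * (2 - d)) * l := by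
    have hl0 : l ≠ 0 := ne_of_gt hl
    have hd0 : d ≠ 0 := ne_of_gt hd
    have h2d : (2:ℝ) - d ≠ 0 := by linarith
    field_simp
  calc l ^ 2 * Rlam d a q l
      ≤ l ^ 2 * ((2 * q ^ 2 + 2 * d * a) / (l * (d / 2 * (2 - d)))) := by
        rw [Rlam]
        exact mul_le_mul_of_nonneg_left key (by positivity)
    _ = _ := h4

/-- If along a sequence of strictly stable parameters `δ_j → 0`, `α_eff,j → ∞`, with
`q₀,j ≤ 0`, then for a spectrum `0 < λ_k < 1 − ε` whose sum diverges after
multiplication by `α_eff` (here: `Σ_k λ_k > 0`), the stability sum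
`Σ_k λ_k² R_{λ_k}` tends to infinity; hence `q₀ > 0` is necessary for bounded noise. -/
theorem stmt_19 (δ αeff q₀ : ℕ → ℝ) (lam : ℕ → ℝ) (ε : ℝ) (hε : 0 < ε)
    (hlam : ∀ k, 0 < lam k ∧ lam k < 1 - ε)
    (hlamsum : Summable lam) (hlampos : 0 < ∑' k, lam k)
    (hδ : ∀ j, 0 < δ j ∧ δ j < 2)
    (hδ0 : Filter.Tendsto δ Filter.atTop (nhds 0))
    (hαpos : ∀ j, 0 < αeff j)
    (hα : Filter.Tendsto αeff Filter.atTop Filter.atTop)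
    (hq : ∀ j, q₀ j ≤ 0)
    (hstab : ∀ j k, 0 < δ j + lam k * q₀ j
      ∧ lam k * (2 * q₀ j + δ j * αeff j) < 4 - 2 * δ j) :
    Filter.Tendsto (fun j => ∑' k, (lam k) ^ 2 * Rlam (δ j) (αeff j) (q₀ j) (lam k))
      Filter.atTop Filter.atTop := by
  set S := ∑' k, lam k with hSdef
  have hmono : (fun j => αeff j * (S / 4)) ≤ᶠ[Filter.atTop]
      (fun j => ∑' k, (lam k) ^ 2 * Rlam (δ j) (αeff j) (q₀ j) (lam k)) := by
    have hev : ∀ᶠ j in Filter.atTop, δ j < 1/2 :=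
      hδ0.eventually (gt_mem_nhds (by norm_num))
    filter_upwards [hev] with j hj
    have hd : 0 < δ j := (hδ j).1
    have hd2 : δ j ≤ 1/2 := hj.le
    have ha : 0 < αeff j := hαpos j
    have hqj : q₀ j ≤ 0 := hq j
    have hlb : ∀ k, αeff j / 4 * lam k ≤ (lam k) ^ 2 * Rlam (δ j) (αeff j) (q₀ j) (lam k) := by
      intro k
      have h := Rlam_lb hd hd2 ha hqj (hlam k).1 (hstab j k).1 (hstab j k).2
      linarith
    have hfsum : Summable (fun k => (lam k) ^ 2 * Rlam (δ j) (αeff j) (q₀ j) (lam k)) := by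
      set q := q₀ j
      set d := δ j
      set a := αeff j
      have hq1 : 0 < 1 - q := by linarith
      have hq2 : 0 < 1 - 2 * q + d * a := by nlinarith
      set t : ℝ := min (d / (2 * (1 - q))) ((2 - d) / (2 * (1 - 2 * q + d * a))) with htdef
      have htpos : 0 < t :=
        lt_min (div_pos hd (by linarith)) (div_pos (by linarith) (by linarith))
      have hev2 : ∀ᶠ k in Filter.atTop, lam k < t :=
        hlamsum.tendsto_atTop_zero.eventually (gt_mem_nhds htpos)
      obtain ⟨N, hN⟩ := Filter.eventually_atTop.mp hev2
      rw [← summable_nat_add_iff N]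
      set C : ℝ := (2 * q ^ 2 + 2 * d * a) / (d / 2 * (2 - d)) with hC
      refine Summable.of_nonneg_of_le
        (fun k => le_trans (mul_nonneg (div_nonneg ha.le (by norm_num)) (hlam (k + N)).1.le)
          (hlb (k + N)))
        (fun k => ?_)
        ((summable_nat_add_iff N).2 (hlamsum.mul_left C))
      have hlk : 0 < lam (k + N) := (hlam (k + N)).1
      have hlt : lam (k + N) < t := hN (k + N) (Nat.le_add_left N k)
      have hlt1 : lam (k + N) ≤ d / (2 * (1 - q)) := le_of_lt (lt_of_lt_of_le hlt (min_le_left _ _))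
      have hlt2 : lam (k + N) ≤ (2 - d) / (2 * (1 - 2 * q + d * a)) :=
        le_of_lt (lt_of_lt_of_le hlt (min_le_right _ _))
      have h1 : d / 2 ≤ d + lam (k + N) * q := by
        have h' : lam (k + N) * (2 * (1 - q)) ≤ d :=
          (le_div_iff₀ (by positivity)).1 hlt1
        nlinarith
      have h2 : 2 - d ≤ 4 - 2 * d - lam (k + N) * (2 * q + d * a) := by
        have h' : lam (k + N) * (2 * (1 - 2 * q + d * a)) ≤ 2 - d :=
          (le_div_iff₀ (by positivity)).1 hlt2
        nlinarith
      have hl1 : lam (k + N) < 1 := by linarith [(hlam (k + N)).2]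
      exact (Rlam_ub hd (hδ j).2 ha hqj hlk hl1 h1 h2).trans_eq (by rw [hC])
    calc αeff j * (S / 4) = ∑' k, αeff j / 4 * lam k := by
          rw [tsum_mul_left]; ring
      _ ≤ _ := Summable.tsum_le_tsum hlb (hlamsum.mul_left _) hfsum
  exact Filter.tendsto_atTop_mono' _ hmono
    (hα.atTop_mul_const (div_pos hlampos (by norm_num)))
end
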